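/- arXiv:1502.02199 — 9 statements merged into one kernel-verified Lean document; each statement's English description precedes it below -/
import Mathlib

section
/- Let q ≥ 1 and ℓ ≥ 2, and suppose k = ℓ. Then in any ℓ-valid (q,ℓ)-colouring of n eBugs, no eBug is coloured with a constant word (all k LEDs the same colour); consequently n·ℓ ≤ q^ℓ − q. -/
/-- A `(q,k)`-colouring of `n` eBugs is `ℓ`-valid if its `ℓ`-window map is injective. -/
def ebugValid (q k ℓ n : ℕ) (c : Fin n → ZMod k → Fin q) : Prop :=
  Function.Injective (fun p : Fin n × ZMod k => fun s : Fin ℓ => c p.1 (p.2 + (s : ℕ)))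

/-- The eBug number `E(q,k,ℓ)`: the greatest `n` admitting an `ℓ`-valid `(q,k)`-colouring. -/
noncomputable def eBugNumber (q k ℓ : ℕ) : ℕ :=
  sSup {n : ℕ | ∃ c : Fin n → ZMod k → Fin q, ebugValid q k ℓ n c}

/-!
A constant eBug would have equal windows at positions `0` and `1`. When `k ≤ ℓ` every window
sees the whole eBug, so the windows of a valid colouring are `n * k` distinct nonconstant words,
of which there are `q ^ ℓ - q`.
-/

open Function

variable {q k ℓ n : ℕ} {c : Fin n → ZMod k → Fin q}

theorem ebugValid.not_const [Nontrivial (ZMod k)] (hc : ebugValid q k ℓ n c) (i : Fin n) :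
    ¬ ∃ a, ∀ j, c i j = a := by
  rintro ⟨a, ha⟩
  have h01 := hc (a₁ := (i, 0)) (a₂ := (i, 1)) (by funext s; simp [ha])
  exact zero_ne_one (congrArg Prod.snd h01)

theorem eq_of_window_eq [NeZero k] (hkℓ : k ≤ ℓ) {α : Type*} {f : ZMod k → α} {j : ZMod k}
    {a : α} (h : ∀ s : Fin ℓ, f (j + (s : ℕ)) = a) (x : ZMod k) : f x = a := by
  simpa using h ⟨(x - j).val, (ZMod.val_lt _).trans_le hkℓ⟩

open Classical in
theorem card_nonconst_words (q ℓ : ℕ) [NeZero ℓ] :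
    Fintype.card {w : Fin ℓ → Fin q // w ∉ Set.range (const (Fin ℓ))} = q ^ ℓ - q := by
  rw [Fintype.card_subtype_compl, Set.card_range_of_injective const_injective,
    Fintype.card_fun, Fintype.card_fin, Fintype.card_fin]

open Classical in
theorem ebugValid.mul_le [NeZero k] [Nontrivial (ZMod k)] (hkℓ : k ≤ ℓ)
    (hc : ebugValid q k ℓ n c) : n * k ≤ q ^ ℓ - q := by
  have : NeZero ℓ := ⟨by have := NeZero.ne k; omega⟩
  have window_nonconst (p : Fin n × ZMod k) :
      (fun s : Fin ℓ => c p.1 (p.2 + (s : ℕ))) ∉ Set.range (const (Fin ℓ)) := by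
    rintro ⟨a, ha⟩
    exact hc.not_const p.1 ⟨a, eq_of_window_eq hkℓ fun s => (congrFun ha s).symm⟩
  have := Fintype.card_le_of_injective
    (fun p => (⟨_, window_nonconst p⟩ : {w : Fin ℓ → Fin q // w ∉ Set.range (const (Fin ℓ))}))
    fun p p' h => hc (congrArg Subtype.val h)
  rwa [card_nonconst_words, Fintype.card_prod, Fintype.card_fin, ZMod.card] at this

theorem stmt1_general (q ℓ n : ℕ) (hℓ : 2 ≤ ℓ)
    (c : Fin n → ZMod ℓ → Fin q) (hc : ebugValid q ℓ ℓ n c) :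
    (∀ i : Fin n, ¬ ∃ a : Fin q, ∀ j : ZMod ℓ, c i j = a) ∧ n * ℓ ≤ q ^ ℓ - q := by
  have : NeZero ℓ := ⟨by omega⟩
  have : Fact (1 < ℓ) := ⟨hℓ⟩
  exact ⟨hc.not_const, hc.mul_le le_rfl⟩

theorem stmt1 (q ℓ n : ℕ) (hq : 1 ≤ q) (hℓ : 2 ≤ ℓ)
    (c : Fin n → ZMod ℓ → Fin q) (hc : ebugValid q ℓ ℓ n c) :
    (∀ i : Fin n, ¬ ∃ a : Fin q, ∀ j : ZMod ℓ, c i j = a) ∧ n * ℓ ≤ q ^ ℓ - q :=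
  stmt1_general q ℓ n hℓ c hc
end

section
/- (Lovász local lemma lower bound.) Let q ≥ 2, k ≥ ℓ ≥ 1 and n ≥ 0 be integers. If (2ℓ − 1) · e · k · n ≤ q^ℓ, where e = Real.exp 1 is Euler's number, then there exists an ℓ-valid (q,k)-colouring of n eBugs. In particular E(q,k,ℓ) ≥ ⌊q^ℓ / ((2ℓ−1)·e·k)⌋. -/
namespace EBugLLL

open Finset
open scoped Classical

/-- The cyclic window map. -/
def cwin (q k ℓ : ℕ) (u : ZMod k → Fin q) (j : ZMod k) : Fin ℓ → Fin q :=
  fun s => u (j + (s : ℕ))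

variable {q k ℓ : ℕ}

section Cyclic
variable [NeZero k]

/-- `x` is in the length-`ℓ` block starting at `o`. -/
def blk (ℓ : ℕ) (o x : ZMod k) : Prop := (x - o).val < ℓ

lemma blk_mem (o : ZMod k) {s : ℕ} (hs : s < ℓ) (hsk : ℓ ≤ k) :
    blk ℓ o (o + (s : ℕ)) := by
  unfold blk
  rw [add_sub_cancel_left, ZMod.val_cast_of_lt (by omega)]
  exact hs

lemma blk_decomp (o x : ZMod k) : x = o + (((x - o).val : ℕ) : ZMod k) := by
  rw [ZMod.natCast_rightInverse (x - o)]
  ring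

/-- If the subgroup-generated difference divides, we can step between points by `d`. -/
lemma orbit_of_dvd {d : ZMod k} (x y : ZMod k)
    (h : (Nat.gcd d.val k : ℤ) ∣ (x.val : ℤ) - (y.val : ℤ)) :
    ∃ t : ℕ, y = x - t • d := by
  set g := Nat.gcd d.val k with hg
  obtain ⟨m, hm⟩ := h
  -- (g : ZMod k) = d * (gcdA ...)
  have hbez : (g : ℤ) = d.val * Nat.gcdA d.val k + k * Nat.gcdB d.val k := Nat.gcd_eq_gcd_ab d.val k
  have hgz : ((g : ℕ) : ZMod k) = d * ((Nat.gcdA d.val k : ℤ) : ZMod k) := by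
    have h0 := congrArg (fun z : ℤ => (z : ZMod k)) hbez
    push_cast at h0
    rw [ZMod.natCast_self, ZMod.natCast_rightInverse d] at h0
    rw [h0]; ring
  -- x - y = (x.val - y.val : ℤ) as casts
  have hxy : x - y = (((x.val : ℤ) - (y.val : ℤ) : ℤ) : ZMod k) := by
    push_cast
    rw [ZMod.natCast_rightInverse x, ZMod.natCast_rightInverse y]
  have h2 : x - y = ((m * Nat.gcdA d.val k : ℤ) : ZMod k) * d := by
    rw [hxy, hm]
    push_cast
    rw [hgz]
    push_cast
    ring
  set w : ZMod k := ((m * Nat.gcdA d.val k : ℤ) : ZMod k) with hw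
  refine ⟨w.val, ?_⟩
  have : (w.val : ZMod k) = w := ZMod.natCast_rightInverse w
  rw [nsmul_eq_mul, this]
  linear_combination -h2

/-- difference of orbit points is divisible by the gcd. -/
lemma dvd_of_orbit {d : ZMod k} (x y : ZMod k) (t : ℕ) (h : y = x - t • d) :
    (Nat.gcd d.val k : ℤ) ∣ (x.val : ℤ) - (y.val : ℤ) := by
  set g := Nat.gcd d.val k with hg
  have hk : ((k : ℤ)) ∣ ((x.val : ℤ) - (y.val : ℤ) - t * d.val) := by
    have hz : (((x.val : ℤ) - (y.val : ℤ) - t * d.val : ℤ) : ZMod k) = 0 := by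
      push_cast
      rw [ZMod.natCast_rightInverse x, ZMod.natCast_rightInverse y, ZMod.natCast_rightInverse d]
      rw [h, nsmul_eq_mul]
      push_cast
      ring
    exact (ZMod.intCast_zmod_eq_zero_iff_dvd _ k).1 hz
  obtain ⟨c, hc⟩ := hk
  have hgd : (g : ℤ) ∣ (d.val : ℤ) := Int.natCast_dvd_natCast.2 (Nat.gcd_dvd_left _ _)
  have hgk : (g : ℤ) ∣ (k : ℤ) := Int.natCast_dvd_natCast.2 (Nat.gcd_dvd_right _ _)
  have : (x.val : ℤ) - (y.val : ℤ) = k * c + t * d.val := by linarith [hc]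
  rw [this]
  exact dvd_add (Dvd.dvd.mul_right hgk c) (Dvd.dvd.mul_left hgd t)


/-- Chain lemma: constraints propagate along the `d`-chain while inside the block. -/
lemma chain_eq {u : ZMod k → Fin q} {o d : ZMod k}
    (hu : ∀ x : ZMod k, blk ℓ o x → u x = u (x - d)) :
    ∀ t : ℕ, ∀ x : ZMod k, (∀ t' : ℕ, t' < t → blk ℓ o (x - t' • d)) → u x = u (x - t • d) := by
  intro t
  induction t with
  | zero => intro x _; simp
  | succ t ih =>
    intro x hx
    have h1 : u x = u (x - t • d) := ih x (fun t' ht' => hx t' (by omega))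
    have h2 : u (x - t • d) = u (x - t • d - d) := hu _ (hx t (by omega))
    rw [h1, h2, succ_nsmul, sub_sub]

/-- Exit lemma: in the nondegenerate case, every block point can be moved out of the
block by a positive number of `d`-steps. -/
lemma exit_blk {o d : ZMod k} (hlk : ℓ ≤ k) (hl1 : 1 ≤ ℓ) (hd : d ≠ 0)
    (hg : Nat.gcd d.val k ≤ k - ℓ) (x : ZMod k) (hx : blk ℓ o x) :
    ∃ t : ℕ, 0 < t ∧ ¬ blk ℓ o (x - t • d) := by
  set g := Nat.gcd d.val k with hgdef
  have hg1 : 1 ≤ g := by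
    have : d.val ≠ 0 := fun h => hd (by
      have := ZMod.natCast_rightInverse d
      rw [← this, h]; simp)
    have := Nat.gcd_pos_of_pos_left (m := d.val) k (by omega)
    omega
  set c := (x - o).val with hc
  -- the out point : o + (ℓ + r) with r := (c + (k - ℓ)) % g ;  ℓ + r ≡ c [MOD g]... choose r
  set r := (c + (k - ℓ)) % g with hr
  have hrg : r < g := Nat.mod_lt _ (by omega)
  set cy := ℓ + r with hcy
  have hcyk : cy < k := by omega
  set y : ZMod k := o + (cy : ℕ) with hy
  have hyval : (y - o).val = cy := by
    rw [hy, add_sub_cancel_left, ZMod.val_cast_of_lt hcyk]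
  have hyout : ¬ blk ℓ o y := by
    unfold blk
    omega
  have hgk : (g : ℤ) ∣ (k : ℤ) := Int.natCast_dvd_natCast.2 (Nat.gcd_dvd_right _ _)
  -- g divides c - cy  (over ℤ)
  have hdvd1 : (g : ℤ) ∣ (c : ℤ) - (cy : ℤ) := by
    have h1 : (g : ℤ) ∣ ((c + (k - ℓ) : ℕ) : ℤ) - (r : ℤ) := by
      have hn : g ∣ (c + (k - ℓ)) - r := Nat.dvd_sub_mod _
      have hle : r ≤ c + (k - ℓ) := Nat.mod_le _ _
      have := Int.natCast_dvd_natCast.2 hn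
      rwa [Int.ofNat_sub hle] at this
    have heq : (c : ℤ) - (cy : ℤ) = (((c + (k - ℓ) : ℕ) : ℤ) - (r : ℤ)) - (k : ℤ) := by
      push_cast
      omega
    rw [heq]
    exact dvd_sub h1 hgk
  -- x - y = cast (c - cy), hence g ∣ x.val - y.val
  have hxy : x - y = (((c : ℤ) - (cy : ℤ)) : ZMod k) := by
    have hx' : x = o + ((c : ℕ) : ZMod k) := blk_decomp o x
    rw [hy, hx']
    push_cast
    ring
  have hdvd2 : (g : ℤ) ∣ (x.val : ℤ) - (y.val : ℤ) := by
    have hz : ((((x.val : ℤ) - (y.val : ℤ)) - ((c:ℤ) - (cy:ℤ)) : ℤ) : ZMod k) = 0 := by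
      push_cast
      rw [ZMod.natCast_rightInverse x, ZMod.natCast_rightInverse y]
      rw [← sub_eq_zero] at hxy
      push_cast at hxy
      linear_combination hxy
    have hk2 : (k:ℤ) ∣ (((x.val : ℤ) - (y.val : ℤ)) - ((c:ℤ) - (cy:ℤ))) :=
      (ZMod.intCast_zmod_eq_zero_iff_dvd _ k).1 hz
    have := dvd_trans hgk hk2
    have h3 := dvd_add this hdvd1
    simpa using h3
  obtain ⟨t, ht⟩ := orbit_of_dvd x y hdvd2
  refine ⟨t, ?_, ?_⟩
  · rcases Nat.eq_zero_or_pos t with h0 | h0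
    · exfalso
      rw [h0] at ht
      simp at ht
      rw [ht] at hyout
      exact hyout hx
    · exact h0
  · rw [← ht]; exact hyout


lemma dvd_val_diff (o z z' : ZMod k) :
    (k : ℤ) ∣ ((z.val : ℤ) - (z'.val : ℤ)) - (((z - o).val : ℤ) - ((z' - o).val : ℤ)) := by
  apply (ZMod.intCast_zmod_eq_zero_iff_dvd _ k).1
  push_cast
  rw [ZMod.natCast_rightInverse z, ZMod.natCast_rightInverse z',
      ZMod.natCast_rightInverse (z - o), ZMod.natCast_rightInverse (z' - o)]
  ring

/-- The agreement lemma: two functions satisfying the same nondegenerate shift constraints on a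
block and agreeing off the block agree everywhere. -/
lemma agree_blk {u u' : ZMod k → Fin q} {o d : ZMod k} (hlk : ℓ ≤ k) (hl1 : 1 ≤ ℓ)
    (hd : d ≠ 0) (hg : Nat.gcd d.val k ≤ k - ℓ)
    (hu : ∀ x, blk ℓ o x → u x = u (x - d))
    (hu' : ∀ x, blk ℓ o x → u' x = u' (x - d))
    (hout : ∀ x, ¬ blk ℓ o x → u x = u' x) : u = u' := by
  funext x
  by_cases hx : blk ℓ o x
  · have hex := exit_blk hlk hl1 hd hg x hx
    obtain ⟨hT0, hTout⟩ := Nat.find_spec hex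
    have hmin : ∀ t' : ℕ, t' < Nat.find hex → blk ℓ o (x - t' • d) := by
      intro t' ht'
      rcases Nat.eq_zero_or_pos t' with rfl | hpos
      · simpa using hx
      · by_contra hcon
        exact (Nat.find_min hex ht') ⟨hpos, hcon⟩
    rw [chain_eq hu (Nat.find hex) x hmin, chain_eq hu' (Nat.find hex) x hmin]
    exact hout _ hTout
  · exact hout x hx

/-- In the degenerate case the constraints propagate to the whole cycle. -/
lemma deg_all {u : ZMod k → Fin q} {o d : ZMod k} (hlk : ℓ ≤ k)
    (hd : d ≠ 0) (hg : k - ℓ < Nat.gcd d.val k)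
    (hu : ∀ x, blk ℓ o x → u x = u (x - d)) :
    ∀ x, u x = u (x - d) := by
  set g := Nat.gcd d.val k with hgdef
  have hgk : (g : ℤ) ∣ (k : ℤ) := Int.natCast_dvd_natCast.2 (Nat.gcd_dvd_right _ _)
  -- uniqueness of out-of-block elements within an orbit
  have uniq : ∀ z z' : ZMod k, ¬ blk ℓ o z → ¬ blk ℓ o z' → (∃ t : ℕ, z' = z - t • d) → z = z' := by
    intro z z' hz hz' ⟨t, ht⟩
    have h1 : (g : ℤ) ∣ (z.val : ℤ) - (z'.val : ℤ) := dvd_of_orbit z z' t ht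
    have h2 := dvd_val_diff o z z'
    have h3 : (g : ℤ) ∣ ((z - o).val : ℤ) - ((z' - o).val : ℤ) := by
      have := dvd_sub h1 (dvd_trans hgk h2)
      simpa using this
    have hc : ℓ ≤ (z - o).val := not_lt.1 hz
    have hc' : ℓ ≤ (z' - o).val := not_lt.1 hz'
    have hck : (z - o).val < k := ZMod.val_lt _
    have hck' : (z' - o).val < k := ZMod.val_lt _
    have heq : (z - o).val = (z' - o).val := by
      rcases h3 with ⟨c, hc3⟩
      have hgg : (0:ℤ) < g := by
        have : 0 < g := by omega
        exact_mod_cast this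
      have habs : ((z - o).val : ℤ) - ((z' - o).val : ℤ) = g * c := hc3
      have hb1 : -((g:ℤ)) < ((z - o).val : ℤ) - ((z' - o).val : ℤ) := by
        have : ((z - o).val : ℤ) - ((z' - o).val : ℤ) > (ℓ:ℤ) - k := by
          push_cast; omega
        have : ((ℓ:ℤ) - k) ≥ -(g:ℤ) := by push_cast; omega
        omega
      have hb2 : ((z - o).val : ℤ) - ((z' - o).val : ℤ) < (g:ℤ) := by
        have : ((z - o).val : ℤ) - ((z' - o).val : ℤ) < (k:ℤ) - ℓ := by push_cast; omega
        have : ((k:ℤ) - ℓ) ≤ (g:ℤ) := by push_cast; omega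
        omega
      have : c = 0 := by nlinarith
      rw [this, mul_zero] at habs
      omega
    have hzz : z - o = z' - o := by
      have := congrArg (fun n : ℕ => ((n : ℕ) : ZMod k)) heq
      simpa [ZMod.natCast_rightInverse (z - o), ZMod.natCast_rightInverse (z' - o)] using this
    have := congrArg (fun w : ZMod k => w + o) hzz
    simpa [sub_add_cancel] using this
  -- reach lemma: chain to a fixed out-of-block element
  have reach : ∀ z : ZMod k, ¬ blk ℓ o z → ∀ w : ZMod k, (∃ t : ℕ, z = w - t • d) → u w = u z := by
    intro z hz w hex
    have hTspec : z = w - (Nat.find hex) • d := Nat.find_spec hex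
    have hmin : ∀ t' : ℕ, t' < Nat.find hex → blk ℓ o (w - t' • d) := by
      intro t' ht'
      by_contra hcon
      -- then w - t'•d is out-of-block and z is in its orbit, so they are equal: contradiction
      have horb : ∃ t : ℕ, z = (w - t' • d) - t • d := by
        refine ⟨Nat.find hex - t', ?_⟩
        have harith : w - t' • d - (Nat.find hex - t') • d = w - Nat.find hex • d := by
          rw [sub_sub, ← add_nsmul]
          congr 2
          omega
        rw [harith]
        exact hTspec
      have := uniq _ z hcon hz horb
      exact Nat.find_min hex ht' (by rw [← this])
    rw [chain_eq hu (Nat.find hex) w hmin, ← hTspec]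
  -- main argument
  intro x
  by_cases hex : ∃ z : ZMod k, (∃ t : ℕ, z = x - t • d) ∧ ¬ blk ℓ o z
  · obtain ⟨z, ⟨t, hzt⟩, hzout⟩ := hex
    have h1 : u x = u z := reach z hzout x ⟨t, hzt⟩
    have h2 : u (x - d) = u z := by
      apply reach z hzout (x - d)
      rcases Nat.eq_zero_or_pos t with rfl | hpos
      · -- z = x ; use the order of d
        have hord : 0 < addOrderOf d := addOrderOf_pos d
        refine ⟨addOrderOf d - 1, ?_⟩
        simp only [zero_smul, sub_zero] at hzt
        have harith : x - d - (addOrderOf d - 1) • d = x := by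
          rw [sub_sub]
          have h6 : d + (addOrderOf d - 1) • d = (1 + (addOrderOf d - 1)) • d := by
            rw [add_nsmul, one_nsmul]
          rw [h6, (by omega : 1 + (addOrderOf d - 1) = addOrderOf d),
            addOrderOf_nsmul_eq_zero d, sub_zero]
        rw [harith]
        exact hzt
      · refine ⟨t - 1, ?_⟩
        have h6 : t • d = (t - 1) • d + d := by
          nth_rewrite 1 [(by omega : t = (t - 1) + 1)]
          rw [succ_nsmul]
        have harith : x - d - (t - 1) • d = x - t • d := by
          rw [sub_sub, add_comm, ← h6]
        rw [harith]
        exact hzt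
    rw [h1, h2]
  · push_neg at hex
    exact hu x (hex x ⟨0, by simp⟩)


/-- In the degenerate case, the word is determined by its values on `[0, g)`. -/
lemma deg_mod {u : ZMod k → Fin q} {o d : ZMod k} (hlk : ℓ ≤ k)
    (hd : d ≠ 0) (hg : k - ℓ < Nat.gcd d.val k)
    (hu : ∀ x, blk ℓ o x → u x = u (x - d)) :
    ∀ x : ZMod k, u x = u (((x.val % Nat.gcd d.val k : ℕ)) : ZMod k) := by
  have hall := deg_all hlk hd hg hu
  have hiter : ∀ t : ℕ, ∀ x : ZMod k, u x = u (x - t • d) := by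
    intro t
    induction t with
    | zero => intro x; simp
    | succ t ih =>
      intro x
      rw [ih x, hall (x - t • d), succ_nsmul, sub_sub]
  intro x
  set g := Nat.gcd d.val k with hgdef
  have hk0 : 0 < k := Nat.pos_of_ne_zero (NeZero.ne k)
  have hg1 : 1 ≤ g := by omega
  have hgk : g ≤ k := Nat.le_of_dvd hk0 (Nat.gcd_dvd_right _ _)
  set y : ZMod k := ((x.val % g : ℕ) : ZMod k) with hy
  have hyval : y.val = x.val % g := by
    rw [hy]
    exact ZMod.val_cast_of_lt (lt_of_lt_of_le (Nat.mod_lt _ (by omega)) hgk)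
  have hdvd : (g : ℤ) ∣ (x.val : ℤ) - (y.val : ℤ) := by
    rw [hyval]
    have h1 : g ∣ x.val - x.val % g := Nat.dvd_sub_mod _
    have h2 := Int.natCast_dvd_natCast.2 h1
    rwa [Int.ofNat_sub (Nat.mod_le _ _)] at h2
  obtain ⟨t, ht⟩ := orbit_of_dvd x y hdvd
  rw [ht]
  exact hiter t x

/-- Restriction counting: if members of `E` are determined by their values off a block,
then `E` has at most `q ^ (k - ℓ)` elements. -/
lemma count_restrict (hlk : ℓ ≤ k)
    (E : Finset (ZMod k → Fin q)) (o : ZMod k)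
    (hdet : ∀ u ∈ E, ∀ u' ∈ E, (∀ x : ZMod k, ¬ blk ℓ o x → u x = u' x) → u = u') :
    E.card ≤ q ^ (k - ℓ) := by
  have hinj : Set.InjOn (fun u : ZMod k → Fin q =>
      (fun i : Fin (k - ℓ) => u (o + ((ℓ + i.val : ℕ) : ZMod k)))) E := by
    intro u hu u' hu' h
    apply hdet u hu u' hu'
    intro x hx
    have hc : (x - o).val < k := ZMod.val_lt _
    have hcl : ℓ ≤ (x - o).val := not_lt.1 hx
    have hxeq : x = o + (((x - o).val : ℕ) : ZMod k) := blk_decomp o x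
    have := congrFun h (⟨(x - o).val - ℓ, by omega⟩ : Fin (k - ℓ))
    simp only at this
    rw [(by omega : ℓ + ((x - o).val - ℓ) = (x - o).val)] at this
    rw [hxeq]
    exact this
  calc E.card ≤ (univ : Finset (Fin (k - ℓ) → Fin q)).card :=
        Finset.card_le_card_of_injOn _ (fun _ _ => mem_univ _) hinj
    _ = q ^ (k - ℓ) := by simp [card_univ]

lemma count_event_f (hlk : ℓ ≤ k) (o : ZMod k) (f : Fin ℓ → Fin q) :
    (univ.filter (fun u : ZMod k → Fin q => cwin q k ℓ u o = f)).card ≤ q ^ (k - ℓ) := by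
  apply count_restrict hlk _ o
  intro u hu u' hu' hout
  funext x
  by_cases hx : blk ℓ o x
  · have hs : (x - o).val < ℓ := hx
    have hxeq : x = o + (((x - o).val : ℕ) : ZMod k) := blk_decomp o x
    have h1 := congrFun (mem_filter.1 hu).2 ⟨(x - o).val, hs⟩
    have h2 := congrFun (mem_filter.1 hu').2 ⟨(x - o).val, hs⟩
    simp only [cwin] at h1 h2
    rw [hxeq, h1, h2]
  · exact hout x hx

/-- window-equality constraints give block-shift constraints. -/
lemma event_constraint {u : ZMod k → Fin q} {o p : ZMod k}
    (h : cwin q k ℓ u o = cwin q k ℓ u p) :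
    ∀ x, blk ℓ o x → u x = u (x - (o - p)) := by
  intro x hx
  have hs : (x - o).val < ℓ := hx
  obtain ⟨c, hcdef⟩ : ∃ c : ZMod k, c = (((x - o).val : ℕ) : ZMod k) := ⟨_, rfl⟩
  have hxeq : x = o + c := by rw [hcdef]; exact blk_decomp o x
  have h1 := congrFun h ⟨(x - o).val, hs⟩
  simp only [cwin, Fin.val_mk] at h1
  rw [← hcdef] at h1
  rw [hxeq]
  have harith : o + c - (o - p) = p + c := by ring
  rw [harith]
  exact h1

lemma count_event_pair (hlk : ℓ ≤ k) (hl1 : 1 ≤ ℓ) (o p : ZMod k) (hop : o ≠ p)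
    (hg : Nat.gcd (o - p).val k ≤ k - ℓ) :
    (univ.filter (fun u : ZMod k → Fin q => cwin q k ℓ u o = cwin q k ℓ u p)).card
      ≤ q ^ (k - ℓ) := by
  apply count_restrict hlk _ o
  intro u hu u' hu' hout
  exact agree_blk hlk hl1 (sub_ne_zero.2 hop) hg
    (event_constraint (mem_filter.1 hu).2) (event_constraint (mem_filter.1 hu').2) hout

lemma count_periodic (g : ℕ) (hg1 : 1 ≤ g) (hgk : g ≤ k) :
    (univ.filter (fun u : ZMod k → Fin q =>
      ∀ x : ZMod k, u x = u ((x.val % g : ℕ) : ZMod k))).card ≤ q ^ g := by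
  have hinj : Set.InjOn (fun u : ZMod k → Fin q => (fun i : Fin g => u ((i.val : ℕ) : ZMod k)))
      (univ.filter (fun u : ZMod k → Fin q => ∀ x : ZMod k, u x = u ((x.val % g : ℕ) : ZMod k))) := by
    intro u hu u' hu' h
    funext x
    have h1 := (mem_filter.1 hu).2 x
    have h2 := (mem_filter.1 hu').2 x
    have h3 := congrFun h (⟨x.val % g, Nat.mod_lt _ (by omega)⟩ : Fin g)
    simp only at h3
    rw [h1, h2, h3]
  calc _ ≤ (univ : Finset (Fin g → Fin q)).card :=
        Finset.card_le_card_of_injOn _ (fun _ _ => mem_univ _) hinj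
    _ = q ^ g := by simp [card_univ]


lemma two_dvd_le {g K : ℕ} (hdvd : g ∣ K) (hlt : g < K) : 2 * g ≤ K := by
  obtain ⟨c, hc⟩ := hdvd
  rcases Nat.lt_or_ge c 2 with hc2 | hc2
  · interval_cases c <;> omega
  · calc 2 * g = g * 2 := by ring
      _ ≤ g * c := Nat.mul_le_mul_left g hc2
      _ = K := hc.symm

lemma geom_le {q : ℕ} (hq : 2 ≤ q) (G : ℕ) : ∑ g ∈ Icc 1 G, q ^ g ≤ 2 * q ^ G := by
  induction G with
  | zero => simp
  | succ G ih =>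
    rw [Finset.sum_Icc_succ_top (by omega : 1 ≤ G + 1)]
    have h2 : 2 * q ^ G ≤ q * q ^ G := Nat.mul_le_mul_right _ hq
    have h3 : q * q ^ G = q ^ (G + 1) := by ring
    omega

/-- Case 1 of the new-word lemma: `k ≤ 2ℓ - 1`. -/
theorem newWordSmall {q k ℓ : ℕ} [NeZero k] (hq : 2 ≤ q) (hl : 2 ≤ ℓ) (hk : ℓ ≤ k)
    (hk2 : k ≤ 2 * ℓ - 1) (P : ℕ) (hPk : k ≤ P)
    (F : Finset (Fin ℓ → Fin q)) (hF : F.card + k ≤ P)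
    (hreal : (P : ℝ) * ((2 * (ℓ:ℝ) - 1) * Real.exp 1) ≤ (q : ℝ) ^ ℓ) :
    ∃ u : ZMod k → Fin q,
      (∀ j j' : ZMod k, cwin q k ℓ u j = cwin q k ℓ u j' → j = j') ∧
      (∀ j : ZMod k, cwin q k ℓ u j ∉ F) := by
  have hk1 : 1 ≤ k := by omega
  set V := ZMod k → Fin q with hV
  set B1 : Finset V := (univ : Finset (ZMod k)).biUnion
    (fun o => F.biUnion (fun f => univ.filter (fun u : V => cwin q k ℓ u o = f))) with hB1
  set B2 : Finset V := (univ : Finset (ZMod k × ZMod k)).biUnion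
    (fun pp => if pp.1 ≠ pp.2 ∧ Nat.gcd (pp.1 - pp.2).val k ≤ k - ℓ then
      univ.filter (fun u : V => cwin q k ℓ u pp.1 = cwin q k ℓ u pp.2) else ∅) with hB2
  set B3 : Finset V := (range (k+1)).biUnion
    (fun g => if g ∣ k ∧ k - ℓ < g ∧ g < k then
      univ.filter (fun u : V => ∀ x : ZMod k, u x = u ((x.val % g : ℕ) : ZMod k)) else ∅) with hB3
  -- cover
  have hcover : ∀ u : V, (¬ ((∀ j j' : ZMod k, cwin q k ℓ u j = cwin q k ℓ u j' → j = j') ∧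
      (∀ j : ZMod k, cwin q k ℓ u j ∉ F))) → u ∈ B1 ∪ B2 ∪ B3 := by
    intro u hbad
    rw [not_and_or] at hbad
    rcases hbad with hbad | hbad
    · push_neg at hbad
      obtain ⟨j, j', heq, hne⟩ := hbad
      have hd : j - j' ≠ 0 := sub_ne_zero.2 hne
      have hdval : (j - j').val ≠ 0 := fun h => hd ((ZMod.val_eq_zero _).1 h)
      set g := Nat.gcd (j - j').val k with hgdef
      rcases le_or_gt g (k - ℓ) with hle | hgt
      · -- nondegenerate: in B2
        apply Finset.mem_union_left
        apply Finset.mem_union_right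
        rw [hB2]
        apply Finset.mem_biUnion.2
        refine ⟨(j, j'), mem_univ _, ?_⟩
        rw [if_pos ⟨hne, hle⟩]
        exact mem_filter.2 ⟨mem_univ _, heq⟩
      · -- degenerate: in B3
        apply Finset.mem_union_right
        rw [hB3]
        apply Finset.mem_biUnion.2
        have hglt : g < k := by
          have h1 : g ∣ (j - j').val := Nat.gcd_dvd_left _ _
          have h2 : (j - j').val < k := ZMod.val_lt _
          have := Nat.le_of_dvd (by omega) h1
          omega
        refine ⟨g, Finset.mem_range.2 (by omega), ?_⟩
        rw [if_pos ⟨Nat.gcd_dvd_right _ _, hgt, hglt⟩]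
        refine mem_filter.2 ⟨mem_univ _, ?_⟩
        exact deg_mod hk hd hgt (event_constraint heq)
    · push_neg at hbad
      obtain ⟨j, hj⟩ := hbad
      apply Finset.mem_union_left
      apply Finset.mem_union_left
      rw [hB1]
      apply Finset.mem_biUnion.2
      refine ⟨j, mem_univ _, ?_⟩
      apply Finset.mem_biUnion.2
      exact ⟨cwin q k ℓ u j, hj, mem_filter.2 ⟨mem_univ _, rfl⟩⟩
  -- cardinality bounds
  have hcard1 : B1.card ≤ k * (F.card * q ^ (k - ℓ)) := by
    calc B1.card ≤ ∑ o ∈ (univ : Finset (ZMod k)), (F.biUnion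
          (fun f => univ.filter (fun u : V => cwin q k ℓ u o = f))).card :=
        Finset.card_biUnion_le
      _ ≤ ∑ o ∈ (univ : Finset (ZMod k)), (F.card * q ^ (k - ℓ)) := by
        apply Finset.sum_le_sum
        intro o _
        calc (F.biUnion (fun f => univ.filter (fun u : V => cwin q k ℓ u o = f))).card
            ≤ ∑ f ∈ F, (univ.filter (fun u : V => cwin q k ℓ u o = f)).card :=
            Finset.card_biUnion_le
          _ ≤ ∑ _f ∈ F, q ^ (k - ℓ) := Finset.sum_le_sum (fun f _ => count_event_f hk o f)
          _ = F.card * q ^ (k - ℓ) := by rw [Finset.sum_const, smul_eq_mul]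
      _ = k * (F.card * q ^ (k - ℓ)) := by
        rw [Finset.sum_const, smul_eq_mul, card_univ, ZMod.card]
  have hcard2 : B2.card ≤ k * k * q ^ (k - ℓ) := by
    calc B2.card ≤ ∑ pp ∈ (univ : Finset (ZMod k × ZMod k)), (if pp.1 ≠ pp.2 ∧
          Nat.gcd (pp.1 - pp.2).val k ≤ k - ℓ then
          univ.filter (fun u : V => cwin q k ℓ u pp.1 = cwin q k ℓ u pp.2) else ∅).card :=
        Finset.card_biUnion_le
      _ ≤ ∑ _pp ∈ (univ : Finset (ZMod k × ZMod k)), q ^ (k - ℓ) := by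
        apply Finset.sum_le_sum
        intro pp _
        by_cases hcond : pp.1 ≠ pp.2 ∧ Nat.gcd (pp.1 - pp.2).val k ≤ k - ℓ
        · rw [if_pos hcond]
          exact count_event_pair hk (by omega) pp.1 pp.2 hcond.1 hcond.2
        · rw [if_neg hcond]
          simp
      _ = k * k * q ^ (k - ℓ) := by
        rw [Finset.sum_const, smul_eq_mul, card_univ, Fintype.card_prod, ZMod.card]
  have hcard3 : B3.card ≤ 2 * q ^ (k / 2) := by
    calc B3.card ≤ ∑ g ∈ range (k+1), (if g ∣ k ∧ k - ℓ < g ∧ g < k then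
          univ.filter (fun u : V => ∀ x : ZMod k, u x = u ((x.val % g : ℕ) : ZMod k)) else ∅).card :=
        Finset.card_biUnion_le
      _ ≤ ∑ g ∈ range (k+1), (if g ∣ k ∧ k - ℓ < g ∧ g < k then q ^ g else 0) := by
        apply Finset.sum_le_sum
        intro g _
        by_cases hcond : g ∣ k ∧ k - ℓ < g ∧ g < k
        · rw [if_pos hcond, if_pos hcond]
          have hg1 : 1 ≤ g := by
            rcases Nat.eq_zero_or_pos g with rfl | h
            · exfalso; have := hcond.1; omega
            · exact h
          exact count_periodic g hg1 (by omega)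
        · rw [if_neg hcond, if_neg hcond]
          simp
      _ = ∑ g ∈ (range (k+1)).filter (fun g => g ∣ k ∧ k - ℓ < g ∧ g < k), q ^ g := by
        rw [Finset.sum_filter]
      _ ≤ ∑ g ∈ Icc 1 (k / 2), q ^ g := by
        apply Finset.sum_le_sum_of_subset_of_nonneg
        · intro g hg
          rw [Finset.mem_filter] at hg
          obtain ⟨_, hdvd, hgt, hlt⟩ := hg
          have h2 := two_dvd_le hdvd hlt
          rw [Finset.mem_Icc]
          constructor
          · rcases Nat.eq_zero_or_pos g with rfl | h
            · exfalso; omega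
            · exact h
          · omega
        · intro g _ _; positivity
      _ ≤ 2 * q ^ (k / 2) := geom_le hq (k / 2)
  -- cardinality of the whole space
  have hcuniv : (univ : Finset V).card = q ^ k := by
    have hcv : Fintype.card V = q ^ k := by
      show Fintype.card (ZMod k → Fin q) = q ^ k
      simp [ZMod.card]
    rw [card_univ, hcv]
  -- the numeric bound
  have he : (2.7182818283 : ℝ) < Real.exp 1 := Real.exp_one_gt_d9
  have hq17 : 17 ≤ q ^ ℓ := by
    have hP2 : (2 : ℝ) ≤ (P:ℝ) := by exact_mod_cast le_trans (le_trans hl hk) hPk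
    have hl2 : (2 : ℝ) ≤ (ℓ:ℝ) := by exact_mod_cast hl
    have h163 : (16.3 : ℝ) < ((q ^ ℓ : ℕ) : ℝ) := by
      push_cast
      have h3 : (3:ℝ) ≤ 2 * (ℓ:ℝ) - 1 := by linarith
      have hA : (3:ℝ) * 2.7182818283 ≤ (2 * (ℓ:ℝ) - 1) * Real.exp 1 :=
        mul_le_mul h3 he.le (by norm_num) (by linarith)
      have hB : (2:ℝ) * (3 * 2.7182818283) ≤ (P:ℝ) * ((2 * (ℓ:ℝ) - 1) * Real.exp 1) :=
        mul_le_mul hP2 hA (by norm_num) (by linarith)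
      calc (16.3:ℝ) < 2 * (3 * 2.7182818283) := by norm_num
        _ ≤ (P:ℝ) * ((2 * (ℓ:ℝ) - 1) * Real.exp 1) := hB
        _ ≤ (q:ℝ) ^ ℓ := hreal
    by_contra hcon
    push_neg at hcon
    have : ((q^ℓ : ℕ) : ℝ) ≤ 16 := by exact_mod_cast Nat.le_of_lt_succ hcon
    linarith
  have hX5 : 5 ≤ q ^ (k - k / 2) := by
    set X := q ^ (k - k / 2) with hX
    have h1 : q ^ k ≤ X * X := by
      rw [hX, ← pow_add]
      exact Nat.pow_le_pow_right (by omega) (by omega)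
    have h2 : 17 ≤ q ^ k := le_trans hq17 (Nat.pow_le_pow_right (by omega) hk)
    by_contra hcon
    push_neg at hcon
    have : X * X ≤ 16 := by
      calc X * X ≤ 4 * 4 := Nat.mul_le_mul (by omega) (by omega)
        _ = 16 := by norm_num
    omega
  have hfive : 5 * (2 * q ^ (k / 2)) ≤ 2 * q ^ k := by
    calc 5 * (2 * q ^ (k / 2)) = 2 * (5 * q ^ (k / 2)) := by ring
      _ ≤ 2 * (q ^ (k - k / 2) * q ^ (k / 2)) := by
        apply Nat.mul_le_mul_left
        exact Nat.mul_le_mul_right _ hX5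
      _ = 2 * q ^ k := by
        rw [← pow_add]
        congr 2
        omega
  have hekP : Real.exp 1 * ((k:ℝ) * P) ≤ (q:ℝ) ^ ℓ := by
    have hkr : (k : ℝ) ≤ 2 * (ℓ:ℝ) - 1 := by
      have : (k : ℝ) + 1 ≤ 2 * (ℓ:ℝ) := by exact_mod_cast (by omega : k + 1 ≤ 2 * ℓ)
      linarith
    have hPnn : (0:ℝ) ≤ (P:ℝ) * Real.exp 1 := by positivity
    nlinarith [hreal, hPnn]
  have hnat : k * P * q ^ (k - ℓ) + 2 * q ^ (k / 2) < q ^ k := by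
    have hcast : ((k * P * q ^ (k - ℓ) + 2 * q ^ (k / 2) : ℕ) : ℝ) < ((q ^ k : ℕ) : ℝ) := by
      push_cast
      set a : ℝ := (k:ℝ) * P * (q:ℝ) ^ (k - ℓ) with ha
      set c : ℝ := (q:ℝ) ^ (k / 2) with hc
      set Q : ℝ := (q:ℝ) ^ k with hQ
      have hQpos : 0 < Q := by rw [hQ]; positivity
      have hann : 0 ≤ a := by rw [ha]; positivity
      have hcnn : 0 ≤ c := by rw [hc]; positivity
      have h1 : Real.exp 1 * a ≤ Q := by
        have := mul_le_mul_of_nonneg_right hekP (by positivity : (0:ℝ) ≤ (q:ℝ) ^ (k - ℓ))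
        calc Real.exp 1 * a = Real.exp 1 * ((k:ℝ) * P) * (q:ℝ) ^ (k - ℓ) := by rw [ha]; ring
          _ ≤ (q:ℝ) ^ ℓ * (q:ℝ) ^ (k - ℓ) := this
          _ = Q := by rw [hQ, ← pow_add]; congr 1; omega
      have h2 : 5 * (2 * c) ≤ 2 * Q := by
        have := hfive
        have hcast2 : ((5 * (2 * q ^ (k / 2)) : ℕ) : ℝ) ≤ ((2 * q ^ k : ℕ) : ℝ) := by
          exact_mod_cast this
        push_cast at hcast2
        calc (5:ℝ) * (2 * c) = 5 * (2 * (q:ℝ) ^ (k/2)) := by rw [hc]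
          _ ≤ 2 * (q:ℝ) ^ k := hcast2
          _ = 2 * Q := by rw [hQ]
      have key : 2.7 * a ≤ Q := by
        nlinarith [mul_nonneg (by linarith : (0:ℝ) ≤ Real.exp 1 - 2.7) hann]
      linarith
    exact_mod_cast hcast
  have hfinal : B1.card + B2.card + B3.card < q ^ k := by
    have hsum : B1.card + B2.card ≤ k * P * q ^ (k - ℓ) := by
      have h1 : k * (F.card * q ^ (k - ℓ)) + k * k * q ^ (k - ℓ)
          = k * (F.card + k) * q ^ (k - ℓ) := by ring
      have h2 : k * (F.card + k) * q ^ (k - ℓ) ≤ k * P * q ^ (k - ℓ) :=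
        Nat.mul_le_mul_right _ (Nat.mul_le_mul_left _ hF)
      omega
    omega
  -- extraction
  have hex : ∃ u : V, u ∉ B1 ∪ B2 ∪ B3 := by
    by_contra hcon
    push_neg at hcon
    have hsub : (univ : Finset V) ⊆ B1 ∪ B2 ∪ B3 := fun u _ => hcon u
    have hc2 := Finset.card_le_card hsub
    rw [hcuniv] at hc2
    have hc3 : (B1 ∪ B2 ∪ B3).card ≤ B1.card + B2.card + B3.card := by
      calc (B1 ∪ B2 ∪ B3).card ≤ (B1 ∪ B2).card + B3.card := Finset.card_union_le _ _
        _ ≤ B1.card + B2.card + B3.card := by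
          have := Finset.card_union_le B1 B2
          omega
    omega
  obtain ⟨u, hu⟩ := hex
  refine ⟨u, ?_, ?_⟩
  · intro j j' heq
    by_contra hne
    exact hu (hcover u (fun hgood => hne (hgood.1 j j' heq)))
  · intro j hj
    exact hu (hcover u (fun hgood => hgood.2 j hj))

end Cyclic

section Linear

/-- linear window at position `i` -/
def lwin {q : ℕ} (ℓ : ℕ) {m : ℕ} (w : Fin m → Fin q) (i : ℕ) (h : i + ℓ ≤ m) : Fin ℓ → Fin q :=
  fun s => w ⟨i + s.val, by have := s.isLt; omega⟩

/-- a linear word is valid if its windows are distinct and avoid `F`. -/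
def LValid {q : ℕ} (ℓ : ℕ) (F : Finset (Fin ℓ → Fin q)) {m : ℕ} (w : Fin m → Fin q) : Prop :=
  (∀ i i' (h : i + ℓ ≤ m) (h' : i' + ℓ ≤ m), lwin ℓ w i h = lwin ℓ w i' h' → i = i') ∧
  (∀ i (h : i + ℓ ≤ m), lwin ℓ w i h ∉ F)

noncomputable def Sset (q ℓ : ℕ) (F : Finset (Fin ℓ → Fin q)) (m : ℕ) : Finset (Fin m → Fin q) :=
  univ.filter (LValid ℓ F)

noncomputable def NN (q ℓ : ℕ) (F : Finset (Fin ℓ → Fin q)) (m : ℕ) : ℕ := (Sset q ℓ F m).card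

variable {q ℓ : ℕ} {F : Finset (Fin ℓ → Fin q)}

lemma NN_small (hl1 : 1 ≤ ℓ) {m : ℕ} (hm : m < ℓ) : NN q ℓ F m = q ^ m := by
  have : Sset q ℓ F m = univ := by
    apply Finset.filter_true_of_mem
    intro w _
    constructor
    · intro i i' h h' _
      omega
    · intro i h
      omega
  rw [NN, this, card_univ]
  simp

lemma NN_zero (hl1 : 1 ≤ ℓ) : NN q ℓ F 0 = 1 := by
  rw [NN_small hl1 (by omega)]
  simp

/-- subwords of valid words are valid -/
lemma LValid_sub {m m' a : ℕ} (h : a + m' ≤ m) {w : Fin m → Fin q} (hw : LValid ℓ F w) :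
    LValid ℓ F (fun i : Fin m' => w ⟨a + i.val, by have := i.isLt; omega⟩) := by
  have hwin : ∀ i (hi : i + ℓ ≤ m'),
      lwin ℓ (fun i : Fin m' => w ⟨a + i.val, by have := i.isLt; omega⟩) i hi
        = lwin ℓ w (a + i) (by omega) := by
    intro i hi
    funext s
    show w ⟨a + (i + s.val), _⟩ = w ⟨(a + i) + s.val, _⟩
    congr 1
    apply Fin.ext
    show a + (i + s.val) = (a + i) + s.val
    omega
  constructor
  · intro i i' hi hi' heq
    rw [hwin i hi, hwin i' hi'] at heq
    have := hw.1 (a + i) (a + i') (by omega) (by omega) heq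
    omega
  · intro i hi
    rw [hwin i hi]
    exact hw.2 (a + i) (by omega)

/-- windows of the one-shorter prefix agree with windows of the word -/
lemma lwin_init {m : ℕ} (v : Fin (m+1) → Fin q) (i : ℕ) (h : i + ℓ ≤ m) :
    lwin ℓ (Fin.init v) i h = lwin ℓ v i (by omega) := by
  funext s
  show Fin.init v ⟨i + s.val, _⟩ = v ⟨i + s.val, _⟩
  rw [Fin.init]
  congr 1

/-- The extension counting lemma. -/
lemma ext_count (hl1 : 1 ≤ ℓ) {m : ℕ} (hm : ℓ ≤ m + 1) (P : ℕ)
    (hP : F.card + (m + 1 - ℓ) ≤ P) :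
    q * NN q ℓ F m ≤ NN q ℓ F (m+1) + P * NN q ℓ F (m+1-ℓ) := by
  classical
  set istar := m + 1 - ℓ with histar
  have histar2 : istar + ℓ ≤ m + 1 := by omega
  set X : Finset (Fin (m+1) → Fin q) :=
    univ.filter (fun v => LValid ℓ F (Fin.init v)) with hX
  -- card X = q * NN m
  have hXcard : X.card = q * NN q ℓ F m := by
    have himg : X = Finset.image (fun p : (Fin m → Fin q) × Fin q => Fin.snoc p.1 p.2)
        ((Sset q ℓ F m) ×ˢ univ) := by
      ext v
      simp only [hX, mem_filter, mem_univ, true_and, Finset.mem_image, Finset.mem_product]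
      constructor
      · intro hv
        refine ⟨(Fin.init v, v (Fin.last m)), ⟨?_, ?_⟩, Fin.snoc_init_self v⟩
        · rw [Sset, mem_filter]; exact ⟨mem_univ _, hv⟩
        · trivial
      · rintro ⟨⟨w, x⟩, ⟨hw, _⟩, rfl⟩
        rw [Fin.init_snoc]
        rw [Sset, mem_filter] at hw
        exact hw.2
    rw [himg, Finset.card_image_of_injective _ ?_, Finset.card_product, card_univ]
    · rw [NN]; simp [mul_comm]
    · intro p p' hpp
      have h1 : p.1 = p'.1 := by
        have := congrArg Fin.init hpp
        rwa [Fin.init_snoc, Fin.init_snoc] at this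
      have h2 : p.2 = p'.2 := by
        have := congrArg (fun f => f (Fin.last m)) hpp
        simpa [Fin.snoc_last] using this
      exact Prod.ext h1 h2
  -- bad set
  set T : Finset (Fin (m+1) → Fin q) := X.filter (fun v => ¬ LValid ℓ F v) with hT
  have hsplit : X.card ≤ NN q ℓ F (m+1) + T.card := by
    have hsub : X ⊆ Sset q ℓ F (m+1) ∪ T := by
      intro v hv
      by_cases hval : LValid ℓ F v
      · exact Finset.mem_union_left _ (by rw [Sset, mem_filter]; exact ⟨mem_univ _, hval⟩)
      · exact Finset.mem_union_right _ (by rw [hT, mem_filter]; exact ⟨hv, hval⟩)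
    calc X.card ≤ (Sset q ℓ F (m+1) ∪ T).card := Finset.card_le_card hsub
      _ ≤ NN q ℓ F (m+1) + T.card := Finset.card_union_le _ _
  -- truncation map
  set ρ : (Fin (m+1) → Fin q) → (Fin (m+1-ℓ) → Fin q) :=
    fun v => fun t => v ⟨t.val, by have := t.isLt; omega⟩ with hρ
  have hρmem : ∀ v ∈ X, ρ v ∈ Sset q ℓ F (m+1-ℓ) := by
    intro v hv
    rw [Sset, mem_filter]
    refine ⟨mem_univ _, ?_⟩
    rw [hX, mem_filter] at hv
    have hsub := LValid_sub (a := 0) (m' := m+1-ℓ) (by omega) hv.2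
    convert hsub using 1
    funext t
    show v ⟨t.val, _⟩ = Fin.init v ⟨0 + t.val, _⟩
    rw [Fin.init]
    congr 1
    apply Fin.ext
    show t.val = 0 + t.val
    omega
  -- the pieces of T
  set TF : Finset (Fin (m+1) → Fin q) :=
    F.biUnion (fun f => X.filter (fun v => lwin ℓ v istar histar2 = f)) with hTF
  set TJ : Finset (Fin (m+1) → Fin q) :=
    (range istar).attach.biUnion (fun i => X.filter (fun v =>
      lwin ℓ v istar histar2 = lwin ℓ v i.1
        (by have := Finset.mem_range.1 i.2; omega))) with hTJ
  have hcoverT : T ⊆ TF ∪ TJ := by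
    intro v hv
    rw [hT, mem_filter] at hv
    obtain ⟨hvX, hvbad⟩ := hv
    have hinit : LValid ℓ F (Fin.init v) := by
      have hvX' := hvX
      rw [hX, mem_filter] at hvX'
      exact hvX'.2
    rw [LValid, not_and_or] at hvbad
    rcases hvbad with hbad | hbad
    · -- window collision
      push_neg at hbad
      obtain ⟨i, i', h, h', heq, hne⟩ := hbad
      apply Finset.mem_union_right
      rw [hTJ]
      apply Finset.mem_biUnion.2
      have hii : i ≤ istar := by omega
      have hii' : i' ≤ istar := by omega
      rcases Nat.lt_or_ge i istar with hilt | hige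
      · rcases Nat.lt_or_ge i' istar with hilt' | hige'
        · -- both interior: contradiction
          exfalso
          have e1 := lwin_init (ℓ := ℓ) v i (show i + ℓ ≤ m by omega)
          have e2 := lwin_init (ℓ := ℓ) v i' (show i' + ℓ ≤ m by omega)
          exact hne (hinit.1 i i' (by omega) (by omega) (by rw [e1, e2]; exact heq))
        · -- i' = istar
          have : i' = istar := by omega
          subst this
          refine ⟨⟨i, Finset.mem_range.2 hilt⟩, Finset.mem_attach _ _, ?_⟩
          apply mem_filter.2
          exact ⟨hvX, heq.symm⟩
      · -- i = istar
        have : i = istar := by omega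
        subst this
        have hilt' : i' < istar := by omega
        refine ⟨⟨i', Finset.mem_range.2 hilt'⟩, Finset.mem_attach _ _, ?_⟩
        apply mem_filter.2
        exact ⟨hvX, heq⟩
    · -- F hit
      push_neg at hbad
      obtain ⟨i, h, hmem⟩ := hbad
      apply Finset.mem_union_left
      rw [hTF]
      apply Finset.mem_biUnion.2
      rcases Nat.lt_or_ge i istar with hilt | hige
      · exfalso
        have e1 := lwin_init (ℓ := ℓ) v i (show i + ℓ ≤ m by omega)
        exact hinit.2 i (by omega) (by rw [e1]; exact hmem)
      · have : i = istar := by omega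
        subst this
        exact ⟨lwin ℓ v istar h, hmem, mem_filter.2 ⟨hvX, rfl⟩⟩
  -- counting the pieces
  have hTFcard : TF.card ≤ F.card * NN q ℓ F (m+1-ℓ) := by
    calc TF.card ≤ ∑ f ∈ F, (X.filter (fun v => lwin ℓ v istar histar2 = f)).card :=
        Finset.card_biUnion_le
      _ ≤ ∑ _f ∈ F, NN q ℓ F (m+1-ℓ) := by
        apply Finset.sum_le_sum
        intro f _
        apply Finset.card_le_card_of_injOn ρ
        · intro v hv
          exact hρmem v (mem_filter.1 hv).1
        · intro v hv v' hv' hρeq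
          have hf := (mem_filter.1 hv).2
          have hf' := (mem_filter.1 hv').2
          funext x
          rcases Nat.lt_or_ge x.val istar with hx | hx
          · have := congrFun hρeq ⟨x.val, by omega⟩
            simpa [hρ] using this
          · have hs : x.val - istar < ℓ := by have := x.isLt; omega
            have e1 : v x = lwin ℓ v istar histar2 ⟨x.val - istar, hs⟩ := by
              show v x = v ⟨istar + (x.val - istar), _⟩
              congr 1
              apply Fin.ext
              show x.val = istar + (x.val - istar)
              omega
            have e1' : v' x = lwin ℓ v' istar histar2 ⟨x.val - istar, hs⟩ := by
              show v' x = v' ⟨istar + (x.val - istar), _⟩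
              congr 1
              apply Fin.ext
              show x.val = istar + (x.val - istar)
              omega
            rw [e1, e1', hf, hf']
      _ = F.card * NN q ℓ F (m+1-ℓ) := by rw [Finset.sum_const, smul_eq_mul]
  have hTJcard : TJ.card ≤ (m+1-ℓ) * NN q ℓ F (m+1-ℓ) := by
    calc TJ.card ≤ ∑ i ∈ (range istar).attach, (X.filter (fun v =>
          lwin ℓ v istar histar2 = lwin ℓ v i.1
            (by have := Finset.mem_range.1 i.2; omega))).card := Finset.card_biUnion_le
      _ ≤ ∑ _i ∈ (range istar).attach, NN q ℓ F (m+1-ℓ) := by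
        apply Finset.sum_le_sum
        intro i _
        have hibound : i.1 < istar := Finset.mem_range.1 i.2
        apply Finset.card_le_card_of_injOn ρ
        · intro v hv
          exact hρmem v (mem_filter.1 hv).1
        · intro v hv v' hv' hρeq
          have hf := (mem_filter.1 hv).2
          have hf' := (mem_filter.1 hv').2
          funext x
          -- strong induction on the index
          have key : ∀ c : ℕ, ∀ (hc : c < m + 1), v ⟨c, hc⟩ = v' ⟨c, hc⟩ := by
            intro c
            induction c using Nat.strong_induction_on with
            | _ c ih =>
              intro hc
              rcases Nat.lt_or_ge c istar with hx | hx
              · have := congrFun hρeq ⟨c, by omega⟩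
                simpa [hρ] using this
              · have hs : c - istar < ℓ := by omega
                have e1 : v ⟨c, hc⟩ = lwin ℓ v istar histar2 ⟨c - istar, hs⟩ := by
                  show v _ = v ⟨istar + (c - istar), _⟩
                  congr 1
                  apply Fin.ext
                  show c = istar + (c - istar)
                  omega
                have e2 : lwin ℓ v i.1 (by omega) ⟨c - istar, hs⟩
                    = v ⟨i.1 + (c - istar), by omega⟩ := rfl
                have e1' : v' ⟨c, hc⟩ = lwin ℓ v' istar histar2 ⟨c - istar, hs⟩ := by
                  show v' _ = v' ⟨istar + (c - istar), _⟩
                  congr 1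
                  apply Fin.ext
                  show c = istar + (c - istar)
                  omega
                have e2' : lwin ℓ v' i.1 (by omega) ⟨c - istar, hs⟩
                    = v' ⟨i.1 + (c - istar), by omega⟩ := rfl
                have hlt : i.1 + (c - istar) < c := by omega
                rw [e1, hf, e2, e1', hf', e2']
                exact ih _ hlt _
          exact key x.val x.isLt
      _ = (m+1-ℓ) * NN q ℓ F (m+1-ℓ) := by
        rw [Finset.sum_const, smul_eq_mul, Finset.card_attach, Finset.card_range]
  have hTcard : T.card ≤ P * NN q ℓ F (m+1-ℓ) := by
    calc T.card ≤ (TF ∪ TJ).card := Finset.card_le_card hcoverT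
      _ ≤ TF.card + TJ.card := Finset.card_union_le _ _
      _ ≤ F.card * NN q ℓ F (m+1-ℓ) + (m+1-ℓ) * NN q ℓ F (m+1-ℓ) := by omega
      _ = (F.card + (m+1-ℓ)) * NN q ℓ F (m+1-ℓ) := by ring
      _ ≤ P * NN q ℓ F (m+1-ℓ) := Nat.mul_le_mul_right _ hP
  calc q * NN q ℓ F m = X.card := hXcard.symm
    _ ≤ NN q ℓ F (m+1) + T.card := hsplit
    _ ≤ NN q ℓ F (m+1) + P * NN q ℓ F (m+1-ℓ) := Nat.add_le_add_left hTcard _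

end Linear


section Chain
variable {q ℓ : ℕ} {F : Finset (Fin ℓ → Fin q)}

/-- The Rosenfeld-style step: each extension multiplies the count by at least `(1-1/ℓ) q`. -/
lemma step_all (hq : 2 ≤ q) (hl : 2 ≤ ℓ) (P K : ℕ)
    (hAC1 : P * ℓ ^ ℓ ≤ q ^ ℓ * (ℓ - 1) ^ (ℓ - 1))
    (hFP : F.card + K ≤ P) :
    ∀ m, m + 1 ≤ K → (ℓ - 1) * q * NN q ℓ F m ≤ ℓ * NN q ℓ F (m + 1) := by
  intro m
  induction m using Nat.strong_induction_on with
  | _ m ih =>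
    intro hmK
    rcases Nat.lt_or_ge (m + 1) ℓ with hsmall | hbig
    · -- no windows yet
      rw [NN_small (by omega) (show m < ℓ by omega), NN_small (by omega) hsmall]
      calc (ℓ - 1) * q * q ^ m ≤ ℓ * q * q ^ m :=
            Nat.mul_le_mul_right _ (Nat.mul_le_mul_right q (show ℓ - 1 ≤ ℓ by omega))
        _ = ℓ * q ^ (m + 1) := by ring
    · -- main case
      set c := m + 1 - ℓ with hc
      have hcm : c + (ℓ - 1) = m := by omega
      -- local chain from the inductive hypothesis
      have hch : ∀ j : ℕ, j ≤ ℓ - 1 →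
          (ℓ - 1) ^ j * q ^ j * NN q ℓ F (m - j) ≤ ℓ ^ j * NN q ℓ F m := by
        intro j
        induction j with
        | zero => intro _; simpa using le_refl _
        | succ j ihj =>
          intro hj
          have hstep := ih (m - j - 1) (by omega) (by omega)
          have hmj : m - j - 1 + 1 = m - j := by omega
          rw [hmj] at hstep
          have h1 : (ℓ - 1) ^ (j + 1) * q ^ (j + 1) * NN q ℓ F (m - (j + 1))
              = (ℓ - 1) ^ j * q ^ j * ((ℓ - 1) * q * NN q ℓ F (m - j - 1)) := by
            have : m - (j + 1) = m - j - 1 := by omega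
            rw [this]; ring
          rw [h1]
          calc (ℓ - 1) ^ j * q ^ j * ((ℓ - 1) * q * NN q ℓ F (m - j - 1))
              ≤ (ℓ - 1) ^ j * q ^ j * (ℓ * NN q ℓ F (m - j)) :=
              Nat.mul_le_mul_left _ hstep
            _ = ℓ * ((ℓ - 1) ^ j * q ^ j * NN q ℓ F (m - j)) := by ring
            _ ≤ ℓ * (ℓ ^ j * NN q ℓ F m) := Nat.mul_le_mul_left _ (ihj (by omega))
            _ = ℓ ^ (j + 1) * NN q ℓ F m := by ring
      have hchain : (ℓ - 1) ^ (ℓ - 1) * q ^ (ℓ - 1) * NN q ℓ F c ≤ ℓ ^ (ℓ - 1) * NN q ℓ F m := by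
        have := hch (ℓ - 1) (le_refl _)
        rwa [show m - (ℓ - 1) = c by omega] at this
      -- key: ℓ * (P * NN c) ≤ q * NN m
      have hkey : ℓ * (P * NN q ℓ F c) ≤ q * NN q ℓ F m := by
        have h1 : ℓ ^ ℓ * (P * NN q ℓ F c) ≤ q ^ ℓ * ((ℓ - 1) ^ (ℓ - 1) * NN q ℓ F c) := by
          calc ℓ ^ ℓ * (P * NN q ℓ F c) = (P * ℓ ^ ℓ) * NN q ℓ F c := by ring
            _ ≤ (q ^ ℓ * (ℓ - 1) ^ (ℓ - 1)) * NN q ℓ F c := Nat.mul_le_mul_right _ hAC1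
            _ = q ^ ℓ * ((ℓ - 1) ^ (ℓ - 1) * NN q ℓ F c) := by ring
        have h2 : q ^ ℓ * ((ℓ - 1) ^ (ℓ - 1) * NN q ℓ F c)
            ≤ q * (ℓ ^ (ℓ - 1) * NN q ℓ F m) := by
          have hq' : q ^ ℓ = q * q ^ (ℓ - 1) := by
            rw [← pow_succ']
            congr 1
            omega
          calc q ^ ℓ * ((ℓ - 1) ^ (ℓ - 1) * NN q ℓ F c)
              = q * ((ℓ - 1) ^ (ℓ - 1) * q ^ (ℓ - 1) * NN q ℓ F c) := by rw [hq']; ring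
            _ ≤ q * (ℓ ^ (ℓ - 1) * NN q ℓ F m) := Nat.mul_le_mul_left _ hchain
        have h3 : ℓ ^ ℓ * (P * NN q ℓ F c) ≤ q * (ℓ ^ (ℓ - 1) * NN q ℓ F m) := le_trans h1 h2
        have h4 : ℓ ^ ℓ = ℓ ^ (ℓ - 1) * ℓ := by
          rw [← pow_succ]
          congr 1
          omega
        rw [h4] at h3
        have h5 : ℓ ^ (ℓ - 1) * (ℓ * (P * NN q ℓ F c)) ≤ ℓ ^ (ℓ - 1) * (q * NN q ℓ F m) := by
          have e1 : ℓ ^ (ℓ - 1) * (ℓ * (P * NN q ℓ F c)) = ℓ ^ (ℓ - 1) * ℓ * (P * NN q ℓ F c) := by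
            ring
          have e2 : q * (ℓ ^ (ℓ - 1) * NN q ℓ F m) = ℓ ^ (ℓ - 1) * (q * NN q ℓ F m) := by ring
          rw [e1, ← e2]
          exact h3
        exact Nat.le_of_mul_le_mul_left h5 (by positivity)
      -- extension count
      have hext := ext_count (F := F) (by omega) (m := m) hbig P (by omega)
      rw [show m + 1 - ℓ = c by omega] at hext
      -- combine
      have h6 : ℓ * (q * NN q ℓ F m) ≤ ℓ * NN q ℓ F (m + 1) + ℓ * (P * NN q ℓ F c) := by
        calc ℓ * (q * NN q ℓ F m) ≤ ℓ * (NN q ℓ F (m + 1) + P * NN q ℓ F c) :=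
            Nat.mul_le_mul_left _ hext
          _ = ℓ * NN q ℓ F (m + 1) + ℓ * (P * NN q ℓ F c) := by ring
      have h7 : ℓ * (q * NN q ℓ F m) ≤ ℓ * NN q ℓ F (m + 1) + q * NN q ℓ F m := by
        calc ℓ * (q * NN q ℓ F m) ≤ ℓ * NN q ℓ F (m + 1) + ℓ * (P * NN q ℓ F c) := h6
          _ ≤ ℓ * NN q ℓ F (m + 1) + q * NN q ℓ F m := Nat.add_le_add_left hkey _
      have h8 : (ℓ - 1) * q * NN q ℓ F m + q * NN q ℓ F m = ℓ * (q * NN q ℓ F m) := by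
        have : (ℓ - 1) + 1 = ℓ := by omega
        calc (ℓ - 1) * q * NN q ℓ F m + q * NN q ℓ F m
            = ((ℓ - 1) + 1) * (q * NN q ℓ F m) := by ring
          _ = ℓ * (q * NN q ℓ F m) := by rw [this]
      omega

/-- The chain inequality. -/
lemma chain_all (hq : 2 ≤ q) (hl : 2 ≤ ℓ) (P K : ℕ)
    (hAC1 : P * ℓ ^ ℓ ≤ q ^ ℓ * (ℓ - 1) ^ (ℓ - 1))
    (hFP : F.card + K ≤ P) :
    ∀ j b, j ≤ b → b ≤ K → (ℓ - 1) ^ j * q ^ j * NN q ℓ F (b - j) ≤ ℓ ^ j * NN q ℓ F b := by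
  intro j
  induction j with
  | zero => intro b _ _; simpa using le_refl _
  | succ j ihj =>
    intro b hj hb
    have hstep := step_all hq hl P K hAC1 hFP (b - j - 1) (by omega)
    have hbj : b - j - 1 + 1 = b - j := by omega
    rw [hbj] at hstep
    have h1 : (ℓ - 1) ^ (j + 1) * q ^ (j + 1) * NN q ℓ F (b - (j + 1))
        = (ℓ - 1) ^ j * q ^ j * ((ℓ - 1) * q * NN q ℓ F (b - j - 1)) := by
      have : b - (j + 1) = b - j - 1 := by omega
      rw [this]; ring
    rw [h1]
    calc (ℓ - 1) ^ j * q ^ j * ((ℓ - 1) * q * NN q ℓ F (b - j - 1))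
        ≤ (ℓ - 1) ^ j * q ^ j * (ℓ * NN q ℓ F (b - j)) := Nat.mul_le_mul_left _ hstep
      _ = ℓ * ((ℓ - 1) ^ j * q ^ j * NN q ℓ F (b - j)) := by ring
      _ ≤ ℓ * (ℓ ^ j * NN q ℓ F b) := Nat.mul_le_mul_left _ (ihj b (by omega) hb)
      _ = ℓ ^ (j + 1) * NN q ℓ F b := by ring

/-- positivity of the counts -/
lemma NN_pos (hq : 2 ≤ q) (hl : 2 ≤ ℓ) (P K : ℕ)
    (hAC1 : P * ℓ ^ ℓ ≤ q ^ ℓ * (ℓ - 1) ^ (ℓ - 1))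
    (hFP : F.card + K ≤ P) (m : ℕ) (hm : m ≤ K) : 1 ≤ NN q ℓ F m := by
  have := chain_all hq hl P K hAC1 hFP m m (le_refl _) hm
  rw [Nat.sub_self, NN_zero (by omega), mul_one] at this
  by_contra hcon
  push_neg at hcon
  interval_cases h : NN q ℓ F m
  rw [mul_zero] at this
  have h1 : 1 ≤ ℓ - 1 := by omega
  have h2 : 0 < (ℓ-1) ^ m * q ^ m :=
    Nat.mul_pos (pow_pos (by omega) m) (pow_pos (by omega) m)
  omega

end Chain


section Big
variable {q k ℓ : ℕ} [NeZero k]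

/-- the body of a cyclic word -/
def body (q k : ℕ) (M : ℕ) (u : ZMod k → Fin q) : Fin M → Fin q :=
  fun i => u ((i.val : ℕ) : ZMod k)

lemma cast_drop_k {p : ℕ} (hp : k ≤ p) : ((p : ℕ) : ZMod k) = ((p - k : ℕ) : ZMod k) := by
  conv_lhs => rw [(by omega : p = (p - k) + k)]
  push_cast [ZMod.natCast_self]
  ring

lemma event_bound {F : Finset (Fin ℓ → Fin q)} (hl : 2 ≤ ℓ) (hk : 2 * ℓ ≤ k)
    (M : ℕ) (hM : M + ℓ = k)
    (o : ℕ) (ho1 : M - ℓ < o) (ho2 : o < k)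
    (jo : ℕ) (hjo : jo = if o ≤ M then M - o else o + ℓ - k)
    (E : Finset (ZMod k → Fin q))
    (hEG : ∀ u ∈ E, LValid ℓ F (body q k M u))
    (hdet : ∀ u ∈ E, ∀ u' ∈ E,
      (∀ x : ZMod k, ¬ blk ℓ ((o : ℕ) : ZMod k) x → u x = u' x) → u = u') :
    E.card ≤ NN q ℓ F (M - jo) * q ^ jo := by
  have hMl : ℓ ≤ M := by omega
  set a := if o ≤ M then 0 else jo with ha
  set cs := if o ≤ M then o + ℓ else M with hcs
  have hjoM : jo ≤ M := by
    rw [hjo]; split <;> omega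
  have ha1 : a + (M - jo) ≤ M := by
    rw [ha, hjo]; split <;> omega
  set Ψ : (ZMod k → Fin q) → (Fin (M - jo) → Fin q) × (Fin jo → Fin q) :=
    fun u => (fun i => u ((a + i.val : ℕ) : ZMod k), fun t => u ((cs + t.val : ℕ) : ZMod k))
    with hΨ
  have hmaps : ∀ u ∈ E, Ψ u ∈ (Sset q ℓ F (M - jo)) ×ˢ (univ : Finset (Fin jo → Fin q)) := by
    intro u hu
    rw [Finset.mem_product]
    refine ⟨?_, mem_univ _⟩
    rw [Sset, mem_filter]
    refine ⟨mem_univ _, ?_⟩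
    have hsub := LValid_sub (m' := M - jo) ha1 (hEG u hu)
    exact hsub
  have hinj : Set.InjOn Ψ E := by
    intro u hu u' hu' hΨeq
    have h1 := congrArg Prod.fst hΨeq
    have h2 := congrArg Prod.snd hΨeq
    simp only [hΨ] at h1 h2
    apply hdet u hu u' hu'
    intro x hx
    set c := (x - ((o:ℕ) : ZMod k)).val with hc
    have hcl : ℓ ≤ c := not_lt.1 hx
    have hck : c < k := ZMod.val_lt _
    have hxeq : x = ((o + c : ℕ) : ZMod k) := by
      have := blk_decomp (((o:ℕ) : ZMod k)) x
      rw [this, ← hc]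
      push_cast
      ring
    by_cases hoM : o ≤ M
    · have hjoA : jo = M - o := by rw [hjo, if_pos hoM]
      have haA : a = 0 := by rw [ha, if_pos hoM]
      have hcsA : cs = o + ℓ := by rw [hcs, if_pos hoM]
      by_cases hsum : o + c < k
      · -- bridge-retained coordinate
        have ht : (o + c) - (o + ℓ) < jo := by omega
        have := congrFun h2 ⟨o + c - (o + ℓ), by omega⟩
        simp only at this
        rw [hxeq]
        have harg : cs + (o + c - (o + ℓ)) = o + c := by rw [hcsA]; omega
        rw [← harg]
        exact this
      · -- wrapped: body-retained prefix
        have hp : o + c - k < M - jo := by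
          rw [hjoA]; omega
        have := congrFun h1 ⟨o + c - k, hp⟩
        simp only at this
        rw [hxeq, cast_drop_k (by omega)]
        have harg : a + (o + c - k) = o + c - k := by rw [haA]; omega
        rw [← harg]
        exact this
    · have hoM' : M < o := by omega
      have hjoB : jo = o + ℓ - k := by rw [hjo, if_neg hoM]
      have haB : a = jo := by rw [ha, if_neg hoM]
      have hcsB : cs = M := by rw [hcs, if_neg hoM]
      have hwrap : k ≤ o + c := by omega
      set p := o + c - k with hp
      have hpjo : jo ≤ p := by omega
      have hpo : p < o := by omega
      rw [hxeq, cast_drop_k hwrap, ← hp]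
      by_cases hpM : p < M
      · have hi : p - jo < M - jo := by omega
        have := congrFun h1 ⟨p - jo, hi⟩
        simp only at this
        have harg : a + (p - jo) = p := by rw [haB]; omega
        rw [← harg]
        exact this
      · have ht : p - M < jo := by
          rw [hjoB]; omega
        have := congrFun h2 ⟨p - M, ht⟩
        simp only at this
        have harg : cs + (p - M) = p := by rw [hcsB]; omega
        rw [← harg]
        exact this
  calc E.card ≤ ((Sset q ℓ F (M - jo)) ×ˢ (univ : Finset (Fin jo → Fin q))).card :=
      Finset.card_le_card_of_injOn Ψ hmaps hinj
    _ = NN q ℓ F (M - jo) * q ^ jo := by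
      rw [Finset.card_product, card_univ, NN]
      simp

end Big


section Arith

lemma pow_ell_bound {ℓ : ℕ} (hl : 2 ≤ ℓ) :
    ((ℓ:ℝ)) ^ (ℓ - 1) ≤ Real.exp 1 * ((ℓ:ℝ) - 1) ^ (ℓ - 1) := by
  set K : ℝ := (ℓ:ℝ) - 1 with hK
  have hl2 : (2:ℝ) ≤ (ℓ:ℝ) := by exact_mod_cast hl
  have hK0 : (0:ℝ) < K := by rw [hK]; linarith
  have hKcast : ((ℓ - 1 : ℕ) : ℝ) = K := by
    rw [hK, Nat.cast_sub (by omega : 1 ≤ ℓ)]; norm_num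
  have h1 : 1 + 1/K ≤ Real.exp (1/K) := by
    have := Real.add_one_le_exp (1/K); linarith
  have h2 : (1 + 1/K) ^ (ℓ-1) ≤ Real.exp (1/K) ^ (ℓ-1) :=
    pow_le_pow_left₀ (by positivity) h1 _
  have h3 : Real.exp (1/K) ^ (ℓ-1) = Real.exp (((ℓ-1 : ℕ):ℝ) * (1/K)) :=
    (Real.exp_nat_mul _ _).symm
  have h4 : ((ℓ-1:ℕ):ℝ) * (1/K) = 1 := by
    rw [hKcast]; field_simp
  have h5 : ((ℓ:ℝ)) ^ (ℓ-1) = (1 + 1/K)^(ℓ-1) * K^(ℓ-1) := by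
    rw [← mul_pow]
    congr 1
    field_simp
    rw [hK]; ring
  rw [h5]
  calc (1+1/K)^(ℓ-1) * K^(ℓ-1) ≤ Real.exp (1/K)^(ℓ-1) * K^(ℓ-1) :=
        mul_le_mul_of_nonneg_right h2 (by positivity)
    _ = Real.exp 1 * K^(ℓ-1) := by rw [h3, h4]

lemma AC1_of_real {q ℓ P : ℕ} (hq : 2 ≤ q) (hl : 2 ≤ ℓ)
    (hreal : (P : ℝ) * ((2 * (ℓ:ℝ) - 1) * Real.exp 1) ≤ (q : ℝ) ^ ℓ) :
    P * ℓ ^ ℓ ≤ q ^ ℓ * (ℓ - 1) ^ (ℓ - 1) := by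
  set L : ℝ := (ℓ:ℝ) with hL
  set K : ℝ := (ℓ:ℝ) - 1 with hK
  have hl2 : (2:ℝ) ≤ L := by rw [hL]; exact_mod_cast hl
  have hK0 : (0:ℝ) < K := by rw [hK]; linarith
  have hKcast : ((ℓ - 1 : ℕ) : ℝ) = K := by
    rw [hK, Nat.cast_sub (by omega : 1 ≤ ℓ)]; norm_num
  have he := Real.exp_pos 1
  have hb := pow_ell_bound hl
  have key : (P:ℝ) * L^ℓ ≤ (q:ℝ)^ℓ * K^(ℓ-1) := by
    have hsplit : L ^ ℓ = L * L^(ℓ-1) := by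
      rw [← pow_succ']
      congr 1
      omega
    have step1 : (P:ℝ) * L^ℓ ≤ (P:ℝ) * L * (Real.exp 1 * K^(ℓ-1)) := by
      rw [hsplit, ← mul_assoc]
      exact mul_le_mul_of_nonneg_left hb (by positivity)
    have step2 : (P:ℝ) * L * (Real.exp 1 * K^(ℓ-1))
        ≤ (P:ℝ) * ((2*L - 1) * Real.exp 1) * K^(ℓ-1) := by
      have hLle : L ≤ 2*L - 1 := by linarith
      have e1 : (P:ℝ) * L * (Real.exp 1 * K^(ℓ-1))
          = ((P:ℝ) * (L * Real.exp 1)) * K^(ℓ-1) := by ring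
      rw [e1]
      apply mul_le_mul_of_nonneg_right _ (by positivity)
      apply mul_le_mul_of_nonneg_left _ (by positivity)
      exact mul_le_mul_of_nonneg_right hLle (le_of_lt he)
    have step3 : (P:ℝ) * ((2*L - 1) * Real.exp 1) * K^(ℓ-1) ≤ (q:ℝ)^ℓ * K^(ℓ-1) :=
      mul_le_mul_of_nonneg_right hreal (by positivity)
    linarith
  have hcast : ((P * ℓ^ℓ : ℕ) : ℝ) ≤ ((q^ℓ * (ℓ-1)^(ℓ-1) : ℕ) : ℝ) := by
    push_cast
    rw [hKcast]
    exact key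
  exact_mod_cast hcast

lemma AC2_of_real {q ℓ P : ℕ} (hq : 2 ≤ q) (hl : 2 ≤ ℓ) (hP1 : 1 ≤ P)
    (hreal : (P : ℝ) * ((2 * (ℓ:ℝ) - 1) * Real.exp 1) ≤ (q : ℝ) ^ ℓ) :
    P * (2 * (∑ j ∈ range ℓ, ℓ^j * (ℓ-1)^(ℓ-1-j)) - (ℓ-1)^(ℓ-1))
      < q ^ ℓ * (ℓ - 1) ^ (ℓ - 1) := by
  set A : ℕ := ∑ j ∈ range ℓ, ℓ^j * (ℓ-1)^(ℓ-1-j) with hA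
  set L : ℝ := (ℓ:ℝ) with hL
  set K : ℝ := (ℓ:ℝ) - 1 with hK
  have hl2 : (2:ℝ) ≤ L := by rw [hL]; exact_mod_cast hl
  have hK0 : (0:ℝ) < K := by rw [hK]; linarith
  have hKcast : ((ℓ - 1 : ℕ) : ℝ) = K := by
    rw [hK, Nat.cast_sub (by omega : 1 ≤ ℓ)]; norm_num
  have hAle : A ≥ (ℓ-1)^(ℓ-1) := by
    have := Finset.single_le_sum (f := fun j => ℓ^j * (ℓ-1)^(ℓ-1-j))
      (fun i _ => Nat.zero_le _) (Finset.mem_range.2 (by omega : 0 < ℓ))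
    simpa using this
  have hAcast : (A:ℝ) = L^ℓ - K^ℓ := by
    have hgeo := geom_sum₂_mul L K ℓ
    rw [hA]
    push_cast
    simp only [hKcast]
    have hLK1 : L - K = 1 := by rw [hL, hK]; ring
    rw [hLK1, mul_one] at hgeo
    convert hgeo using 1
  -- the key real inequality
  have hb := pow_ell_bound hl
  have he9 : Real.exp 1 < 2.7182818286 := Real.exp_one_lt_d9
  have he0 := Real.exp_pos 1
  have hKp : (0:ℝ) < K^(ℓ-1) := by positivity
  have hLsplit : L ^ ℓ = L * L^(ℓ-1) := by
    rw [← pow_succ']; congr 1; omega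
  have hKsplit : K ^ ℓ = K * K^(ℓ-1) := by
    rw [← pow_succ']; congr 1; omega
  have hX : 2 * (A:ℝ) - K^(ℓ-1) < (2*L - 1) * Real.exp 1 * K^(ℓ-1) := by
    rw [hAcast]
    have hK1 : (1:ℝ) ≤ K := by rw [hK]; linarith
    nlinarith [hb, mul_le_mul_of_nonneg_left hb (by positivity : (0:ℝ) ≤ 2 * L)]
  -- assemble over ℝ
  have hcast : ((P * (2 * A - (ℓ-1)^(ℓ-1)) : ℕ) : ℝ) < ((q^ℓ * (ℓ-1)^(ℓ-1) : ℕ) : ℝ) := by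
    have hsub : ((2 * A - (ℓ-1)^(ℓ-1) : ℕ) : ℝ) = 2*(A:ℝ) - (K:ℝ)^(ℓ-1) := by
      rw [Nat.cast_sub (by omega : (ℓ-1)^(ℓ-1) ≤ 2 * A)]
      push_cast
      rw [hKcast]
    push_cast [hsub]
    rw [hKcast]
    have hP0 : (0:ℝ) < (P:ℝ) := by exact_mod_cast hP1
    calc (P:ℝ) * (2*(A:ℝ) - K^(ℓ-1)) < (P:ℝ) * ((2*L-1) * Real.exp 1 * K^(ℓ-1)) := by
          apply mul_lt_mul_of_pos_left hX hP0
      _ = ((P:ℝ) * ((2*L-1) * Real.exp 1)) * K^(ℓ-1) := by ring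
      _ ≤ (q:ℝ)^ℓ * K^(ℓ-1) := mul_le_mul_of_nonneg_right hreal (le_of_lt hKp)
  exact_mod_cast hcast

end Arith


section BigMain
variable {q k ℓ : ℕ} [NeZero k]

theorem newWordBig (hq : 2 ≤ q) (hl : 2 ≤ ℓ) (hk2 : 2 * ℓ ≤ k)
    (P : ℕ) (hPk : k ≤ P) (F : Finset (Fin ℓ → Fin q)) (hF : F.card + k ≤ P)
    (hreal : (P : ℝ) * ((2 * (ℓ:ℝ) - 1) * Real.exp 1) ≤ (q : ℝ) ^ ℓ) :
    ∃ u : ZMod k → Fin q,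
      (∀ j j' : ZMod k, cwin q k ℓ u j = cwin q k ℓ u j' → j = j') ∧
      (∀ j : ZMod k, cwin q k ℓ u j ∉ F) := by
  set M := k - ℓ with hMdef
  have hM : M + ℓ = k := by omega
  have hMl : ℓ ≤ M := by omega
  have hMk : M ≤ k := by omega
  have hP1 : 1 ≤ P := by omega
  have hAC1 := AC1_of_real hq hl hreal
  set GB : Finset (ZMod k → Fin q) := univ.filter (fun u => LValid ℓ F (body q k M u)) with hGB
  -- glue injection: GB has at least NN M * q ^ ℓ elements
  have hGBcard : NN q ℓ F M * q ^ ℓ ≤ GB.card := by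
    set glue : (Fin M → Fin q) × (Fin ℓ → Fin q) → (ZMod k → Fin q) :=
      fun p x => if h : x.val < M then p.1 ⟨x.val, h⟩
        else p.2 ⟨x.val - M, by have := ZMod.val_lt x; omega⟩ with hglue
    have hbody : ∀ p, body q k M (glue p) = p.1 := by
      intro p
      funext i
      show glue p ((i.val : ℕ) : ZMod k) = p.1 i
      have hv : (((i.val : ℕ) : ZMod k)).val = i.val :=
        ZMod.val_cast_of_lt (by have := i.isLt; omega)
      rw [hglue]
      simp only [hv, i.isLt, dite_true]
    have hmaps : ∀ p ∈ (Sset q ℓ F M) ×ˢ (univ : Finset (Fin ℓ → Fin q)), glue p ∈ GB := by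
      intro p hp
      rw [hGB, mem_filter]
      refine ⟨mem_univ _, ?_⟩
      rw [hbody]
      exact (mem_filter.1 (Finset.mem_product.1 hp).1).2
    have hinj : Set.InjOn glue
        ((((Sset q ℓ F M) ×ˢ (univ : Finset (Fin ℓ → Fin q))) : Finset _) : Set _) := by
      intro p hp p' hp' heq
      have h1 : p.1 = p'.1 := by
        rw [← hbody p, ← hbody p', heq]
      have h2 : p.2 = p'.2 := by
        funext t
        have := congrFun heq ((M + t.val : ℕ) : ZMod k)
        have hv : (((M + t.val : ℕ) : ZMod k)).val = M + t.val :=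
          ZMod.val_cast_of_lt (by have := t.isLt; omega)
        rw [hglue] at this
        simp only [hv] at this
        rw [dif_neg (by omega), dif_neg (by omega)] at this
        have harg : M + t.val - M = t.val := by omega
        simp only [harg] at this
        simpa using this
      exact Prod.ext h1 h2
    calc NN q ℓ F M * q ^ ℓ
        = ((Sset q ℓ F M) ×ˢ (univ : Finset (Fin ℓ → Fin q))).card := by
          rw [Finset.card_product, card_univ, NN]
          simp
      _ ≤ GB.card := Finset.card_le_card_of_injOn glue hmaps hinj
  -- windows at body positions are linear windows of the body
  have hbodywin : ∀ (u : ZMod k → Fin q) (i : ℕ) (hi : i + ℓ ≤ M),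
      cwin q k ℓ u ((i : ℕ) : ZMod k) = lwin ℓ (body q k M u) i hi := by
    intro u i hi
    funext s
    show u (((i : ℕ) : ZMod k) + ((s : ℕ) : ZMod k))
        = body q k M u ⟨i + s.val, by have := s.isLt; omega⟩
    show _ = u (((i + s.val : ℕ) : ZMod k))
    congr 1
    push_cast
    ring
  -- events
  set CR := Finset.Ico (M - ℓ + 1) k with hCR
  set jfun : ℕ → ℕ := fun o => if o ≤ M then M - o else o + ℓ - k with hjfun
  set EVf : ℕ → (Fin ℓ → Fin q) → Finset (ZMod k → Fin q) :=
    fun o f => GB.filter (fun u => cwin q k ℓ u ((o:ℕ):ZMod k) = f) with hEVfdef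
  set EVp : ℕ → ℕ → Finset (ZMod k → Fin q) :=
    fun o p => GB.filter (fun u =>
      cwin q k ℓ u ((o:ℕ):ZMod k) = cwin q k ℓ u ((p:ℕ):ZMod k)) with hEVpdef
  set UU := CR.biUnion (fun o => (F.biUnion (EVf o)) ∪ ((range k).erase o).biUnion (EVp o))
    with hUUdef
  -- cover
  have hcover : ∀ u ∈ GB, ¬ ((∀ j j' : ZMod k, cwin q k ℓ u j = cwin q k ℓ u j' → j = j') ∧
      (∀ j : ZMod k, cwin q k ℓ u j ∉ F)) → u ∈ UU := by
    intro u huGB hbad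
    have hLV : LValid ℓ F (body q k M u) := (mem_filter.1 huGB).2
    rw [not_and_or] at hbad
    have hmemEVp : ∀ o1 o2 : ℕ, o1 < k → o2 < k → o1 ≠ o2 → M - ℓ < o1 →
        cwin q k ℓ u ((o1:ℕ):ZMod k) = cwin q k ℓ u ((o2:ℕ):ZMod k) → u ∈ UU := by
      intro o1 o2 h1k h2k hne ho1 heq
      rw [hUUdef]
      apply Finset.mem_biUnion.2
      refine ⟨o1, Finset.mem_Ico.2 ⟨by omega, h1k⟩, ?_⟩
      apply Finset.mem_union_right
      apply Finset.mem_biUnion.2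
      refine ⟨o2, Finset.mem_erase.2 ⟨fun h => hne h.symm, Finset.mem_range.2 h2k⟩, ?_⟩
      rw [hEVpdef]
      exact mem_filter.2 ⟨huGB, heq⟩
    rcases hbad with hbad | hbad
    · push_neg at hbad
      obtain ⟨j, j', heq, hne⟩ := hbad
      set o1 := j.val with ho1def
      set o2 := j'.val with ho2def
      have hj1 : ((o1 : ℕ) : ZMod k) = j := ZMod.natCast_rightInverse j
      have hj2 : ((o2 : ℕ) : ZMod k) = j' := ZMod.natCast_rightInverse j'
      have h1k : o1 < k := ZMod.val_lt j
      have h2k : o2 < k := ZMod.val_lt j'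
      have hneo : o1 ≠ o2 := by
        intro h
        exact hne (by rw [← hj1, ← hj2, h])
      rcases Nat.lt_or_ge (M - ℓ) o1 with hgt | hle1
      · exact hmemEVp o1 o2 h1k h2k hneo hgt (by rw [hj1, hj2]; exact heq)
      · rcases Nat.lt_or_ge (M - ℓ) o2 with hgt2 | hle2
        · exact hmemEVp o2 o1 h2k h1k (fun h => hneo h.symm) hgt2
            (by rw [hj1, hj2]; exact heq.symm)
        · -- both body windows: contradiction
          exfalso
          have e1 := hbodywin u o1 (by omega)
          have e2 := hbodywin u o2 (by omega)
          have := hLV.1 o1 o2 (by omega) (by omega)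
            (by rw [← e1, ← e2, hj1, hj2]; exact heq)
          exact hneo this
    · push_neg at hbad
      obtain ⟨j, hj⟩ := hbad
      set o1 := j.val with ho1def
      have hj1 : ((o1 : ℕ) : ZMod k) = j := ZMod.natCast_rightInverse j
      have h1k : o1 < k := ZMod.val_lt j
      rcases Nat.lt_or_ge (M - ℓ) o1 with hgt | hle1
      · rw [hUUdef]
        apply Finset.mem_biUnion.2
        refine ⟨o1, Finset.mem_Ico.2 ⟨by omega, h1k⟩, ?_⟩
        apply Finset.mem_union_left
        apply Finset.mem_biUnion.2
        refine ⟨cwin q k ℓ u j, hj, ?_⟩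
        rw [hEVfdef]
        exact mem_filter.2 ⟨huGB, by rw [hj1]⟩
      · exfalso
        have e1 := hbodywin u o1 (by omega)
        exact hLV.2 o1 (by omega) (by rw [← e1, hj1]; exact hj)
  -- counting the events
  have hCRprop : ∀ o ∈ CR, M - ℓ < o ∧ o < k := by
    intro o ho
    have := Finset.mem_Ico.1 ho
    omega
  have hEVfcard : ∀ o ∈ CR, ∀ f, (EVf o f).card ≤ NN q ℓ F (M - jfun o) * q ^ (jfun o) := by
    intro o ho f
    obtain ⟨ho1, ho2⟩ := hCRprop o ho
    apply event_bound hl hk2 M hM o ho1 ho2 (jfun o) rfl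
    · intro u hu
      rw [hEVfdef] at hu
      exact (mem_filter.1 (mem_filter.1 hu).1).2
    · intro u hu u' hu' hout
      rw [hEVfdef] at hu hu'
      have hfu := (mem_filter.1 hu).2
      have hfu' := (mem_filter.1 hu').2
      funext x
      by_cases hx : blk ℓ ((o:ℕ):ZMod k) x
      · have hs : (x - ((o:ℕ):ZMod k)).val < ℓ := hx
        have hxeq := blk_decomp (((o:ℕ):ZMod k)) x
        have e1 := congrFun hfu ⟨(x - ((o:ℕ):ZMod k)).val, hs⟩
        have e2 := congrFun hfu' ⟨(x - ((o:ℕ):ZMod k)).val, hs⟩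
        simp only [cwin, Fin.val_mk] at e1 e2
        rw [hxeq, e1, e2]
      · exact hout x hx
  have hEVpcard : ∀ o ∈ CR, ∀ p ∈ (range k).erase o,
      (EVp o p).card ≤ NN q ℓ F (M - jfun o) * q ^ (jfun o) := by
    intro o ho p hp
    obtain ⟨ho1, ho2⟩ := hCRprop o ho
    have hpo : p ≠ o := (Finset.mem_erase.1 hp).1
    have hpk : p < k := Finset.mem_range.1 (Finset.mem_erase.1 hp).2
    apply event_bound hl hk2 M hM o ho1 ho2 (jfun o) rfl
    · intro u hu
      rw [hEVpdef] at hu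
      exact (mem_filter.1 (mem_filter.1 hu).1).2
    · intro u hu u' hu' hout
      rw [hEVpdef] at hu hu'
      have hfu := (mem_filter.1 hu).2
      have hfu' := (mem_filter.1 hu').2
      have hOP : ((o:ℕ):ZMod k) ≠ ((p:ℕ):ZMod k) := by
        intro h
        have := congrArg ZMod.val h
        rw [ZMod.val_cast_of_lt ho2, ZMod.val_cast_of_lt hpk] at this
        exact hpo this.symm
      have hd : ((o:ℕ):ZMod k) - ((p:ℕ):ZMod k) ≠ 0 := sub_ne_zero.2 hOP
      have hgcd : Nat.gcd (((o:ℕ):ZMod k) - ((p:ℕ):ZMod k)).val k ≤ k - ℓ := by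
        set d := ((o:ℕ):ZMod k) - ((p:ℕ):ZMod k) with hddef
        have hdval : d.val ≠ 0 := fun h => hd ((ZMod.val_eq_zero _).1 h)
        have hdlt : d.val < k := ZMod.val_lt d
        have hgd : Nat.gcd d.val k ∣ k := Nat.gcd_dvd_right _ _
        have hgle : Nat.gcd d.val k ≤ d.val := Nat.le_of_dvd (by omega) (Nat.gcd_dvd_left _ _)
        have h2g := two_dvd_le hgd (by omega)
        omega
      exact agree_blk (by omega) (by omega) hd hgcd
        (event_constraint hfu) (event_constraint hfu') hout
  -- total bound on UU
  set SS := ∑ o ∈ CR, NN q ℓ F (M - jfun o) * q ^ (jfun o) with hSSdef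
  have hUUcard : UU.card ≤ P * SS := by
    calc UU.card ≤ ∑ o ∈ CR, ((F.biUnion (EVf o)) ∪ ((range k).erase o).biUnion (EVp o)).card :=
        Finset.card_biUnion_le
      _ ≤ ∑ o ∈ CR, P * (NN q ℓ F (M - jfun o) * q ^ (jfun o)) := by
        apply Finset.sum_le_sum
        intro o ho
        set B := NN q ℓ F (M - jfun o) * q ^ (jfun o) with hB
        calc ((F.biUnion (EVf o)) ∪ ((range k).erase o).biUnion (EVp o)).card
            ≤ (F.biUnion (EVf o)).card + (((range k).erase o).biUnion (EVp o)).card :=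
            Finset.card_union_le _ _
          _ ≤ F.card * B + (k - 1) * B := by
            have c1 : (F.biUnion (EVf o)).card ≤ F.card * B := by
              calc (F.biUnion (EVf o)).card ≤ ∑ f ∈ F, (EVf o f).card :=
                  Finset.card_biUnion_le
                _ ≤ ∑ _f ∈ F, B := Finset.sum_le_sum (fun f _ => hEVfcard o ho f)
                _ = F.card * B := by rw [Finset.sum_const, smul_eq_mul]
            have c2 : (((range k).erase o).biUnion (EVp o)).card ≤ (k - 1) * B := by
              calc (((range k).erase o).biUnion (EVp o)).card
                  ≤ ∑ p ∈ (range k).erase o, (EVp o p).card := Finset.card_biUnion_le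
                _ ≤ ∑ _p ∈ (range k).erase o, B :=
                  Finset.sum_le_sum (fun p hp => hEVpcard o ho p hp)
                _ = ((range k).erase o).card * B := by rw [Finset.sum_const, smul_eq_mul]
                _ ≤ (k - 1) * B := by
                  apply Nat.mul_le_mul_right
                  have homem : o ∈ range k := Finset.mem_range.2 (hCRprop o ho).2
                  have hcc : ((range k).erase o).card = k - 1 := by
                    rw [Finset.card_erase_of_mem homem, Finset.card_range]
                  omega
            omega
          _ ≤ P * B := by
            have : F.card * B + (k-1) * B = (F.card + (k-1)) * B := by ring
            rw [this]
            exact Nat.mul_le_mul_right _ (by omega)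
      _ = P * SS := by rw [hSSdef, Finset.mul_sum]
  -- chain comparison
  set Kp := (ℓ - 1) ^ (ℓ - 1) with hKp
  set A := ∑ j ∈ range ℓ, ℓ^j * (ℓ-1)^(ℓ-1-j) with hAdef
  set TT := ∑ o ∈ CR, ℓ ^ (jfun o) * (ℓ-1) ^ (ℓ - 1 - jfun o) with hTTdef
  have hjle : ∀ o ∈ CR, jfun o ≤ ℓ - 1 := by
    intro o ho
    obtain ⟨h1, h2⟩ := hCRprop o ho
    show (if o ≤ M then M - o else o + ℓ - k) ≤ ℓ - 1
    split <;> omega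
  have hsum1 : Kp * SS ≤ NN q ℓ F M * TT := by
    rw [hSSdef, hTTdef, Finset.mul_sum, Finset.mul_sum]
    apply Finset.sum_le_sum
    intro o ho
    have hj := hjle o ho
    have hch := chain_all hq hl P k hAC1 hF (jfun o) M (le_trans hj (by omega)) hMk
    have hKpsplit : Kp = (ℓ-1)^(ℓ-1-jfun o) * (ℓ-1)^(jfun o) := by
      rw [hKp, ← pow_add]
      congr 1
      omega
    calc Kp * (NN q ℓ F (M - jfun o) * q ^ jfun o)
        = (ℓ-1)^(ℓ-1-jfun o) * ((ℓ-1)^(jfun o) * q^(jfun o) * NN q ℓ F (M - jfun o)) := by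
          rw [hKpsplit]; ring
      _ ≤ (ℓ-1)^(ℓ-1-jfun o) * (ℓ^(jfun o) * NN q ℓ F M) := Nat.mul_le_mul_left _ hch
      _ = NN q ℓ F M * (ℓ^(jfun o) * (ℓ-1)^(ℓ-1-jfun o)) := by ring
  have hTTle : TT ≤ 2 * A - Kp := by
    have hsplitCR : TT = (∑ o ∈ Finset.Ico (M-ℓ+1) (M+1), ℓ^(jfun o)*(ℓ-1)^(ℓ-1-jfun o))
        + (∑ o ∈ Finset.Ico (M+1) k, ℓ^(jfun o)*(ℓ-1)^(ℓ-1-jfun o)) := by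
      rw [hTTdef, hCR,
        ← Finset.sum_Ico_consecutive _ (by omega : M-ℓ+1 ≤ M+1) (by omega : M+1 ≤ k)]
    have hpart1 : (∑ o ∈ Finset.Ico (M-ℓ+1) (M+1), ℓ^(jfun o)*(ℓ-1)^(ℓ-1-jfun o)) = A := by
      rw [hAdef]
      apply Finset.sum_nbij' (i := fun o => M - o) (j := fun jj => M - jj)
      · intro o ho
        have := Finset.mem_Ico.1 ho
        exact Finset.mem_range.2 (by omega)
      · intro jj hjj
        have := Finset.mem_range.1 hjj
        exact Finset.mem_Ico.2 ⟨by omega, by omega⟩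
      · intro o ho
        have := Finset.mem_Ico.1 ho
        omega
      · intro jj hjj
        have := Finset.mem_range.1 hjj
        omega
      · intro o ho
        have := Finset.mem_Ico.1 ho
        have hjeq : jfun o = M - o := by
          show (if o ≤ M then M - o else o + ℓ - k) = M - o
          exact if_pos (by omega)
        rw [hjeq]
    have hpart2 : (∑ o ∈ Finset.Ico (M+1) k, ℓ^(jfun o)*(ℓ-1)^(ℓ-1-jfun o))
        = ∑ jj ∈ Finset.Ico 1 ℓ, ℓ^jj*(ℓ-1)^(ℓ-1-jj) := by
      apply Finset.sum_nbij' (i := fun o => o - M) (j := fun jj => jj + M)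
      · intro o ho
        have := Finset.mem_Ico.1 ho
        exact Finset.mem_Ico.2 ⟨by omega, by omega⟩
      · intro jj hjj
        have := Finset.mem_Ico.1 hjj
        exact Finset.mem_Ico.2 ⟨by omega, by omega⟩
      · intro o ho
        have := Finset.mem_Ico.1 ho
        omega
      · intro jj hjj
        have := Finset.mem_Ico.1 hjj
        omega
      · intro o ho
        have := Finset.mem_Ico.1 ho
        have hjeq : jfun o = o - M := by
          show (if o ≤ M then M - o else o + ℓ - k) = o - M
          rw [if_neg (by omega)]
          omega
        rw [hjeq]
    have hA1 : A = Kp + ∑ jj ∈ Finset.Ico 1 ℓ, ℓ^jj*(ℓ-1)^(ℓ-1-jj) := by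
      rw [hAdef, Finset.range_eq_Ico, Finset.sum_eq_sum_Ico_succ_bot (by omega : 0 < ℓ)]
      simp [hKp]
    omega
  have hAC2 := AC2_of_real hq hl hP1 hreal
  have hNNpos := NN_pos hq hl P k hAC1 hF M hMk
  have hKppos : 0 < Kp := by rw [hKp]; exact pow_pos (by omega) _
  have hUUlt : UU.card < NN q ℓ F M * q ^ ℓ := by
    have h6 : P * (2*A - Kp) < q^ℓ * Kp := hAC2
    have hchainfull : Kp * UU.card < Kp * (NN q ℓ F M * q ^ ℓ) := by
      calc Kp * UU.card ≤ Kp * (P * SS) := Nat.mul_le_mul_left _ hUUcard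
        _ = P * (Kp * SS) := by ring
        _ ≤ P * (NN q ℓ F M * TT) := Nat.mul_le_mul_left _ hsum1
        _ = NN q ℓ F M * (P * TT) := by ring
        _ ≤ NN q ℓ F M * (P * (2*A - Kp)) :=
            Nat.mul_le_mul_left _ (Nat.mul_le_mul_left _ hTTle)
        _ < NN q ℓ F M * (q^ℓ * Kp) := by
            exact mul_lt_mul_of_pos_left h6 (by omega)
        _ = Kp * (NN q ℓ F M * q ^ ℓ) := by ring
    exact Nat.lt_of_mul_lt_mul_left hchainfull
  have hUUsub : UU ⊆ GB := by
    intro u hu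
    rw [hUUdef] at hu
    obtain ⟨o, _, hu2⟩ := Finset.mem_biUnion.1 hu
    rcases Finset.mem_union.1 hu2 with h | h
    · obtain ⟨f, _, h3⟩ := Finset.mem_biUnion.1 h
      rw [hEVfdef] at h3
      exact (mem_filter.1 h3).1
    · obtain ⟨p, _, h3⟩ := Finset.mem_biUnion.1 h
      rw [hEVpdef] at h3
      exact (mem_filter.1 h3).1
  have hGBlt : UU.card < GB.card := lt_of_lt_of_le hUUlt hGBcard
  have hne : (GB \ UU).Nonempty := by
    rw [← Finset.card_pos, Finset.card_sdiff_of_subset hUUsub]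
    omega
  obtain ⟨u, hu⟩ := hne
  rw [Finset.mem_sdiff] at hu
  refine ⟨u, ?_⟩
  by_contra hcon
  exact hu.2 (hcover u hu.1 hcon)

end BigMain


/-- The central "new word" lemma: if `F` is a set of forbidden windows with
`|F| + k ≤ P` and `P * e * (2ℓ-1) ≤ q^ℓ`, there is a cyclic word of length `k`
all of whose `ℓ`-windows are distinct and avoid `F`. -/
theorem newWord {q k ℓ : ℕ} (hq : 2 ≤ q) (hl : 2 ≤ ℓ) (hk : ℓ ≤ k) (P : ℕ) (hPk : k ≤ P)
    (F : Finset (Fin ℓ → Fin q)) (hF : F.card + k ≤ P)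
    (hreal : (P : ℝ) * ((2 * (ℓ:ℝ) - 1) * Real.exp 1) ≤ (q : ℝ) ^ ℓ) :
    ∃ u : ZMod k → Fin q,
      (∀ j j' : ZMod k, cwin q k ℓ u j = cwin q k ℓ u j' → j = j') ∧
      (∀ j : ZMod k, cwin q k ℓ u j ∉ F) := by
  haveI : NeZero k := ⟨by omega⟩
  rcases le_or_gt (2 * ℓ) k with hbig | hsmall
  · exact newWordBig hq hl hbig P hPk F hF hreal
  · exact newWordSmall hq hl hk (by omega) P hPk F hF hreal

/-- The trivial construction for `ℓ = 1`. -/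
theorem ellOne {q k n : ℕ} (hk : 1 ≤ k) (hnk : n * k ≤ q) :
    ∃ c : Fin n → ZMod k → Fin q, ebugValid q k 1 n c := by
  haveI : NeZero k := ⟨by omega⟩
  rcases Nat.eq_zero_or_pos n with hn | hn
  · subst hn
    exact ⟨fun i => i.elim0, fun p => p.1.elim0⟩
  refine ⟨fun i j => ⟨i.val * k + j.val, ?_⟩, ?_⟩
  · have hj : j.val < k := ZMod.val_lt j
    calc i.val * k + j.val < i.val * k + k := by omega
      _ = (i.val + 1) * k := by ring
      _ ≤ n * k := Nat.mul_le_mul_right k i.isLt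
      _ ≤ q := hnk
  · intro p p' hEq
    have h0 := congrFun hEq (0 : Fin 1)
    have hz : (((0 : Fin 1) : ℕ) : ZMod k) = 0 := by norm_num
    simp only [hz, add_zero] at h0
    have hval : p.1.val * k + p.2.val = p'.1.val * k + p'.2.val := congrArg Fin.val h0
    have h2 : p.2.val < k := ZMod.val_lt p.2
    have h2' : p'.2.val < k := ZMod.val_lt p'.2
    have hdiv : p.1.val = p'.1.val := by
      have e1 : (p.1.val * k + p.2.val) / k = p.1.val := by
        rw [mul_comm, Nat.mul_add_div (by omega), Nat.div_eq_of_lt h2, add_zero]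
      have e2 : (p'.1.val * k + p'.2.val) / k = p'.1.val := by
        rw [mul_comm, Nat.mul_add_div (by omega), Nat.div_eq_of_lt h2', add_zero]
      rw [← e1, ← e2, hval]
    have hmod : p.2.val = p'.2.val := by
      have e1 : (p.1.val * k + p.2.val) % k = p.2.val := by
        rw [mul_comm, Nat.mul_add_mod, Nat.mod_eq_of_lt h2]
      have e2 : (p'.1.val * k + p'.2.val) % k = p'.2.val := by
        rw [mul_comm, Nat.mul_add_mod, Nat.mod_eq_of_lt h2']
      rw [← e1, ← e2, hval]
    have : p.1 = p'.1 := Fin.ext hdiv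
    have h22 : p.2 = p'.2 := ZMod.val_injective _ hmod
    exact Prod.ext this h22

/-- Building a full system of `n` bugs by induction, for `ℓ ≥ 2`. -/
theorem buildSystem {q k ℓ : ℕ} (hq : 2 ≤ q) (hl : 2 ≤ ℓ) (hk : ℓ ≤ k) (n : ℕ)
    (hreal : (2 * (ℓ : ℝ) - 1) * Real.exp 1 * k * n ≤ (q : ℝ) ^ ℓ) :
    ∃ c : Fin n → ZMod k → Fin q, ebugValid q k ℓ n c := by
  haveI : NeZero k := ⟨by omega⟩
  suffices H : ∀ t : ℕ, t ≤ n → ∃ c : Fin t → ZMod k → Fin q, ebugValid q k ℓ t c by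
    exact H n le_rfl
  intro t ht
  induction t with
  | zero => exact ⟨fun i => i.elim0, fun p => p.1.elim0⟩
  | succ t ih =>
    obtain ⟨c, hc⟩ := ih (le_trans (Nat.le_succ t) ht)
    set F : Finset (Fin ℓ → Fin q) :=
      Finset.image (fun p : Fin t × ZMod k => cwin q k ℓ (c p.1) p.2) Finset.univ with hFdef
    have hFcard : F.card ≤ t * k := by
      calc F.card ≤ (Finset.univ : Finset (Fin t × ZMod k)).card := Finset.card_image_le
        _ = t * k := by simp [Finset.card_univ, ZMod.card]
    have hn1 : 1 ≤ n := le_trans (by omega) ht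
    have hF2 : F.card + k ≤ n * k := by
      calc F.card + k ≤ t * k + k := by omega
        _ = (t + 1) * k := by ring
        _ ≤ n * k := Nat.mul_le_mul_right k (by omega)
    have hPk : k ≤ n * k := Nat.le_mul_of_pos_left k (by omega)
    have hRR : ((n * k : ℕ) : ℝ) * ((2 * (ℓ:ℝ) - 1) * Real.exp 1) ≤ (q : ℝ) ^ ℓ := by
      have : ((n * k : ℕ) : ℝ) * ((2 * (ℓ:ℝ) - 1) * Real.exp 1)
          = (2 * (ℓ : ℝ) - 1) * Real.exp 1 * k * n := by push_cast; ring
      rw [this]; exact hreal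
    obtain ⟨u, hu1, hu2⟩ := newWord hq hl hk (n * k) hPk F hF2 hRR
    refine ⟨Fin.snoc c u, ?_⟩
    rintro ⟨i, j⟩ ⟨i', j'⟩ hEq
    simp only at hEq
    have memF : ∀ (i₀ : Fin t) (j₀ : ZMod k), cwin q k ℓ (c i₀) j₀ ∈ F := by
      intro i₀ j₀
      rw [hFdef]
      exact Finset.mem_image.2 ⟨(i₀, j₀), Finset.mem_univ _, rfl⟩
    rcases Fin.eq_castSucc_or_eq_last i with ⟨i₀, rfl⟩ | rfl
    · rcases Fin.eq_castSucc_or_eq_last i' with ⟨i₀', rfl⟩ | rfl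
      · -- both old
        have hEq' : cwin q k ℓ (c i₀) j = cwin q k ℓ (c i₀') j' := by
          funext s
          have := congrFun hEq s
          simpa [Fin.snoc_castSucc, cwin] using this
        have := hc (a₁ := (i₀, j)) (a₂ := (i₀', j')) hEq'
        have h1 : i₀ = i₀' := (Prod.mk.injEq _ _ _ _ ▸ this).1
        have h2 : j = j' := (Prod.mk.injEq _ _ _ _ ▸ this).2
        rw [h1, h2]
      · -- old vs new
        exfalso
        have hEq' : cwin q k ℓ (c i₀) j = cwin q k ℓ u j' := by
          funext s
          have := congrFun hEq s
          simpa [Fin.snoc_castSucc, Fin.snoc_last, cwin] using this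
        exact hu2 j' (hEq' ▸ memF i₀ j)
    · rcases Fin.eq_castSucc_or_eq_last i' with ⟨i₀', rfl⟩ | rfl
      · exfalso
        have hEq' : cwin q k ℓ (c i₀') j' = cwin q k ℓ u j := by
          funext s
          have := congrFun hEq s
          simp only [Fin.snoc_castSucc, Fin.snoc_last, cwin] at this ⊢
          exact this.symm
        exact hu2 j (hEq' ▸ memF i₀' j')
      · -- both new
        have hEq' : cwin q k ℓ u j = cwin q k ℓ u j' := by
          funext s
          have := congrFun hEq s
          simpa [Fin.snoc_last, cwin] using this
        rw [hu1 j j' hEq']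

theorem mainExist {q k ℓ : ℕ} (hq : 2 ≤ q) (hℓ : 1 ≤ ℓ) (hk : ℓ ≤ k) (n : ℕ)
    (h : (2 * (ℓ : ℝ) - 1) * Real.exp 1 * k * n ≤ (q : ℝ) ^ ℓ) :
    ∃ c : Fin n → ZMod k → Fin q, ebugValid q k ℓ n c := by
  rcases eq_or_lt_of_le hℓ with h1 | h2
  · -- ℓ = 1
    subst h1
    apply ellOne hk
    have he : (1:ℝ) ≤ Real.exp 1 := Real.one_le_exp (by norm_num)
    have hcast : ((n * k : ℕ) : ℝ) ≤ (q : ℝ) := by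
      push_cast at h
      have h' : (2 * (1 : ℝ) - 1) * Real.exp 1 * k * n = Real.exp 1 * (k * n) := by ring
      rw [h'] at h
      have h2 : (1:ℝ) * (k * n) ≤ Real.exp 1 * (k * n) := by
        apply mul_le_mul_of_nonneg_right he (by positivity)
      push_cast
      calc (n:ℝ) * k = 1 * ((k:ℝ) * n) := by ring
        _ ≤ Real.exp 1 * (k * n) := h2
        _ ≤ (q:ℝ) ^ 1 := h
        _ = (q:ℝ) := by ring
    exact_mod_cast hcast
  · exact buildSystem hq h2 hk n h

end EBugLLL

theorem stmt2 (q k ℓ : ℕ) (hq : 2 ≤ q) (hℓ : 1 ≤ ℓ) (hk : ℓ ≤ k) :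
    (∀ n : ℕ, (2 * (ℓ : ℝ) - 1) * Real.exp 1 * k * n ≤ (q : ℝ) ^ ℓ →
      ∃ c : Fin n → ZMod k → Fin q, ebugValid q k ℓ n c) ∧
    ⌊(q : ℝ) ^ ℓ / ((2 * (ℓ : ℝ) - 1) * Real.exp 1 * k)⌋₊ ≤ eBugNumber q k ℓ := by
  have hk1 : 1 ≤ k := le_trans hℓ hk
  haveI : NeZero k := ⟨by omega⟩
  have part1 : ∀ n : ℕ, (2 * (ℓ : ℝ) - 1) * Real.exp 1 * k * n ≤ (q : ℝ) ^ ℓ →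
      ∃ c : Fin n → ZMod k → Fin q, ebugValid q k ℓ n c :=
    fun n h => EBugLLL.mainExist hq hℓ hk n h
  refine ⟨part1, ?_⟩
  have hD : (0:ℝ) < (2 * (ℓ : ℝ) - 1) * Real.exp 1 * k := by
    have h1 : (1:ℝ) ≤ (ℓ:ℝ) := by exact_mod_cast hℓ
    have h2 : (1:ℝ) ≤ (k:ℝ) := by exact_mod_cast hk1
    have h3 := Real.exp_pos 1
    have h4 : (0:ℝ) < 2 * (ℓ:ℝ) - 1 := by linarith
    have h5 : (0:ℝ) < (k:ℝ) := by linarith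
    positivity
  set Y : ℝ := (q : ℝ) ^ ℓ / ((2 * (ℓ : ℝ) - 1) * Real.exp 1 * k) with hY
  have hYnn : 0 ≤ Y := by
    apply div_nonneg (by positivity) (le_of_lt hD)
  have hmem : (⌊Y⌋₊ : ℕ) ∈ {n : ℕ | ∃ c : Fin n → ZMod k → Fin q, ebugValid q k ℓ n c} := by
    apply part1
    have h1 : (⌊Y⌋₊ : ℝ) ≤ Y := Nat.floor_le hYnn
    calc (2 * (ℓ : ℝ) - 1) * Real.exp 1 * k * (⌊Y⌋₊ : ℝ)
        ≤ (2 * (ℓ : ℝ) - 1) * Real.exp 1 * k * Y := by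
          exact mul_le_mul_of_nonneg_left h1 (le_of_lt hD)
      _ = (q : ℝ) ^ ℓ := by
          rw [hY]; field_simp; exact div_self (by have h7 : (1:ℝ) ≤ (ℓ:ℝ) := (by exact_mod_cast hℓ); exact (by linarith : (0:ℝ) < 2 * (ℓ:ℝ) - 1).ne')
  have hbdd : BddAbove {n : ℕ | ∃ c : Fin n → ZMod k → Fin q, ebugValid q k ℓ n c} := by
    refine ⟨q ^ ℓ, fun n hn => ?_⟩
    obtain ⟨c, hc⟩ := hn
    have hcard := Fintype.card_le_of_injective _ hc
    simp only [Fintype.card_prod, Fintype.card_fin, ZMod.card, Fintype.card_fun] at hcard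
    calc n ≤ n * k := Nat.le_mul_of_pos_right n (by omega)
      _ ≤ q ^ ℓ := hcard
  exact le_csSup hbdd hmem
end

section
/- (Splitting LFSR sequences.) Let q be a prime power, ℓ ≥ 1, and let k be an integer with ℓ ≤ k ≤ (q^ℓ − 1)/(q − 1). Then there exists an ℓ-valid (q,k)-colouring of q − 1 eBugs; that is, E(q,k,ℓ) ≥ q − 1. -/
/-! Let `F ⊇ K` be finite fields with `|K| = q` and `[F : K] = ℓ`, let `g` generate `Fˣ` and let
`T` be the trace. Since `1, g, …, g ^ (ℓ - 1)` is a `K`-basis and `T ≠ 0`, the map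
`x ↦ (T (g ^ s * x))_{s < ℓ}` is injective, so the `ℓ`-windows of the
m-sequence `n ↦ T (g ^ n * v)` are distinct for `n < q ^ ℓ - 1`. Cut this sequence into `q - 1`
blocks of length `k` starting at the multiples of `m = (q ^ ℓ - 1) / (q - 1)` and close each
block into a cycle. As `g ^ m` is the norm of `g`, it lies in `K`, so every block is a `K`-multiple
of the first one; hence a single choice of `v ≠ 0` with `T (g ^ t * (g ^ k - 1) * v) = 0` for
`t < ℓ - 1` (possible by counting dimensions) makes every wrapped-around window equal to an
ordinary window of the m-sequence, and all windows stay distinct. -/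

open Module

section PowWindow

variable {K F : Type*} [Field K] [Field F] [Algebra K F]

def powWindow (T : F →ₗ[K] K) (g : F) (n : ℕ) : F →ₗ[K] Fin n → K :=
  LinearMap.pi fun s => T ∘ₗ LinearMap.mulLeft K (g ^ (s : ℕ))

@[simp]
theorem powWindow_apply (T : F →ₗ[K] K) (g x : F) {n : ℕ} (s : Fin n) :
    powWindow T g n x s = T (g ^ (s : ℕ) * x) :=
  rfl

theorem powWindow_injective (pb : PowerBasis K F) {T : F →ₗ[K] K} (hT : T ≠ 0) :
    Function.Injective (powWindow T pb.gen (finrank K F)) := by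
  rw [pb.finrank, ← LinearMap.ker_eq_bot, Submodule.eq_bot_iff]
  intro z hz
  by_contra hz0
  have hTz : T ∘ₗ LinearMap.mulRight K z = 0 :=
    pb.basis.ext fun i => by simpa [pb.coe_basis] using congr_fun hz i
  refine hT (LinearMap.ext fun y => ?_)
  simpa [hz0] using LinearMap.congr_fun hTz (y * z⁻¹)

theorem exists_ne_zero_powWindow_mul_eq_zero [FiniteDimensional K F] (T : F →ₗ[K] K)
    (g a : F) : ∃ v ≠ 0, powWindow T g (finrank K F - 1) (a * v) = 0 := by
  have hker : LinearMap.ker (powWindow T g (finrank K F - 1) ∘ₗ LinearMap.mulLeft K a) ≠ ⊥ :=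
    LinearMap.ker_ne_bot_of_finrank_lt <| by
      rw [finrank_fin_fun]
      exact Nat.sub_lt finrank_pos one_pos
  obtain ⟨v, hv, hv0⟩ := (Submodule.ne_bot_iff _).mp hker
  exact ⟨v, hv0, hv⟩

end PowWindow

theorem apply_add_mod_eq_of_seam {α : Type*} {a : ℕ → α} {k ℓ j s : ℕ} (hℓk : ℓ ≤ k)
    (hseam : ∀ t < ℓ - 1, a (t + k) = a t) (hj : j < k) (hs : s < ℓ) :
    a ((j + s) % k) = a (j + s) := by
  rcases lt_or_ge (j + s) k with h | h
  · rw [Nat.mod_eq_of_lt h]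
  · obtain ⟨t, ht⟩ : ∃ t, j + s = t + k := ⟨j + s - k, by omega⟩
    rw [ht, Nat.add_mod_right, Nat.mod_eq_of_lt (by omega), hseam t (by omega)]

theorem ZMod.apply_val_add_eq_of_seam {α : Type*} {a : ℕ → α} {k ℓ s : ℕ} [NeZero k]
    (hℓk : ℓ ≤ k) (hseam : ∀ t < ℓ - 1, a (t + k) = a t) (j : ZMod k) (hs : s < ℓ) :
    a (j + s : ZMod k).val = a (j.val + s) := by
  rw [ZMod.val_add, ZMod.val_natCast, Nat.add_mod_mod]
  exact apply_add_mod_eq_of_seam hℓk hseam (ZMod.val_lt j) hs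

theorem Nat.eq_and_eq_of_mul_add_eq {m r r' j j' : ℕ} (hj : j < m) (hj' : j' < m)
    (h : m * r + j = m * r' + j') : r = r' ∧ j = j' := by
  have hm : 0 < m := by omega
  constructor
  · simpa [Nat.mul_add_div hm, Nat.div_eq_of_lt hj, Nat.div_eq_of_lt hj'] using
      congr_arg (· / m) h
  · simpa [Nat.mul_add_mod, Nat.mod_eq_of_lt hj, Nat.mod_eq_of_lt hj'] using
      congr_arg (· % m) h

section LFSR

variable {K F : Type*} [Field K] [Field F] [Algebra K F]

theorem lfsr_seam {T : F →ₗ[K] K} {g v : F} {m k ℓ : ℕ} (hgm : g ^ m ∈ (algebraMap K F).range)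
    (hv : powWindow T g (ℓ - 1) ((g ^ k - 1) * v) = 0) (r : ℕ) :
    ∀ t < ℓ - 1, T (g ^ (m * r + (t + k)) * v) = T (g ^ (m * r + t) * v) := by
  intro t ht
  obtain ⟨μ, hμ⟩ := hgm
  have hdiff : g ^ (m * r + (t + k)) * v - g ^ (m * r + t) * v
      = (μ ^ r) • (g ^ t * ((g ^ k - 1) * v)) := by
    rw [Algebra.smul_def, map_pow, hμ]
    ring
  rw [← sub_eq_zero, ← map_sub, hdiff, map_smul, ← powWindow_apply T g _ ⟨t, ht⟩, hv]
  simp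

theorem lfsr_window {k : ℕ} [NeZero k] {T : F →ₗ[K] K} {g v : F} {m ℓ : ℕ} (hℓk : ℓ ≤ k)
    (hgm : g ^ m ∈ (algebraMap K F).range)
    (hv : powWindow T g (ℓ - 1) ((g ^ k - 1) * v) = 0) (r : ℕ) (j : ZMod k) :
    (fun s : Fin ℓ => T (g ^ (m * r + (j + (s : ℕ) : ZMod k).val) * v)) =
      powWindow T g ℓ (g ^ (m * r + j.val) * v) := by
  funext s
  rw [ZMod.apply_val_add_eq_of_seam (a := fun n => T (g ^ (m * r + n) * v)) hℓk
    (lfsr_seam hgm hv r) j s.isLt, powWindow_apply, ← mul_assoc, ← pow_add]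
  ring_nf

end LFSR

theorem FiniteField.exists_isPrimitiveRoot_natCard_sub_one (F : Type*) [Field F] [Finite F] :
    ∃ g : F, IsPrimitiveRoot g (Nat.card F - 1) := by
  obtain ⟨g, hg⟩ := IsCyclic.exists_ofOrder_eq_natCard (α := Fˣ)
  exact ⟨g, IsPrimitiveRoot.coe_units_iff.mpr (Nat.card_units F ▸ hg ▸ IsPrimitiveRoot.orderOf g)⟩

theorem IsPrimitiveRoot.adjoin_eq_top_of_natCard_sub_one (K : Type*) {F : Type*} [Field K]
    [Field F] [Finite F] [Algebra K F] {g : F} (hg : IsPrimitiveRoot g (Nat.card F - 1)) :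
    Algebra.adjoin K {g} = ⊤ := by
  have := Fintype.ofFinite F
  have : NeZero (Nat.card F - 1) := ⟨by have := Finite.one_lt_card (α := F); omega⟩
  rw [eq_top_iff]
  rintro x -
  rcases eq_or_ne x 0 with rfl | hx
  · exact zero_mem _
  have hx1 := FiniteField.pow_card_sub_one_eq_one x hx
  rw [Fintype.card_eq_nat_card] at hx1
  obtain ⟨i, -, rfl⟩ := hg.eq_pow_of_pow_eq_one hx1
  exact pow_mem (Algebra.self_mem_adjoin_singleton K g) i

theorem exists_ebugValid_of_finiteField (K F : Type*) [Field K] [Finite K] [Field F] [Finite F]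
    [Algebra K F] {q k ℓ : ℕ} (hq : Nat.card K = q) (hℓ : finrank K F = ℓ) (hℓk : ℓ ≤ k)
    (hk : k ≤ (q ^ ℓ - 1) / (q - 1)) :
    ∃ c : Fin (q - 1) → ZMod k → Fin q, ebugValid q k ℓ (q - 1) c := by
  subst hq hℓ
  rw [← natCard_eq_pow_finrank] at hk
  set q := Nat.card K
  set ℓ := finrank K F
  set m := (Nat.card F - 1) / (q - 1)
  set T := Algebra.trace K F
  have : NeZero k := ⟨(finrank_pos.trans_le hℓk).ne'⟩
  have hm : m * (q - 1) = Nat.card F - 1 := by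
    refine Nat.div_mul_cancel ?_
    rw [natCard_eq_pow_finrank (K := K) (V := F)]
    exact Nat.sub_one_dvd_pow_sub_one q ℓ
  obtain ⟨g, hg⟩ := FiniteField.exists_isPrimitiveRoot_natCard_sub_one F
  let pb := PowerBasis.ofAdjoinEqTop (IsIntegral.of_finite K g)
    (hg.adjoin_eq_top_of_natCard_sub_one K)
  have hgm : g ^ m ∈ (algebraMap K F).range :=
    ⟨Algebra.norm K g, FiniteField.algebraMap_norm_eq_pow⟩
  obtain ⟨v, hv0, hv⟩ := exists_ne_zero_powWindow_mul_eq_zero T g (g ^ k - 1)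
  refine ⟨fun r j => Finite.equivFin K (T (g ^ (m * r + j.val) * v)), ?_⟩
  rintro ⟨r, j⟩ ⟨r', j'⟩ h
  have hwin : powWindow T g ℓ (g ^ (m * r + j.val) * v) =
      powWindow T g ℓ (g ^ (m * r' + j'.val) * v) := by
    rw [← lfsr_window hℓk hgm hv, ← lfsr_window hℓk hgm hv]
    exact funext fun s => (Finite.equivFin K).injective (congr_fun h s)
  have hpow := mul_right_cancel₀ hv0 (powWindow_injective pb (Algebra.trace_ne_zero K F) hwin)
  have hexp_lt : ∀ (r : Fin (q - 1)) (j : ZMod k), m * r + j.val < Nat.card F - 1 := fun r j =>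
    calc m * r + j.val < m * (r + 1) := by linarith [(ZMod.val_lt j).trans_le hk]
      _ ≤ Nat.card F - 1 := hm ▸ Nat.mul_le_mul_left m r.isLt
  obtain ⟨hr, hj⟩ := Nat.eq_and_eq_of_mul_add_eq ((ZMod.val_lt j).trans_le hk)
    ((ZMod.val_lt j').trans_le hk) (hg.pow_inj (hexp_lt r j) (hexp_lt r' j') hpow)
  exact Prod.ext (Fin.ext hr) (ZMod.val_injective k hj)

theorem ebugValid.mul_le_pow {q k ℓ n : ℕ} {c : Fin n → ZMod k → Fin q}
    (h : ebugValid q k ℓ n c) : n * k ≤ q ^ ℓ := by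
  rcases eq_or_ne k 0 with rfl | hk
  · simp
  have : NeZero k := ⟨hk⟩
  simpa [ZMod.card] using Fintype.card_le_of_injective _ h

theorem le_eBugNumber {q k ℓ n : ℕ} (hk : k ≠ 0) {c : Fin n → ZMod k → Fin q}
    (h : ebugValid q k ℓ n c) : n ≤ eBugNumber q k ℓ :=
  le_csSup ⟨q ^ ℓ, fun _ ⟨_, hc⟩ => (Nat.le_mul_of_pos_right _ (Nat.pos_of_ne_zero hk)).trans
    hc.mul_le_pow⟩ ⟨c, h⟩

theorem stmt5 (q k ℓ : ℕ) (hq : IsPrimePow q) (hℓ : 1 ≤ ℓ) (hkl : ℓ ≤ k)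
    (hk : k ≤ (q ^ ℓ - 1) / (q - 1)) :
    (∃ c : Fin (q - 1) → ZMod k → Fin q, ebugValid q k ℓ (q - 1) c) ∧
    q - 1 ≤ eBugNumber q k ℓ := by
  obtain ⟨p, e, hp, he, rfl⟩ := hq
  have : Fact p.Prime := ⟨Nat.prime_iff.mpr hp⟩
  have : NeZero ℓ := ⟨by omega⟩
  let K := GaloisField p e
  obtain ⟨c, hc⟩ := exists_ebugValid_of_finiteField K (FiniteField.Extension K p ℓ)
    (GaloisField.card p e he.ne') (FiniteField.finrank_extension K p ℓ) hkl hk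
  exact ⟨⟨c, hc⟩, le_eBugNumber (by omega) hc⟩
end

section
/- (Existence of the Fibonacci basis.) Let K be a field, F a field extension of K with finite K-dimension ℓ ≥ 1, and let α ∈ F be such that the powers 1, α, α², …, α^{ℓ−1} form a K-basis of F. Then there exists a K-basis b : Basis (Fin ℓ) K F with b 0 = 1 such that multiplication by α acts as a left shift on coordinates: for every x ∈ F and every index i : Fin ℓ with (i : ℕ) + 1 < ℓ, one has b.repr (α * x) i = b.repr x (i + 1). -/
/-!
Let `g` be the first coordinate functional of the power basis `αⁱ`. Since `F` is a division
ring, the form `(x, y) ↦ g (x * y)` is nondegenerate, so the powers of `α` have a dual basis `b`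
for it; the coordinates of `b` are `x ↦ g (x * αⁱ)`, which multiplication by `α` visibly shifts.
-/

open LinearMap

theorem LinearMap.nondegenerate_mul_compr₂ {K F : Type*} [Field K] [DivisionRing F] [Algebra K F]
    {g : F →ₗ[K] K} (hg : g ≠ 0) : BilinForm.Nondegenerate ((mul K F).compr₂ g) := by
  obtain ⟨z, hz⟩ : ∃ z, g z ≠ 0 := by simpa [LinearMap.ext_iff] using hg
  refine ⟨fun x hx => ?_, fun y hy => ?_⟩
  · by_contra hx0
    exact hz (by simpa [mul_inv_cancel_left₀ hx0] using hx (x⁻¹ * z))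
  · by_contra hy0
    exact hz (by simpa [inv_mul_cancel_right₀ hy0] using hy (z * y⁻¹))

theorem stmt8_general (K F : Type*) [Field K] [Field F] [Algebra K F] (ℓ : ℕ) (hℓ : 0 < ℓ)
    (α : F) (pb : Module.Basis (Fin ℓ) K F) (hpb : ∀ i : Fin ℓ, pb i = α ^ (i : ℕ)) :
    ∃ b : Module.Basis (Fin ℓ) K F, b ⟨0, hℓ⟩ = 1 ∧
      ∀ (x : F) (i : Fin ℓ) (h : (i : ℕ) + 1 < ℓ),
        b.repr (α * x) i = b.repr x ⟨(i : ℕ) + 1, h⟩ := by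
  set g := pb.coord ⟨0, hℓ⟩
  have hg : g (pb ⟨0, hℓ⟩) = 1 := by simp [g]
  have hB := nondegenerate_mul_compr₂ (g := g) fun h => by simp [h] at hg
  set b := BilinForm.dualBasis _ hB pb
  have hrepr : ∀ x i, b.repr x i = g (x * α ^ (i : ℕ)) := fun x i => by
    simp [b, BilinForm.dualBasis_repr_apply, hpb]
  refine ⟨b, b.ext_elem fun j => ?_, fun x i h => ?_⟩
  · rw [b.repr_self, hrepr, one_mul, ← hpb, Module.Basis.coord_apply, pb.repr_self,
      Finsupp.single_apply, Finsupp.single_apply]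
    exact if_congr eq_comm rfl rfl
  · rw [hrepr, hrepr, pow_succ', mul_left_comm, mul_assoc]

/-- **Existence of the Fibonacci basis.** If `F/K` is a field extension of dimension `ℓ` and
the powers `1, α, …, α^(ℓ-1)` form a `K`-basis of `F`, then there is a `K`-basis `b` of `F`
with `b 0 = 1` in whose coordinates multiplication by `α` acts as a left shift. -/
theorem stmt8 (K F : Type*) [Field K] [Field F] [Algebra K F] (ℓ : ℕ) (hℓ : 0 < ℓ)
    [FiniteDimensional K F] (hrank : Module.finrank K F = ℓ)
    (α : F) (pb : Module.Basis (Fin ℓ) K F) (hpb : ∀ i : Fin ℓ, pb i = α ^ (i : ℕ)) :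
    ∃ b : Module.Basis (Fin ℓ) K F, b ⟨0, hℓ⟩ = 1 ∧
      ∀ (x : F) (i : Fin ℓ) (h : (i : ℕ) + 1 < ℓ),
        b.repr (α * x) i = b.repr x ⟨(i : ℕ) + 1, h⟩ :=
  stmt8_general K F ℓ hℓ α pb hpb
end

section
/- (Change of basis for the companion matrix.) Let K be a field, ℓ ≥ 1, and p : Fin ℓ → K. Let M : Matrix (Fin ℓ) (Fin ℓ) K be the companion-type matrix defined by M i j = (if (i : ℕ) = (j : ℕ) + 1 then 1 else 0) + (if (j : ℕ) = ℓ − 1 then p i else 0) (subdiagonal of 1's and last column p). Define C : Matrix (Fin ℓ) (Fin ℓ) K by C i j = (M ^ (i : ℕ)) 0 j. Then: (a) C is symmetric, Cᵀ = C; (b) C * M = Mᵀ * C; and (c) the first row of C is the standard basis vector, i.e. C 0 j = if j = 0 then 1 else 0. -/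
/-!
Right multiplication by a companion matrix `M` moves column `j + 1` to column `j`, so
`(M ^ i) 0 j = (M ^ (i + j)) 0 0` and `C` is the Hankel matrix `h (i + j)` of the sequence
`h k = (M ^ k) 0 0`, hence symmetric. Its product `C * M` is again Hankel, with entries
`h (i + j + 1)`, so `C * M = (C * M)ᵀ = Mᵀ * Cᵀ = Mᵀ * C`.
-/

open Matrix

namespace Matrix

variable {R : Type*} {n : ℕ}

def IsCompanion [Zero R] [One R] (M : Matrix (Fin (n + 1)) (Fin (n + 1)) R) : Prop :=
  ∀ j : Fin n, Mᵀ j.castSucc = Pi.single j.succ 1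

def firstRowPowers [Semiring R] (M : Matrix (Fin (n + 1)) (Fin (n + 1)) R) :
    Matrix (Fin (n + 1)) (Fin (n + 1)) R :=
  of fun i j ↦ (M ^ (i : ℕ)) 0 j

namespace IsCompanion

section Semiring

variable [Semiring R] {M : Matrix (Fin (n + 1)) (Fin (n + 1)) R}

theorem mul_apply_castSucc (hM : M.IsCompanion) {m : Type*} (A : Matrix m (Fin (n + 1)) R)
    (r : m) (j : Fin n) : (A * M) r j.castSucc = A r j.succ := by
  change A r ⬝ᵥ Mᵀ j.castSucc = _
  rw [hM, dotProduct_single_one]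

theorem mul_pow_apply_zero (hM : M.IsCompanion) {m : Type*} (A : Matrix m (Fin (n + 1)) R)
    (r : m) (j : Fin (n + 1)) : (A * M ^ (j : ℕ)) r 0 = A r j := by
  induction j using Fin.induction generalizing A with
  | zero => simp
  | succ j ih =>
    rw [Fin.val_succ, pow_succ', ← Matrix.mul_assoc, ← Fin.val_castSucc, ih,
      hM.mul_apply_castSucc]

theorem pow_apply_zero (hM : M.IsCompanion) (i : ℕ) (j : Fin (n + 1)) :
    (M ^ i) 0 j = (M ^ (i + j)) 0 0 := by
  rw [pow_add, hM.mul_pow_apply_zero]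

theorem firstRowPowers_apply (hM : M.IsCompanion) (i j : Fin (n + 1)) :
    M.firstRowPowers i j = (M ^ (i + j : ℕ)) 0 0 :=
  hM.pow_apply_zero i j

theorem firstRowPowers_mul_apply (hM : M.IsCompanion) (i j : Fin (n + 1)) :
    (M.firstRowPowers * M) i j = (M ^ (i + 1 + j : ℕ)) 0 0 := by
  rw [← hM.pow_apply_zero, pow_succ, mul_apply, mul_apply]
  rfl

end Semiring

variable [CommSemiring R] {M : Matrix (Fin (n + 1)) (Fin (n + 1)) R}

theorem transpose_firstRowPowers (hM : M.IsCompanion) :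
    M.firstRowPowersᵀ = M.firstRowPowers := by
  ext i j
  simp only [transpose_apply, hM.firstRowPowers_apply, add_comm]

theorem firstRowPowers_mul (hM : M.IsCompanion) :
    M.firstRowPowers * M = Mᵀ * M.firstRowPowers := calc
  M.firstRowPowers * M = (M.firstRowPowers * M)ᵀ := by
    ext i j
    simp only [transpose_apply, hM.firstRowPowers_mul_apply]
    ring_nf
  _ = Mᵀ * M.firstRowPowers := by rw [transpose_mul, hM.transpose_firstRowPowers]

end IsCompanion

end Matrix

/-- **Change of basis for the companion matrix.** Let `M` be the state-change matrix of a
Galois LFSR (subdiagonal of 1's and last column `p`), and let `C` be the matrix whose `i`-th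
row is the first row of `M ^ i`. Then `C` is symmetric, `C * M = Mᵀ * C`, and the first row
of `C` is the standard basis vector. -/
theorem stmt9 (K : Type*) [Field K] (ℓ : ℕ) (hℓ : 0 < ℓ) (p : Fin ℓ → K)
    (M C : Matrix (Fin ℓ) (Fin ℓ) K)
    (hM : ∀ i j : Fin ℓ, M i j =
      (if (i : ℕ) = (j : ℕ) + 1 then 1 else 0) + (if (j : ℕ) = ℓ - 1 then p i else 0))
    (hC : ∀ i j : Fin ℓ, C i j = (M ^ (i : ℕ)) ⟨0, hℓ⟩ j) :
    C.transpose = C ∧ C * M = M.transpose * C ∧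
      (∀ j : Fin ℓ, C ⟨0, hℓ⟩ j = if j = ⟨0, hℓ⟩ then 1 else 0) := by
  obtain ⟨n, rfl⟩ : ∃ n, ℓ = n + 1 := ⟨ℓ - 1, by omega⟩
  simp only [Fin.mk_zero] at hC ⊢
  obtain rfl : C = M.firstRowPowers := by ext i j; exact hC i j
  have hCompanion : M.IsCompanion := by
    intro j
    ext r
    simp [hM, j.isLt.ne, Pi.single_apply, Fin.ext_iff]
  refine ⟨hCompanion.transpose_firstRowPowers, hCompanion.firstRowPowers_mul, fun j ↦ ?_⟩
  show (M ^ 0) 0 j = _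
  rw [pow_zero, one_apply]
  simp only [eq_comm]
  congr
end

section
/- (Product colouring theorem.) Fix ℓ ≥ 1 and let q₁, q₂, k₁, k₂ ≥ 1. If there exists an ℓ-valid (q₁,k₁)-colouring of n₁ eBugs and an ℓ-valid (q₂,k₂)-colouring of n₂ eBugs, then there exists an ℓ-valid (q₁·q₂, lcm(k₁,k₂))-colouring of gcd(k₁,k₂)·n₁·n₂ eBugs. Consequently E(q₁q₂, lcm(k₁,k₂), ℓ) ≥ gcd(k₁,k₂) · E(q₁,k₁,ℓ) · E(q₂,k₂,ℓ). -/
lemma ebug_arith (k₁ k₂ : ℕ) (hk₁ : 1 ≤ k₁) (hk₂ : 1 ≤ k₂)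
    (d d' : Fin (Nat.gcd k₁ k₂)) (j j' : ZMod (Nat.lcm k₁ k₂))
    (h1 : ZMod.castHom (Nat.dvd_lcm_left k₁ k₂) (ZMod k₁) j
        = ZMod.castHom (Nat.dvd_lcm_left k₁ k₂) (ZMod k₁) j')
    (h2 : ZMod.castHom (Nat.dvd_lcm_right k₁ k₂) (ZMod k₂) j + ((d : ℕ) : ZMod k₂)
        = ZMod.castHom (Nat.dvd_lcm_right k₁ k₂) (ZMod k₂) j' + ((d' : ℕ) : ZMod k₂)) :
    d = d' ∧ j = j' := by
  have hL : 0 < Nat.lcm k₁ k₂ := Nat.lcm_pos hk₁ hk₂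
  haveI : NeZero (Nat.lcm k₁ k₂) := ⟨hL.ne'⟩
  obtain ⟨a, rfl⟩ : ∃ a : ℤ, (a : ZMod (Nat.lcm k₁ k₂)) = j := ⟨j.val, by simp⟩
  obtain ⟨b, rfl⟩ : ∃ b : ℤ, (b : ZMod (Nat.lcm k₁ k₂)) = j' := ⟨j'.val, by simp⟩
  simp only [map_intCast] at h1 h2
  have hd1 : (k₁ : ℤ) ∣ b - a := by
    rw [ZMod.intCast_eq_intCast_iff] at h1
    exact Int.ModEq.dvd h1
  have h2' : ((a + (d : ℕ) : ℤ) : ZMod k₂) = ((b + (d' : ℕ) : ℤ) : ZMod k₂) := by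
    push_cast
    push_cast at h2
    exact h2
  have hd2 : (k₂ : ℤ) ∣ (b + (d' : ℕ)) - (a + (d : ℕ)) := by
    rw [ZMod.intCast_eq_intCast_iff] at h2'
    exact Int.ModEq.dvd h2'
  have hg1 : ((Nat.gcd k₁ k₂ : ℕ) : ℤ) ∣ (k₁ : ℤ) := Int.natCast_dvd_natCast.2 (Nat.gcd_dvd_left _ _)
  have hg2 : ((Nat.gcd k₁ k₂ : ℕ) : ℤ) ∣ (k₂ : ℤ) := Int.natCast_dvd_natCast.2 (Nat.gcd_dvd_right _ _)
  have hgd : ((Nat.gcd k₁ k₂ : ℕ) : ℤ) ∣ ((d' : ℕ) : ℤ) - ((d : ℕ) : ℤ) := by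
    have h3 : ((Nat.gcd k₁ k₂ : ℕ) : ℤ) ∣ (b + (d' : ℕ)) - (a + (d : ℕ)) := hg2.trans hd2
    have h4 : ((Nat.gcd k₁ k₂ : ℕ) : ℤ) ∣ b - a := hg1.trans hd1
    have : ((d' : ℕ) : ℤ) - ((d : ℕ) : ℤ) = ((b + (d' : ℕ)) - (a + (d : ℕ))) - (b - a) := by ring
    rw [this]
    exact dvd_sub h3 h4
  have hdd : ((d' : ℕ) : ℤ) - ((d : ℕ) : ℤ) = 0 := by
    refine Int.eq_zero_of_abs_lt_dvd hgd ?_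
    have h5 : ((d' : ℕ) : ℤ) < ((Nat.gcd k₁ k₂ : ℕ) : ℤ) := by exact_mod_cast d'.2
    have h6 : ((d : ℕ) : ℤ) < ((Nat.gcd k₁ k₂ : ℕ) : ℤ) := by exact_mod_cast d.2
    have h7 : (0 : ℤ) ≤ (d : ℕ) := Int.natCast_nonneg _
    have h8 : (0 : ℤ) ≤ (d' : ℕ) := Int.natCast_nonneg _
    rw [abs_sub_lt_iff]
    omega
  have hdeq : d = d' := by
    have : ((d : ℕ) : ℤ) = ((d' : ℕ) : ℤ) := by omega
    exact Fin.ext (by exact_mod_cast this)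
  refine ⟨hdeq, ?_⟩
  have hd2' : (k₂ : ℤ) ∣ b - a := by
    have : b - a = (b + (d' : ℕ)) - (a + (d : ℕ)) - (((d' : ℕ) : ℤ) - ((d : ℕ) : ℤ)) := by ring
    rw [this, hdd]
    simpa using hd2
  have : (Nat.lcm k₁ k₂ : ℤ) ∣ b - a := by
    have := Int.coe_lcm_dvd hd1 hd2'
    simpa [Int.lcm, Int.natAbs_natCast] using this
  rw [ZMod.intCast_eq_intCast_iff]
  exact Int.modEq_iff_dvd.mpr this

lemma ebug_key (q₁ q₂ k₁ k₂ ℓ n₁ n₂ : ℕ) (hk₁ : 1 ≤ k₁) (hk₂ : 1 ≤ k₂)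
    (h₁ : ∃ c : Fin n₁ → ZMod k₁ → Fin q₁, ebugValid q₁ k₁ ℓ n₁ c)
    (h₂ : ∃ c : Fin n₂ → ZMod k₂ → Fin q₂, ebugValid q₂ k₂ ℓ n₂ c) :
    ∃ c : Fin (Nat.gcd k₁ k₂ * n₁ * n₂) → ZMod (Nat.lcm k₁ k₂) → Fin (q₁ * q₂),
      ebugValid (q₁ * q₂) (Nat.lcm k₁ k₂) ℓ (Nat.gcd k₁ k₂ * n₁ * n₂) c := by
  obtain ⟨c₁, hc₁⟩ := h₁
  obtain ⟨c₂, hc₂⟩ := h₂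
  set g := Nat.gcd k₁ k₂ with hg
  set L := Nat.lcm k₁ k₂ with hL
  let e : Fin (g * n₁ * n₂) ≃ (Fin g × Fin n₁) × Fin n₂ :=
    finProdFinEquiv.symm.trans (finProdFinEquiv.symm.prodCongr (Equiv.refl (Fin n₂)))
  let φ₁ : ZMod L →+* ZMod k₁ := ZMod.castHom (Nat.dvd_lcm_left k₁ k₂) (ZMod k₁)
  let φ₂ : ZMod L →+* ZMod k₂ := ZMod.castHom (Nat.dvd_lcm_right k₁ k₂) (ZMod k₂)
  refine ⟨fun x j => finProdFinEquiv
      (c₁ (e x).1.2 (φ₁ j), c₂ (e x).2 (φ₂ j + ((((e x).1.1 : ℕ)) : ZMod k₂))), ?_⟩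
  intro p p' h
  simp only at h
  have hcomp : ∀ s : Fin ℓ,
      (c₁ (e p.1).1.2 (φ₁ p.2 + (s : ℕ)),
        c₂ (e p.1).2 (φ₂ p.2 + (((e p.1).1.1 : ℕ) : ZMod k₂) + (s : ℕ)))
      = (c₁ (e p'.1).1.2 (φ₁ p'.2 + (s : ℕ)),
        c₂ (e p'.1).2 (φ₂ p'.2 + (((e p'.1).1.1 : ℕ) : ZMod k₂) + (s : ℕ))) := by
    intro s
    have := congrFun h s
    have h' := finProdFinEquiv.injective this
    have e1 : φ₁ (p.2 + (s : ℕ)) = φ₁ p.2 + (s : ℕ) := by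
      rw [map_add, map_natCast]
    have e2 : φ₂ (p.2 + (s : ℕ)) = φ₂ p.2 + (s : ℕ) := by
      rw [map_add, map_natCast]
    have e1' : φ₁ (p'.2 + (s : ℕ)) = φ₁ p'.2 + (s : ℕ) := by
      rw [map_add, map_natCast]
    have e2' : φ₂ (p'.2 + (s : ℕ)) = φ₂ p'.2 + (s : ℕ) := by
      rw [map_add, map_natCast]
    rw [e1, e2, e1', e2'] at h'
    rw [Prod.ext_iff] at h' ⊢
    constructor
    · exact h'.1
    · convert h'.2 using 3 <;> ring
  have H1 : ((e p.1).1.2, φ₁ p.2) = ((e p'.1).1.2, φ₁ p'.2) := by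
    apply hc₁
    funext s
    exact congrArg Prod.fst (hcomp s)
  have H2 : ((e p.1).2, φ₂ p.2 + (((e p.1).1.1 : ℕ) : ZMod k₂))
      = ((e p'.1).2, φ₂ p'.2 + (((e p'.1).1.1 : ℕ) : ZMod k₂)) := by
    apply hc₂
    funext s
    exact congrArg Prod.snd (hcomp s)
  rw [Prod.ext_iff] at H1 H2
  obtain ⟨hd, hj⟩ := ebug_arith k₁ k₂ hk₁ hk₂ (e p.1).1.1 (e p'.1).1.1 p.2 p'.2 H1.2 H2.2
  have hx : p.1 = p'.1 := e.injective (Prod.ext (Prod.ext hd H1.1) H2.1)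
  exact Prod.ext hx hj

lemma ebug_zero_mem (q k ℓ : ℕ) :
    0 ∈ {n : ℕ | ∃ c : Fin n → ZMod k → Fin q, ebugValid q k ℓ n c} :=
  ⟨fun i _ => i.elim0, fun p => p.1.elim0⟩

lemma ebug_bdd (q k ℓ : ℕ) (hk : 1 ≤ k) :
    BddAbove {n : ℕ | ∃ c : Fin n → ZMod k → Fin q, ebugValid q k ℓ n c} := by
  haveI : NeZero k := ⟨by omega⟩
  refine ⟨q ^ ℓ, fun n hn => ?_⟩
  obtain ⟨c, hc⟩ := hn
  have hcard : Fintype.card (Fin n × ZMod k) ≤ Fintype.card (Fin ℓ → Fin q) :=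
    Fintype.card_le_of_injective _ hc
  simp only [Fintype.card_prod, Fintype.card_fin, ZMod.card, Fintype.card_fun] at hcard
  calc n ≤ n * k := Nat.le_mul_of_pos_right n hk
    _ ≤ q ^ ℓ := hcard

theorem stmt10 (q₁ q₂ k₁ k₂ ℓ n₁ n₂ : ℕ) (hℓ : 1 ≤ ℓ)
    (hq₁ : 1 ≤ q₁) (hq₂ : 1 ≤ q₂) (hk₁ : 1 ≤ k₁) (hk₂ : 1 ≤ k₂)
    (h₁ : ∃ c : Fin n₁ → ZMod k₁ → Fin q₁, ebugValid q₁ k₁ ℓ n₁ c)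
    (h₂ : ∃ c : Fin n₂ → ZMod k₂ → Fin q₂, ebugValid q₂ k₂ ℓ n₂ c) :
    (∃ c : Fin (Nat.gcd k₁ k₂ * n₁ * n₂) → ZMod (Nat.lcm k₁ k₂) → Fin (q₁ * q₂),
      ebugValid (q₁ * q₂) (Nat.lcm k₁ k₂) ℓ (Nat.gcd k₁ k₂ * n₁ * n₂) c) ∧
    Nat.gcd k₁ k₂ * eBugNumber q₁ k₁ ℓ * eBugNumber q₂ k₂ ℓ ≤
      eBugNumber (q₁ * q₂) (Nat.lcm k₁ k₂) ℓ := by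
  refine ⟨ebug_key q₁ q₂ k₁ k₂ ℓ n₁ n₂ hk₁ hk₂ h₁ h₂, ?_⟩
  have hE₁ : eBugNumber q₁ k₁ ℓ ∈
      {n : ℕ | ∃ c : Fin n → ZMod k₁ → Fin q₁, ebugValid q₁ k₁ ℓ n c} :=
    Nat.sSup_mem ⟨0, ebug_zero_mem q₁ k₁ ℓ⟩ (ebug_bdd q₁ k₁ ℓ hk₁)
  have hE₂ : eBugNumber q₂ k₂ ℓ ∈
      {n : ℕ | ∃ c : Fin n → ZMod k₂ → Fin q₂, ebugValid q₂ k₂ ℓ n c} :=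
    Nat.sSup_mem ⟨0, ebug_zero_mem q₂ k₂ ℓ⟩ (ebug_bdd q₂ k₂ ℓ hk₂)
  have key := ebug_key q₁ q₂ k₁ k₂ ℓ (eBugNumber q₁ k₁ ℓ) (eBugNumber q₂ k₂ ℓ) hk₁ hk₂ hE₁ hE₂
  exact le_csSup (ebug_bdd (q₁ * q₂) (Nat.lcm k₁ k₂) ℓ (Nat.lcm_pos hk₁ hk₂)) key
end

section
/- (Pair interleaving theorem.) Let q, k, ℓ, n ≥ 1 be integers. If there exists an ℓ-valid (q,k)-colouring of n eBugs, then there exists a (2ℓ)-valid (q, 2k)-colouring of ⌊k/2⌋·n² eBugs. Consequently E(q, 2k, 2ℓ) ≥ ⌊k/2⌋ · E(q,k,ℓ)². -/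
/-!
Given an `ℓ`-valid colouring `c`, build a bug of length `2k` for every pair of bugs `a, b` and
every offset `t < ⌊k/2⌋`: its even LEDs run once around `a`, its odd LEDs once around `b`, the
latter shifted by `t + 1`. A window of length `2ℓ` splits into its even and odd halves, which are
`ℓ`-windows of `c`; by validity of `c` they determine the two bugs and their positions. The
difference of these positions is `t + 1` for a window starting at an even LED and `-t` for one
starting at an odd LED. Since `0 ≤ t, t' < ⌊k/2⌋`, the values `t + 1` and `-t'` never agree mod
`k`, so the parity of the starting LED and then `t` are determined too.
-/

open Function

def windowMap {ι α : Type*} {k : ℕ} (c : ι → ZMod k → α) (ℓ : ℕ) : ι × ZMod k → Fin ℓ → α :=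
  fun p s => c p.1 (p.2 + (s : ℕ))

lemma exists_ebugValid_of_injective_windowMap {ι : Type*} [Fintype ι] {q k ℓ n : ℕ}
    (hn : Fintype.card ι = n) (c : ι → ZMod k → Fin q) (hc : Injective (windowMap c ℓ)) :
    ∃ d : Fin n → ZMod k → Fin q, ebugValid q k ℓ n d := by
  subst hn
  exact ⟨c ∘ (Fintype.equivFin ι).symm,
    hc.comp ((Fintype.equivFin ι).symm.injective.prodMap injective_id)⟩

lemma Function.Periodic.apply_val_add_natCast {α : Type*} {N : ℕ} [NeZero N] {f : ℕ → α}
    (hf : Periodic f N) (m : ZMod N) (s : ℕ) : f (m + s).val = f (m.val + s) := by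
  rw [ZMod.val_add, ZMod.val_natCast, Nat.add_mod_mod, hf.map_mod_nat]

section Interleaving

variable {ι : Type*} {k : ℕ}

/-- LED `r` of the bug interleaving `a` and `b` with offset `t` shows the colour of this LED of
the original colouring. -/
def interleavedLed (k t : ℕ) (a b : ι) (r : ℕ) : ι × ZMod k :=
  if r % 2 = 0 then (a, ((r / 2 : ℕ) : ZMod k)) else (b, ((r / 2 : ℕ) : ZMod k) + t + 1)

variable {t : ℕ} {a b : ι}

@[simp]
lemma interleavedLed_two_mul (j : ℕ) : interleavedLed k t a b (2 * j) = (a, (j : ZMod k)) := by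
  simp [interleavedLed]

@[simp]
lemma interleavedLed_two_mul_add_one (j : ℕ) :
    interleavedLed k t a b (2 * j + 1) = (b, (j : ZMod k) + t + 1) := by
  simp [interleavedLed, Nat.add_mod, Nat.add_div]

@[simp]
lemma interleavedLed_two_mul_add_one_add_one (j : ℕ) :
    interleavedLed k t a b (2 * j + 1 + 1) = (a, (j : ZMod k) + 1) := by
  rw [show 2 * j + 1 + 1 = 2 * (j + 1) by ring, interleavedLed_two_mul]
  push_cast
  rfl

lemma interleavedLed_add_two_mul (r u : ℕ) :
    interleavedLed k t a b (r + 2 * u) =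
      ((interleavedLed k t a b r).1, (interleavedLed k t a b r).2 + u) := by
  obtain ⟨j, rfl | rfl⟩ := Nat.even_or_odd' r
  · rw [← mul_add, interleavedLed_two_mul, interleavedLed_two_mul]
    push_cast
    rfl
  · rw [show 2 * j + 1 + 2 * u = 2 * (j + u) + 1 by ring, interleavedLed_two_mul_add_one,
      interleavedLed_two_mul_add_one]
    simp only [Prod.mk.injEq, true_and]
    push_cast
    ring

lemma windowMap_interleavedLed {α : Type*} {ℓ : ℕ} (c : ι → ZMod k → α) (r : ℕ) (u : Fin ℓ) :
    windowMap c ℓ (interleavedLed k t a b r) u =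
      uncurry c (interleavedLed k t a b (r + 2 * u)) := by
  rw [interleavedLed_add_two_mul]
  rfl

lemma interleavedLed_periodic : Periodic (interleavedLed k t a b) (2 * k) := fun r => by
  rw [interleavedLed_add_two_mul, ZMod.natCast_self, add_zero]

lemma interleavedLed_injective {t' : ℕ} {a' b' : ι} (ht : t < k / 2) (ht' : t' < k / 2)
    {r r' : ℕ} (hr : r < 2 * k) (hr' : r' < 2 * k)
    (h₀ : interleavedLed k t a b r = interleavedLed k t' a' b' r')
    (h₁ : interleavedLed k t a b (r + 1) = interleavedLed k t' a' b' (r' + 1)) :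
    t = t' ∧ a = a' ∧ b = b' ∧ r = r' := by
  have cancel (x : ℤ) (hx : (x : ZMod k) = 0) (hlo : -k < x) (hhi : x < k) : x = 0 :=
    Int.eq_zero_of_abs_lt_dvd ((ZMod.intCast_zmod_eq_zero_iff_dvd x k).1 hx) (abs_lt.2 ⟨hlo, hhi⟩)
  obtain ⟨j, rfl | rfl⟩ := Nat.even_or_odd' r <;>
    obtain ⟨j', rfl | rfl⟩ := Nat.even_or_odd' r' <;>
    simp only [interleavedLed_two_mul, interleavedLed_two_mul_add_one,
      interleavedLed_two_mul_add_one_add_one, Prod.mk.injEq] at h₀ h₁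
  · have hj := cancel (j - j') (by push_cast; linear_combination h₀.2) (by omega) (by omega)
    have htt := cancel (t - t') (by push_cast; linear_combination h₁.2 - h₀.2) (by omega) (by omega)
    exact ⟨by omega, h₀.1, h₁.1, by omega⟩
  · have := cancel (t + t' + 1) (by push_cast; linear_combination h₁.2 - h₀.2) (by omega) (by omega)
    omega
  · have := cancel (t + t' + 1) (by push_cast; linear_combination h₀.2 - h₁.2) (by omega) (by omega)
    omega
  · have hj := cancel (j - j') (by push_cast; linear_combination h₁.2) (by omega) (by omega)
    have htt := cancel (t - t') (by push_cast; linear_combination h₀.2 - h₁.2) (by omega) (by omega)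
    exact ⟨by omega, h₁.1, h₀.1, by omega⟩

def pairInterleaving {α : Type*} (c : ι → ZMod k → α) (x : Fin (k / 2) × ι × ι)
    (m : ZMod (2 * k)) : α :=
  uncurry c (interleavedLed k x.1 x.2.1 x.2.2 m.val)

lemma pairInterleaving_add_natCast [NeZero k] {α : Type*} (c : ι → ZMod k → α)
    (x : Fin (k / 2) × ι × ι) (m : ZMod (2 * k)) (s : ℕ) :
    pairInterleaving c x (m + s) = uncurry c (interleavedLed k x.1 x.2.1 x.2.2 (m.val + s)) := by
  rw [pairInterleaving, interleavedLed_periodic.apply_val_add_natCast]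

lemma injective_windowMap_pairInterleaving [NeZero k] {α : Type*} {ℓ : ℕ} {c : ι → ZMod k → α}
    (hc : Injective (windowMap c ℓ)) : Injective (windowMap (pairInterleaving c) (2 * ℓ)) := by
  rintro ⟨⟨t, a, b⟩, m⟩ ⟨⟨t', a', b'⟩, m'⟩ h
  have hwindow (i : ℕ) (u : Fin ℓ) (hi : i < 2) :
      windowMap c ℓ (interleavedLed k t a b (m.val + i)) u =
        windowMap c ℓ (interleavedLed k t' a' b' (m'.val + i)) u := by
    have hpos (r : ℕ) : r + i + 2 * u = r + (2 * u + i) := by omega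
    rw [windowMap_interleavedLed, windowMap_interleavedLed, hpos, hpos]
    simpa only [windowMap, pairInterleaving_add_natCast] using congrFun h ⟨2 * u + i, by omega⟩
  obtain ⟨htt, rfl, rfl, hm⟩ := interleavedLed_injective t.2 t'.2 (ZMod.val_lt m) (ZMod.val_lt m')
    (hc (funext fun u => hwindow 0 u (by omega))) (hc (funext fun u => hwindow 1 u (by omega)))
  rw [Fin.ext htt, ZMod.val_injective _ hm]

end Interleaving

lemma exists_ebugValid_pairInterleaving {q k ℓ n : ℕ} [NeZero k]
    (h : ∃ c : Fin n → ZMod k → Fin q, ebugValid q k ℓ n c) :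
    ∃ d : Fin (k / 2 * n ^ 2) → ZMod (2 * k) → Fin q,
      ebugValid q (2 * k) (2 * ℓ) (k / 2 * n ^ 2) d := by
  obtain ⟨c, hc⟩ := h
  exact exists_ebugValid_of_injective_windowMap (by simp [sq]) _
    (injective_windowMap_pairInterleaving hc)

lemma bddAbove_ebugValid (q k ℓ : ℕ) [NeZero k] :
    BddAbove {n : ℕ | ∃ c : Fin n → ZMod k → Fin q, ebugValid q k ℓ n c} := by
  refine ⟨q ^ ℓ, fun n ⟨c, hc⟩ => ?_⟩
  have hcard := Fintype.card_le_of_injective _ hc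
  simp only [Fintype.card_prod, Fintype.card_fin, ZMod.card, Fintype.card_fun] at hcard
  exact (Nat.le_mul_of_pos_right n (NeZero.pos k)).trans hcard

theorem stmt13_general (q k ℓ n : ℕ) (hk : 1 ≤ k)
    (h : ∃ c : Fin n → ZMod k → Fin q, ebugValid q k ℓ n c) :
    (∃ c : Fin (k / 2 * n ^ 2) → ZMod (2 * k) → Fin q,
      ebugValid q (2 * k) (2 * ℓ) (k / 2 * n ^ 2) c) ∧
    k / 2 * eBugNumber q k ℓ ^ 2 ≤ eBugNumber q (2 * k) (2 * ℓ) := by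
  have : NeZero k := ⟨by omega⟩
  refine ⟨exists_ebugValid_pairInterleaving h, le_csSup (bddAbove_ebugValid _ _ _) ?_⟩
  exact exists_ebugValid_pairInterleaving (Nat.sSup_mem ⟨n, h⟩ (bddAbove_ebugValid q k ℓ))

theorem stmt13 (q k ℓ n : ℕ) (hq : 1 ≤ q) (hk : 1 ≤ k) (hℓ : 1 ≤ ℓ) (hn : 1 ≤ n)
    (h : ∃ c : Fin n → ZMod k → Fin q, ebugValid q k ℓ n c) :
    (∃ c : Fin (k / 2 * n ^ 2) → ZMod (2 * k) → Fin q,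
      ebugValid q (2 * k) (2 * ℓ) (k / 2 * n ^ 2) c) ∧
    k / 2 * eBugNumber q k ℓ ^ 2 ≤ eBugNumber q (2 * k) (2 * ℓ) :=
  stmt13_general q k ℓ n hk h
end

section
/- Let q ≥ 2, ℓ ≥ 1 and t ≥ 1 be integers such that every prime factor of t divides q. Then t · E(q, t·q^ℓ, t·ℓ) = q^{(t−1)·ℓ}; that is, the maximum number of eBugs with t·q^ℓ LEDs in q colours admitting a (t·ℓ)-valid colouring is exactly q^{(t−1)ℓ}/t. -/
/-!
Let `D` be a de Bruijn sequence of order `ℓ` over `q` colours, of period `Q = q ^ ℓ`, and call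
`f : ZMod (t * Q) → ZMod Q` a staircase if `f (j + t) = f j + 1`. The `(t * ℓ)`-window of `D ∘ f`
at `j` interleaves the `ℓ`-windows of `D` at `f j, …, f (j + t - 1)`, so it determines the
staircase `f (· + j)`. Because every prime factor of `t` divides `q`, translation acts freely on
the `Q ^ t` staircases; colouring one eBug by `D ∘ f` for each orbit therefore gives
`Q ^ t / (t * Q)` eBugs with pairwise distinct windows, which is all the `q ^ (t * ℓ)` words
allow.

De Bruijn sequences exist for every `q`: for `q = p ^ e`, read off `ψ (α ^ j)` for a primitive
element `α` of `GF(p ^ (e * ℓ))` in blocks of `e` coordinates and insert the missing zero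
window; composite `q` follow by the Chinese remainder theorem.
-/

open Function Module
open scoped AddConstMap

def window (ℓ : ℕ) {M : ℕ} {A : Type*} (D : ZMod M → A) (j : ZMod M) : Fin ℓ → A :=
  fun s => D (j + (s : ℕ))

theorem exists_window_injective_prod {A B : Type*} {M₁ M₂ ℓ : ℕ} (h : M₁.Coprime M₂)
    {D₁ : ZMod M₁ → A} {D₂ : ZMod M₂ → B}
    (hD₁ : Injective (window ℓ D₁)) (hD₂ : Injective (window ℓ D₂)) :
    ∃ D : ZMod (M₁ * M₂) → A × B, Injective (window ℓ D) := by
  let e := ZMod.chineseRemainder h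
  refine ⟨fun x => (D₁ (e x).1, D₂ (e x).2), fun x x' hxx' => e.injective ?_⟩
  have hwin (i : Fin ℓ) := congrFun hxx' i
  simp only [window, map_add, map_natCast, Prod.fst_add, Prod.snd_add, Prod.fst_natCast,
    Prod.snd_natCast, Prod.mk.injEq] at hwin
  exact Prod.ext (hD₁ (funext fun i => (hwin i).1)) (hD₂ (funext fun i => (hwin i).2))

section FiniteField

variable {F K : Type*} [Field F] [Field K] [Algebra F K]

theorem Algebra.adjoin_singleton_eq_top_of_forall_eq_pow {α : K}
    (hα : ∀ x : K, x ≠ 0 → ∃ n : ℕ, α ^ n = x) : Algebra.adjoin F {α} = ⊤ := by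
  refine Algebra.eq_top_iff.2 fun x => ?_
  rcases eq_or_ne x 0 with rfl | hx
  · exact Subalgebra.zero_mem _
  obtain ⟨n, rfl⟩ := hα x hx
  exact Subalgebra.pow_mem _ (Algebra.self_mem_adjoin_singleton F α) n

theorem PowerBasis.eq_zero_of_forall_apply_pow_mul (pb : PowerBasis F K) {ψ : K →ₗ[F] F}
    (hψ : ψ 1 ≠ 0) {x : K} (h : ∀ i < pb.dim, ψ (pb.gen ^ i * x) = 0) : x = 0 := by
  by_contra hx
  have hvanish : ψ ∘ₗ LinearMap.mulRight F x = 0 :=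
    pb.basis.ext fun i => by simpa using h i i.isLt
  apply hψ
  simpa [inv_mul_cancel₀ hx] using LinearMap.congr_fun hvanish x⁻¹

/-- The window of `y` at `j` lists `ψ (pb.gen ^ u * g j)` for all `u = s + ℓ * i < e * ℓ`, and
these values determine `g j`. -/
theorem PowerBasis.exists_window_injective_ne_zero (pb : PowerBasis F K) {e ℓ M : ℕ}
    (hdim : pb.dim = e * ℓ) {g : ZMod M → K} (hg : Injective g) (hg₀ : ∀ j, g j ≠ 0)
    (hg_add : ∀ j (s : ℕ), g (j + s) = g j * pb.gen ^ s) :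
    ∃ y : ZMod M → Fin e → F, Injective (window ℓ y) ∧ ∀ j, window ℓ y j ≠ 0 := by
  let ψ := pb.basis.coord ⟨0, pb.dim_pos⟩
  have hψ : ψ 1 ≠ 0 := by
    have h1 : pb.basis ⟨0, pb.dim_pos⟩ = 1 := by rw [pb.coe_basis]; exact pow_zero _
    rw [← h1, Basis.coord_apply, Basis.repr_self, Finsupp.single_eq_same]
    exact one_ne_zero
  let y : ZMod M → Fin e → F := fun j i => ψ (pb.gen ^ (ℓ * i) * g j)
  have hy (j : ZMod M) {u : ℕ} (hu : u < pb.dim) :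
      ψ (pb.gen ^ u * g j) = window ℓ y j
        ⟨u % ℓ, Nat.mod_lt _ (Nat.pos_of_ne_zero (by rintro rfl; simp [hdim] at hu))⟩
        ⟨u / ℓ, Nat.div_lt_of_lt_mul (by rwa [hdim, mul_comm] at hu)⟩ := by
    simp only [window, y, hg_add]
    rw [← mul_assoc, mul_right_comm, ← pow_add, Nat.div_add_mod]
  refine ⟨y, fun j j' hjj' => hg ?_, fun j hj => hg₀ j ?_⟩
  · refine sub_eq_zero.1 (pb.eq_zero_of_forall_apply_pow_mul hψ fun u hu => ?_)
    rw [mul_sub, map_sub, hy j hu, hy j' hu, hjj', sub_self]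
  · exact pb.eq_zero_of_forall_apply_pow_mul hψ fun u hu => by rw [hy j hu, hj]; rfl

theorem FiniteField.exists_window_injective_ne_zero [Finite K] {e ℓ : ℕ}
    (hK : finrank F K = e * ℓ) :
    ∃ y : ZMod (Nat.card Kˣ) → Fin e → F, Injective (window ℓ y) ∧ ∀ j, window ℓ y j ≠ 0 := by
  have : NeZero (Nat.card Kˣ) := ⟨Nat.card_pos.ne'⟩
  let φ := zmodCyclicMulEquiv (inferInstance : IsCyclic Kˣ)
  let g : ZMod (Nat.card Kˣ) → K := fun j => (φ (.ofAdd j) : K)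
  have hg_add (j : ZMod (Nat.card Kˣ)) (s : ℕ) : g (j + s) = g j * g 1 ^ s := by
    simp only [g, ofAdd_add, map_mul, Units.val_mul, ← Units.val_pow_eq_pow_val, ← map_pow,
      ← ofAdd_nsmul, nsmul_one]
  have hadj : Algebra.adjoin F {g 1} = ⊤ := by
    refine Algebra.adjoin_singleton_eq_top_of_forall_eq_pow fun x hx => ?_
    obtain ⟨j, hj⟩ := φ.surjective (Units.mk0 x hx)
    refine ⟨j.toAdd.val, ?_⟩
    have h := hg_add 0 j.toAdd.val
    rw [zero_add, ZMod.natCast_zmod_val] at h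
    simpa [g, hj] using h.symm
  have : Module.Finite F K := Module.Finite.of_finite
  let pb := PowerBasis.ofAdjoinEqTop (Algebra.IsIntegral.isIntegral (g 1)) hadj
  exact pb.exists_window_injective_ne_zero (pb.finrank ▸ hK)
    (Units.val_injective.comp (φ.injective.comp Multiplicative.ofAdd.injective))
    (fun j => Units.ne_zero _) hg_add

end FiniteField

def cyclicCons {A : Type*} {m : ℕ} (a : A) (y : ZMod m → A) (x : ZMod (m + 1)) : A :=
  if x.val = 0 then a else y (x.val - 1 : ℕ)

section cyclicCons

variable {A : Type*} {m ℓ : ℕ} {a : A} {y : ZMod m → A}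

theorem cyclicCons_natCast (n : ℕ) :
    cyclicCons a y n = if n % (m + 1) = 0 then a else y (n % (m + 1) - 1 : ℕ) := by
  simp only [cyclicCons, ZMod.val_natCast]

theorem window_cyclicCons_zero (hrun : ∀ s : ℕ, s + 1 < ℓ → y s = a) :
    window ℓ (cyclicCons a y) 0 = fun _ => a := by
  funext s
  rw [window, zero_add, cyclicCons_natCast]
  split_ifs
  · rfl
  · exact hrun _ (by have := Nat.mod_le s (m + 1); omega)

theorem window_cyclicCons_of_ne_zero (hrun : ∀ s : ℕ, s + 1 < ℓ → y s = a) {x : ZMod (m + 1)}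
    (hx : x ≠ 0) : window ℓ (cyclicCons a y) x = window ℓ y (x.val - 1 : ℕ) := by
  funext s
  obtain ⟨k, hk⟩ : ∃ k, x.val = k + 1 :=
    ⟨x.val - 1, by have := (ZMod.val_ne_zero x).2 hx; omega⟩
  have hkm : k < m := by have := ZMod.val_lt x; omega
  have hs := s.isLt
  have hcast : x + ((s : ℕ) : ZMod (m + 1)) = ((k + 1 + s : ℕ) : ZMod (m + 1)) := by
    rw [← hk]
    simp
  rw [window, window, hcast, cyclicCons_natCast, hk, Nat.add_sub_cancel, ← Nat.cast_add]
  rcases lt_or_ge (k + s) m with h | h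
  · rw [Nat.mod_eq_of_lt (by omega), if_neg (by omega)]
    congr 2
    omega
  · -- past the wrap-around both windows read inside the run of `a`s
    have hl : (k + 1 + s) % (m + 1) ≤ k + s - m :=
      (Nat.mod_eq_sub_mod (by omega)).trans_le ((Nat.mod_le _ _).trans (by omega))
    have hr : (k + s) % m ≤ k + s - m := (Nat.mod_eq_sub_mod h).trans_le (Nat.mod_le _ _)
    rw [← ZMod.natCast_mod (k + s) m, hrun ((k + s) % m) (by omega)]
    split_ifs
    · rfl
    · exact hrun _ (by omega)

theorem window_cyclicCons_injective (hy : Injective (window ℓ y))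
    (hya : ∀ j, window ℓ y j ≠ fun _ => a) (hrun : ∀ s : ℕ, s + 1 < ℓ → y s = a) :
    Injective (window ℓ (cyclicCons a y)) := by
  intro x x' h
  rcases eq_or_ne x 0 with rfl | hx <;> rcases eq_or_ne x' 0 with rfl | hx'
  · rfl
  · rw [window_cyclicCons_zero hrun, window_cyclicCons_of_ne_zero hrun hx'] at h
    exact absurd h.symm (hya _)
  · rw [window_cyclicCons_zero hrun, window_cyclicCons_of_ne_zero hrun hx] at h
    exact absurd h (hya _)
  · rw [window_cyclicCons_of_ne_zero hrun hx, window_cyclicCons_of_ne_zero hrun hx'] at h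
    have hval := congrArg ZMod.val (hy h)
    have := (ZMod.val_ne_zero x).2 hx
    have := (ZMod.val_ne_zero x').2 hx'
    have := ZMod.val_lt x
    have := ZMod.val_lt x'
    rw [ZMod.val_cast_of_lt (by omega), ZMod.val_cast_of_lt (by omega)] at hval
    exact ZMod.val_injective _ (by omega)

theorem exists_window_eq [Fintype A] [NeZero m] (hm : m + 1 = Fintype.card A ^ ℓ)
    (hy : Injective (window ℓ y)) (hya : ∀ j, window ℓ y j ≠ fun _ => a) {w : Fin ℓ → A}
    (hw : w ≠ fun _ => a) : ∃ j, window ℓ y j = w := by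
  classical
  let f : ZMod m → {w : Fin ℓ → A // w ≠ fun _ => a} := fun j => ⟨window ℓ y j, hya j⟩
  have hf : Bijective f := by
    refine (Fintype.bijective_iff_injective_and_card f).2
      ⟨fun j j' h => hy (congrArg Subtype.val h), ?_⟩
    simp [Fintype.card_subtype_compl, ZMod.card, ← hm]
  obtain ⟨j, hj⟩ := hf.2 ⟨w, hw⟩
  exact ⟨j, congrArg Subtype.val hj⟩

/-- Rotating `y` so that its window at `0` is `a, …, a, b` and putting `a` in front of it
creates the one missing window `a, …, a`. -/
theorem exists_window_injective_of_ne_const [Fintype A] [NeZero m]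
    (hm : m + 1 = Fintype.card A ^ ℓ) (hy : Injective (window ℓ y))
    (hya : ∀ j, window ℓ y j ≠ fun _ => a) :
    ∃ D : ZMod (m + 1) → A, Injective (window ℓ D) := by
  have hm0 := NeZero.ne m
  have hℓ : ℓ ≠ 0 := by rintro rfl; simp at hm; omega
  obtain ⟨b, hb⟩ : ∃ b, b ≠ a := Fintype.exists_ne_of_one_lt_card (by
    by_contra! h
    have := pow_le_one₀ (n := ℓ) (Nat.zero_le _) h
    omega) a
  let w : Fin ℓ → A := fun s => if (s : ℕ) + 1 < ℓ then a else b
  have hw : w ≠ fun _ => a := fun h => hb <| by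
    simpa [w, Nat.sub_add_cancel (Nat.one_le_iff_ne_zero.2 hℓ)] using congrFun h ⟨ℓ - 1, by omega⟩
  obtain ⟨j₀, hj₀⟩ := exists_window_eq hm hy hya hw
  have hrot (j : ZMod m) : window ℓ (fun j => y (j₀ + j)) j = window ℓ y (j₀ + j) := by
    funext s
    exact congrArg y (add_assoc _ _ _).symm
  refine ⟨cyclicCons a (fun j => y (j₀ + j)), window_cyclicCons_injective ?_ ?_ ?_⟩
  · intro j j' h
    rw [hrot, hrot] at h
    exact add_left_cancel (hy h)
  · intro j
    rw [hrot]
    exact hya _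
  · intro s hs
    have := congrFun hj₀ ⟨s, by omega⟩
    simp only [window, w, if_pos hs] at this
    exact this

end cyclicCons

theorem exists_window_injective_primePow {p n ℓ : ℕ} (hp : p.Prime) (hn : 0 < n) (hℓ : 0 < ℓ) :
    ∃ D : ZMod ((p ^ n) ^ ℓ) → Fin (p ^ n), Injective (window ℓ D) := by
  have : Fact p.Prime := ⟨hp⟩
  let K := GaloisField p (n * ℓ)
  have hnℓ : n * ℓ ≠ 0 := (Nat.mul_pos hn hℓ).ne'
  obtain ⟨y, hy, hy₀⟩ := FiniteField.exists_window_injective_ne_zero (GaloisField.finrank p hnℓ)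
  have : NeZero (Nat.card Kˣ) := ⟨Nat.card_pos.ne'⟩
  have hm : Nat.card Kˣ + 1 = Fintype.card (Fin n → ZMod p) ^ ℓ := by
    rw [Nat.card_units, GaloisField.card p _ hnℓ]
    simp [ZMod.card, ← pow_mul, Nat.sub_add_cancel (Nat.one_le_pow _ _ hp.pos)]
  have hD := exists_window_injective_of_ne_const hm hy hy₀
  rw [hm, Fintype.card_fun, Fintype.card_fin, ZMod.card] at hD
  obtain ⟨D, hD⟩ := hD
  let e : (Fin n → ZMod p) ≃ Fin (p ^ n) := Fintype.equivFinOfCardEq (by simp [ZMod.card])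
  exact ⟨e ∘ D, e.injective.comp_left.comp hD⟩

theorem exists_deBruijn {q ℓ : ℕ} (hq : 0 < q) (hℓ : 0 < ℓ) :
    ∃ D : ZMod (q ^ ℓ) → Fin q, Injective (window ℓ D) := by
  induction q using Nat.recOnPosPrimePosCoprime with
  | prime_pow p n hp hn => exact exists_window_injective_primePow hp hn hℓ
  | zero => exact absurd hq (lt_irrefl 0)
  | one =>
    rw [one_pow]
    exact ⟨fun _ => 0, fun _ _ _ => Subsingleton.elim _ _⟩
  | coprime a b ha hb hab iha ihb =>
    obtain ⟨Da, hDa⟩ := iha (by omega)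
    obtain ⟨Db, hDb⟩ := ihb (by omega)
    obtain ⟨D, hD⟩ := exists_window_injective_prod (Nat.Coprime.pow ℓ ℓ hab) hDa hDb
    rw [mul_pow]
    exact ⟨finProdFinEquiv ∘ D, finProdFinEquiv.injective.comp_left.comp hD⟩

theorem AddAction.bijective_vadd_out {G X : Type*} [AddGroup G] [AddAction G X]
    (hfree : ∀ (c : G) (x : X), c +ᵥ x = x → c = 0) :
    Bijective fun p : orbitRel.Quotient G X × G => p.2 +ᵥ p.1.out := by
  constructor
  · rintro ⟨ω, a⟩ ⟨ω', a'⟩ h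
    dsimp only at h
    obtain rfl : ω = ω' := by
      rw [← ω.out_eq, ← ω'.out_eq]
      exact Quotient.sound ⟨-a + a', by dsimp only; rw [add_vadd, ← h, neg_vadd_vadd]⟩
    have : (-a' + a) +ᵥ ω.out = ω.out := by rw [add_vadd, h, neg_vadd_vadd]
    rw [neg_add_eq_zero.1 (hfree _ _ this)]
  · intro x
    obtain ⟨a, ha⟩ : ⟦x⟧.out ∈ orbit G x := Quotient.mk_out (s := orbitRel G X) x
    exact ⟨(⟦x⟧, -a), by simp only [← ha, neg_vadd_vadd]⟩

theorem eBugNumber_eq_of_ebugValid {q k ℓ n : ℕ} [NeZero k] (hn : n * k = q ^ ℓ)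
    {c : Fin n → ZMod k → Fin q} (hc : ebugValid q k ℓ n c) : eBugNumber q k ℓ = n := by
  refine IsGreatest.csSup_eq ⟨⟨c, hc⟩, ?_⟩
  rintro n' ⟨c', hc'⟩
  have := Fintype.card_le_of_injective _ hc'
  simp only [Fintype.card_prod, Fintype.card_fin, ZMod.card, Fintype.card_fun] at this
  exact Nat.le_of_mul_le_mul_right (this.trans hn.ge) (NeZero.pos k)

theorem Nat.eq_one_of_dvd_of_coprime {k t Q : ℕ} (hfac : ∀ p : ℕ, p.Prime → p ∣ t → p ∣ Q)
    (hkt : k ∣ t) (hkQ : k.Coprime Q) : k = 1 := by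
  by_contra h
  have hp := Nat.minFac_prime h
  exact (Nat.Prime.coprime_iff_not_dvd hp).1 (hkQ.coprime_dvd_left (Nat.minFac_dvd k))
    (hfac _ hp ((Nat.minFac_dvd k).trans hkt))

def Staircase (t Q : ℕ) : Type := ZMod (t * Q) →+c[(t : ZMod (t * Q)), 1] ZMod Q

namespace Staircase

variable {t Q : ℕ}

instance : FunLike (Staircase t Q) (ZMod (t * Q)) (ZMod Q) :=
  inferInstanceAs (FunLike (_ →+c[_, _] _) _ _)

instance : AddConstMapClass (Staircase t Q) (ZMod (t * Q)) (ZMod Q) (t : ZMod (t * Q)) 1 :=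
  inferInstanceAs (AddConstMapClass (_ →+c[_, _] _) _ _ _ _)

instance : AddAction (ZMod (t * Q)) (Staircase t Q) where
  vadd c f := ⟨fun x => f (x + c), fun x => by rw [add_right_comm, AddConstMapClass.map_add_const]⟩
  zero_vadd f := DFunLike.ext _ f fun x => congrArg f (add_zero x)
  add_vadd c d f := DFunLike.ext _ _ fun x => congrArg f (add_assoc x c d).symm

theorem vadd_apply (c x : ZMod (t * Q)) (f : Staircase t Q) : (c +ᵥ f) x = f (x + c) := rfl

theorem apply_natCast_add_mul (f : Staircase t Q) (r m : ℕ) :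
    f ((r + t * m : ℕ) : ZMod (t * Q)) = f r + m := by
  have := AddConstMapClass.map_add_nsmul f (r : ZMod (t * Q)) m
  rw [nsmul_eq_mul, nsmul_one] at this
  rw [← this]
  push_cast
  ring_nf

def restrict (f : Staircase t Q) (r : Fin t) : ZMod Q := f (r : ℕ)

variable [NeZero t] [NeZero Q]

theorem restrict_injective : Injective (restrict : Staircase t Q → Fin t → ZMod Q) := by
  intro f g h
  refine DFunLike.ext f g fun x => ?_
  rw [← ZMod.natCast_zmod_val x, ← Nat.mod_add_div x.val t, apply_natCast_add_mul,
    apply_natCast_add_mul]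
  exact congrArg (· + _) (congrFun h ⟨x.val % t, Nat.mod_lt _ (NeZero.pos t)⟩)

theorem restrict_surjective : Surjective (restrict : Staircase t Q → Fin t → ZMod Q) := by
  intro g
  let F : ℕ → ZMod Q := fun n => g ⟨n % t, Nat.mod_lt _ (NeZero.pos t)⟩ + (n / t : ℕ)
  have hF : Periodic F (t * Q) := fun n => by
    simp only [F, Nat.add_mul_mod_self_left, Nat.add_mul_div_left _ _ (NeZero.pos t),
      Nat.cast_add, ZMod.natCast_self, add_zero]
  have hFt (n : ℕ) : F (n + t) = F n + 1 := by
    simp only [F, Nat.add_mod_right, Nat.add_div_right _ (NeZero.pos t), Nat.cast_add,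
      Nat.cast_one, add_assoc]
  have hFcast (n : ℕ) : F (n : ZMod (t * Q)).val = F n := by
    rw [ZMod.val_natCast, hF.map_mod_nat]
  refine ⟨⟨fun x => F x.val, fun x => ?_⟩, funext fun r => ?_⟩
  · rw [← ZMod.natCast_zmod_val x, ← Nat.cast_add, hFcast, hFcast, hFt]
  · change F ((r : ℕ) : ZMod (t * Q)).val = g r
    rw [hFcast]
    simp [F, Nat.mod_eq_of_lt r.isLt, Nat.div_eq_of_lt r.isLt]

theorem card_eq : Nat.card (Staircase t Q) = Q ^ t := by
  rw [Nat.card_eq_of_bijective _ ⟨restrict_injective, restrict_surjective⟩]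
  simp

/-- For `d = gcd (c.val, t)`, Bézout gives `f (x + d) = f x + B`; writing `t = d * t'` yields
`t' * B = 1` in `ZMod Q`, so `t'` is coprime to `Q` and hence `t' = 1`. Then `c` is a multiple
`s * t` with `Q ∣ s`, which forces `c = 0`. -/
theorem eq_zero_of_periodic (hfac : ∀ p : ℕ, p.Prime → p ∣ t → p ∣ Q) (f : Staircase t Q)
    {c : ZMod (t * Q)} (hc : Periodic f c) : c = 0 := by
  set n := c.val
  set d := n.gcd t
  have hd : ((d : ℕ) : ZMod (t * Q)) = n.gcdA t • c + n.gcdB t • (t : ZMod (t * Q)) := by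
    have := congrArg (Int.cast : ℤ → ZMod (t * Q)) (Nat.gcd_eq_gcd_ab n t)
    push_cast at this
    rw [this, ZMod.natCast_zmod_val, zsmul_eq_mul, zsmul_eq_mul]
    ring
  let fd : ZMod (t * Q) →+c[(d : ZMod (t * Q)), (n.gcdB t : ZMod Q)] ZMod Q :=
    ⟨f, fun x => by rw [hd, ← add_assoc, AddConstMapClass.map_add_zsmul, hc.zsmul, zsmul_one]⟩
  obtain ⟨t', ht'⟩ : d ∣ t := Nat.gcd_dvd_right n t
  have hunit : (t' : ZMod Q) * n.gcdB t = 1 := by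
    have ht : t' • (d : ZMod (t * Q)) = t := by
      rw [nsmul_eq_mul, ← Nat.cast_mul, mul_comm t' d, ← ht']
    have h := AddConstMapClass.map_add_nsmul fd 0 t'
    rw [ht, nsmul_eq_mul] at h
    exact add_left_cancel (h.symm.trans (AddConstMapClass.map_add_const f 0))
  have ht'1 : t' = 1 := Nat.eq_one_of_dvd_of_coprime hfac (Dvd.intro_left d ht'.symm)
    ((ZMod.isUnit_iff_coprime t' Q).1 (IsUnit.of_mul_eq_one _ hunit))
  obtain ⟨s, hs⟩ : t ∣ n := by
    rw [ht', ht'1, mul_one]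
    exact Nat.gcd_dvd_left n t
  have hsQ : (s : ZMod Q) = 0 := by
    have h := apply_natCast_add_mul f 0 s
    rwa [zero_add, ← hs, ZMod.natCast_zmod_val, Nat.cast_zero, ← zero_add c, hc, left_eq_add] at h
  have hsQ' : s < Q := by
    have := ZMod.val_lt c
    rw [← mul_lt_mul_iff_right₀ (NeZero.pos t)]
    omega
  rw [← ZMod.val_eq_zero]
  change n = 0
  rw [hs, Nat.eq_zero_of_dvd_of_lt ((ZMod.natCast_eq_zero_iff s Q).1 hsQ) hsQ', mul_zero]

theorem window_comp_injective {q ℓ : ℕ} {D : ZMod Q → Fin q} (hD : Injective (window ℓ D)) :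
    Injective fun f : Staircase t Q => window (t * ℓ) (D ∘ f) 0 := by
  intro f g h
  refine restrict_injective (funext fun r => hD (funext fun m => ?_))
  have hrm : (r : ℕ) + t * m < t * ℓ := by nlinarith [r.isLt, m.isLt]
  have hwin := congrFun h ⟨r + t * m, hrm⟩
  simp only [window, comp_apply, zero_add] at hwin
  rwa [apply_natCast_add_mul, apply_natCast_add_mul] at hwin

theorem exists_ebugValid {q ℓ : ℕ} (hfac : ∀ p : ℕ, p.Prime → p ∣ t → p ∣ Q)
    {D : ZMod Q → Fin q} (hD : Injective (window ℓ D)) :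
    ∃ n, n * (t * Q) = Q ^ t ∧
      ∃ c : Fin n → ZMod (t * Q) → Fin q, ebugValid q (t * Q) (t * ℓ) n c := by
  let Ω := AddAction.orbitRel.Quotient (ZMod (t * Q)) (Staircase t Q)
  have hbij := AddAction.bijective_vadd_out fun c f h =>
    eq_zero_of_periodic hfac f fun x => DFunLike.congr_fun h x
  have : Finite (Staircase t Q) := Finite.of_injective _ restrict_injective
  let e := (Finite.equivFin Ω).symm
  refine ⟨Nat.card Ω, ?_, fun i => D ∘ (e i).out, ?_⟩
  · rw [← Nat.card_zmod (t * Q), ← Nat.card_prod, Nat.card_eq_of_bijective _ hbij, card_eq]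
  · have hwin : (fun p : Fin (Nat.card Ω) × ZMod (t * Q) => window (t * ℓ) (D ∘ (e p.1).out) p.2) =
        (fun f : Staircase t Q => window (t * ℓ) (D ∘ f) 0) ∘
          (fun p : Ω × ZMod (t * Q) => p.2 +ᵥ p.1.out) ∘ Prod.map e id := by
      ext p s
      simp [window, vadd_apply, add_comm]
    change Injective fun p : Fin (Nat.card Ω) × ZMod (t * Q) =>
      window (t * ℓ) (D ∘ (e p.1).out) p.2
    rw [hwin]
    exact (window_comp_injective hD).comp (hbij.1.comp (e.injective.prodMap injective_id))

end Staircase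

theorem stmt14 (q ℓ t : ℕ) (hq : 2 ≤ q) (hℓ : 1 ≤ ℓ) (ht : 1 ≤ t)
    (hfac : ∀ p : ℕ, p.Prime → p ∣ t → p ∣ q) :
    t * eBugNumber q (t * q ^ ℓ) (t * ℓ) = q ^ ((t - 1) * ℓ) := by
  have : NeZero t := ⟨by omega⟩
  have : NeZero (q ^ ℓ) := ⟨by positivity⟩
  obtain ⟨D, hD⟩ := exists_deBruijn (by omega : 0 < q) (by omega : 0 < ℓ)
  obtain ⟨n, hn, c, hc⟩ :=
    Staircase.exists_ebugValid (fun p hp hpt => dvd_pow (hfac p hp hpt) (by omega)) hD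
  rw [← pow_mul, mul_comm ℓ t] at hn
  rw [eBugNumber_eq_of_ebugValid hn hc]
  refine Nat.eq_of_mul_eq_mul_right (pow_pos (by omega : 0 < q) ℓ) ?_
  rw [← pow_add, Nat.sub_one_mul, Nat.sub_add_cancel (Nat.le_mul_of_pos_left ℓ (by omega)), ← hn]
  ring
end

section
/- Let ℓ be a prime and q ≥ 1. Then there exists an ℓ-valid (q,ℓ)-colouring of (q^ℓ − q)/ℓ eBugs, so E(q,ℓ,ℓ) ≥ (q^ℓ − q)/ℓ. Moreover, if q < ℓ then this is best possible: E(q,ℓ,ℓ) = (q^ℓ − q)/ℓ. -/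
/-
With as many LEDs as the window length ℓ, the window of eBug `i` at position `j` is its whole
word rotated by `j`. So a colouring is valid exactly when all rotations of all eBug words are
pairwise distinct. Each word is then nonconstant, and counting gives `n * ℓ ≤ q ^ ℓ - q`.
Conversely, for prime ℓ the rotation group `ZMod ℓ` acts freely on the `q ^ ℓ - q` nonconstant
words (a stabiliser is a subgroup of prime order), so one representative from each of the
`(q ^ ℓ - q) / ℓ` orbits gives a valid colouring.
-/

open Function

section NonconstantFuns

variable (G β : Type*) [AddGroup G]

/- `Gᵈᵃᵃ` acts on words `G → β` by rotation: `(DomAddAct.mk j +ᵥ w) t = w (j + t)`. -/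
def nonconstantFuns : SubAddAction Gᵈᵃᵃ (G → β) where
  carrier := (Set.range (const G))ᶜ
  vadd_mem' c w hw := by
    rintro ⟨b, hb⟩
    exact hw ⟨b, by rw [← neg_vadd_vadd c w, ← hb]; rfl⟩

variable {G β}

lemma stabilizer_nonconstantFuns_eq_bot (hG : (Nat.card G).Prime) (w : nonconstantFuns G β) :
    AddAction.stabilizer Gᵈᵃᵃ w = ⊥ := by
  have : Fact (Nat.card Gᵈᵃᵃ).Prime := ⟨Nat.card_congr DomAddAct.mk ▸ hG⟩
  rw [SubAddAction.stabilizer_of_subAdd]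
  refine (AddSubgroup.eq_bot_or_eq_top_of_prime_card _).resolve_right fun htop => w.2 ⟨w.1 0, ?_⟩
  funext t
  have hmem : DomAddAct.mk t ∈ AddAction.stabilizer Gᵈᵃᵃ w.1 := htop ▸ AddSubgroup.mem_top _
  simpa [DomAddAct.vadd_apply] using (congrFun (AddAction.mem_stabilizer_iff.1 hmem) 0).symm

lemma card_nonconstantFuns [Finite G] [Nonempty G] [Finite β] :
    Nat.card (nonconstantFuns G β) = Nat.card β ^ Nat.card G - Nat.card β := by
  have := Set.ncard_compl (Set.range (const G : β → G → β))
  rw [Set.ncard_range_of_injective const_injective, Nat.card_fun] at this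
  exact (Nat.card_coe_set_eq _).trans this

lemma card_orbitRel_quotient_nonconstantFuns (hG : (Nat.card G).Prime) [Finite β] :
    Nat.card (AddAction.orbitRel.Quotient Gᵈᵃᵃ (nonconstantFuns G β)) =
      (Nat.card β ^ Nat.card G - Nat.card β) / Nat.card G := by
  have : Finite G := Nat.finite_of_card_ne_zero hG.ne_zero
  have : Nonempty G := (Nat.card_ne_zero.1 hG.ne_zero).1
  rw [← card_nonconstantFuns,
    Nat.card_congr (AddAction.selfEquivOrbitsQuotientProd (stabilizer_nonconstantFuns_eq_bot hG)),
    Nat.card_prod, ← Nat.card_congr DomAddAct.mk, Nat.mul_div_cancel _ hG.pos]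

end NonconstantFuns

lemma AddAction.injective_vadd_out {G X : Type*} [AddGroup G] [AddAction G X]
    (h : ∀ x : X, stabilizer G x = ⊥) :
    Injective fun p : orbitRel.Quotient G X × G => p.2 +ᵥ p.1.out :=
  (selfEquivOrbitsQuotientProd h).symm.injective

namespace EBug

variable {q ℓ n : ℕ}

lemma ebugValid_self_iff [NeZero ℓ] (c : Fin n → ZMod ℓ → Fin q) :
    ebugValid q ℓ ℓ n c ↔ Injective fun p : Fin n × ZMod ℓ => DomAddAct.mk p.2 +ᵥ c p.1 := by
  have hsurj : Surjective fun s : Fin ℓ => ((s : ℕ) : ZMod ℓ) :=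
    fun t => ⟨⟨t.val, t.val_lt⟩, t.natCast_zmod_val⟩
  exact hsurj.injective_comp_right.of_comp_iff
    fun p : Fin n × ZMod ℓ => DomAddAct.mk p.2 +ᵥ c p.1

lemma mem_nonconstantFuns_of_ebugValid {k : ℕ} [Fact (1 < k)] {c : Fin n → ZMod k → Fin q}
    (hc : ebugValid q k ℓ n c) (i : Fin n) : c i ∈ nonconstantFuns (ZMod k) (Fin q) := by
  rintro ⟨a, ha⟩
  have h := hc (a₁ := (i, 0)) (a₂ := (i, 1)) (by funext s; simp [← ha])
  exact zero_ne_one (congrArg Prod.snd h)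

lemma le_of_ebugValid (hℓ : 1 < ℓ) {c : Fin n → ZMod ℓ → Fin q} (hc : ebugValid q ℓ ℓ n c) :
    n ≤ (q ^ ℓ - q) / ℓ := by
  have : Fact (1 < ℓ) := ⟨hℓ⟩
  let f (p : Fin n × ZMod ℓ) : nonconstantFuns (ZMod ℓ) (Fin q) :=
    DomAddAct.mk p.2 +ᵥ ⟨c p.1, mem_nonconstantFuns_of_ebugValid hc p.1⟩
  have hf : Injective f := fun _ _ h => (ebugValid_self_iff c).1 hc (congrArg Subtype.val h)
  have hcard := Nat.card_le_card_of_injective f hf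
  rw [Nat.card_prod, card_nonconstantFuns, Nat.card_fin, Nat.card_zmod, Nat.card_fin] at hcard
  exact (Nat.le_div_iff_mul_le (by omega)).2 hcard

lemma exists_ebugValid (hℓ : ℓ.Prime) :
    ∃ c : Fin ((q ^ ℓ - q) / ℓ) → ZMod ℓ → Fin q, ebugValid q ℓ ℓ ((q ^ ℓ - q) / ℓ) c := by
  have : NeZero ℓ := ⟨hℓ.ne_zero⟩
  have hG : (Nat.card (ZMod ℓ)).Prime := by rwa [Nat.card_zmod]
  have hcard := card_orbitRel_quotient_nonconstantFuns (β := Fin q) hG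
  rw [Nat.card_zmod, Nat.card_fin] at hcard
  let e := Finite.equivFinOfCardEq hcard
  refine ⟨fun i => (e.symm i).out, (ebugValid_self_iff _).2 ?_⟩
  exact Subtype.val_injective.comp <|
    (AddAction.injective_vadd_out (stabilizer_nonconstantFuns_eq_bot hG)).comp <|
    e.symm.injective.prodMap DomAddAct.mk.injective

lemma eBugNumber_self (hℓ : ℓ.Prime) : eBugNumber q ℓ ℓ = (q ^ ℓ - q) / ℓ :=
  IsGreatest.csSup_eq ⟨exists_ebugValid hℓ, fun _ ⟨_, hc⟩ => le_of_ebugValid hℓ.one_lt hc⟩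

end EBug

theorem stmt16_general (q ℓ : ℕ) (hℓ : ℓ.Prime) :
    (∃ c : Fin ((q ^ ℓ - q) / ℓ) → ZMod ℓ → Fin q, ebugValid q ℓ ℓ ((q ^ ℓ - q) / ℓ) c) ∧
    (q ^ ℓ - q) / ℓ ≤ eBugNumber q ℓ ℓ ∧
    (q < ℓ → eBugNumber q ℓ ℓ = (q ^ ℓ - q) / ℓ) :=
  ⟨EBug.exists_ebugValid hℓ, (EBug.eBugNumber_self hℓ).ge, fun _ => EBug.eBugNumber_self hℓ⟩

theorem stmt16 (q ℓ : ℕ) (hq : 1 ≤ q) (hℓ : ℓ.Prime) :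
    (∃ c : Fin ((q ^ ℓ - q) / ℓ) → ZMod ℓ → Fin q, ebugValid q ℓ ℓ ((q ^ ℓ - q) / ℓ) c) ∧
    (q ^ ℓ - q) / ℓ ≤ eBugNumber q ℓ ℓ ∧
    (q < ℓ → eBugNumber q ℓ ℓ = (q ^ ℓ - q) / ℓ) :=
  stmt16_general q ℓ hℓ
end
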